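/- arXiv:1410.2660 — 6 statements merged into one kernel-verified Lean document; each statement's English description precedes it below -/
import Mathlib

section
/- Let a₁, a₂ ∈ (0, ∞) and let m₁₁, m₂₁ : (0, a₁) → ℝ and m₁₂, m₂₂ : (0, a₂) → ℝ be bounded measurable maternity functions satisfying the nondegeneracy condition (1 − ∫₀^{a₁} m₁₁(s) ds)(1 − ∫₀^{a₂} m₂₂(s) ds) ≠ (∫₀^{a₂} m₁₂(s) ds)(∫₀^{a₁} m₂₁(s) ds). Then there exists a constant C > 0 such that every pair (u₁, u₂) with u_j ∈ H¹(0, a_j) satisfying the birth boundary conditions obeys ‖u₁‖²_{L²(0,a₁)} + ‖u₂‖²_{L²(0,a₂)} ≤ C (‖u₁′‖²_{L²(0,a₁)} + ‖u₂′‖²_{L²(0,a₂)}). -/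
open MeasureTheory Set


lemma aux_fin {a : ℝ} : IsFiniteMeasure (volume.restrict (Ioo (0:ℝ) a)) :=
  ⟨by rw [Measure.restrict_apply_univ]; exact measure_Ioo_lt_top⟩

lemma primitive_sq_le {a : ℝ} (ha : 0 < a) {g : ℝ → ℝ}
    (hg : MemLp g 2 (volume.restrict (Ioo (0:ℝ) a))) {x : ℝ} (hx : x ∈ Icc (0:ℝ) a) :
    (∫ s in (0:ℝ)..x, g s) ^ 2 ≤ a * ∫ s in Ioo (0:ℝ) a, (g s) ^ 2 := by
  haveI := @aux_fin a
  have hI : (0:ℝ) ≤ ∫ s in Ioo (0:ℝ) a, (g s) ^ 2 :=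
    integral_nonneg fun s => sq_nonneg _
  -- restriction comparison
  have hle : volume.restrict (Ioc (0:ℝ) x) ≤ volume.restrict (Ioo (0:ℝ) a) := by
    refine Measure.restrict_mono' ?_ le_rfl
    rw [ae_le_set]
    refine measure_mono_null (fun y hy => ?_) (measure_singleton a)
    simp only [mem_diff, mem_Ioc, mem_Ioo, not_and, not_lt] at hy
    have h1 := hy.1.1
    have h2 := hy.1.2
    have h3 := hy.2 h1
    simp only [mem_singleton_iff]
    linarith [hx.2]
  haveI : IsFiniteMeasure (volume.restrict (Ioc (0:ℝ) x)) :=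
    ⟨by rw [Measure.restrict_apply_univ]; exact measure_Ioc_lt_top⟩
  have hgx : MemLp g 2 (volume.restrict (Ioc (0:ℝ) x)) := hg.mono_measure hle
  have hgabs : MemLp (fun s => |g s|) 2 (volume.restrict (Ioc (0:ℝ) x)) := by
    simpa [Real.norm_eq_abs] using hgx.norm
  have hone : MemLp (fun _ : ℝ => (1:ℝ)) 2 (volume.restrict (Ioc (0:ℝ) x)) :=
    memLp_const 1
  have hconj : (2:ℝ).HolderConjugate 2 := Real.HolderConjugate.two_two
  have CS := integral_mul_le_Lp_mul_Lq_of_nonneg hconj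
    (f := fun s => |g s|) (g := fun _ => (1:ℝ))
    (Filter.Eventually.of_forall fun s => abs_nonneg _)
    (Filter.Eventually.of_forall fun s => zero_le_one)
    (by simpa using hgabs) (by simpa using hone)
  simp only [mul_one] at CS
  have e1 : ∫ s in Ioc (0:ℝ) x, |g s| ^ (2:ℝ) = ∫ s in Ioc (0:ℝ) x, (g s) ^ 2 := by
    refine integral_congr_ae (Filter.Eventually.of_forall fun s => ?_)
    show |g s| ^ (2:ℝ) = g s ^ 2
    rw [show ((2:ℝ) = ((2:ℕ):ℝ)) by norm_num, Real.rpow_natCast, sq_abs]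
  have e2 : ∫ _ in Ioc (0:ℝ) x, (1:ℝ) ^ (2:ℝ) = x := by
    simp [Real.volume_Ioc, ENNReal.toReal_ofReal hx.1, hx.1]
  rw [e1, e2] at CS
  have hA : (0:ℝ) ≤ ∫ s in Ioc (0:ℝ) x, (g s) ^ 2 := integral_nonneg fun s => sq_nonneg _
  have hAI : (∫ s in Ioc (0:ℝ) x, (g s) ^ 2) ≤ ∫ s in Ioo (0:ℝ) a, (g s) ^ 2 :=
    integral_mono_measure hle (Filter.Eventually.of_forall fun s => sq_nonneg _)
      hg.integrable_sq
  have habs : |∫ s in (0:ℝ)..x, g s| ≤ ∫ s in Ioc (0:ℝ) x, |g s| := by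
    rw [intervalIntegral.integral_of_le hx.1]
    simpa [Real.norm_eq_abs] using
      norm_integral_le_integral_norm (μ := volume.restrict (Ioc (0:ℝ) x)) g
  have hR : ∫ s in Ioc (0:ℝ) x, |g s| ≤
      Real.sqrt (∫ s in Ioc (0:ℝ) x, (g s) ^ 2) * Real.sqrt x := by
    calc ∫ s in Ioc (0:ℝ) x, |g s| ≤ _ := CS
    _ = Real.sqrt (∫ s in Ioc (0:ℝ) x, (g s) ^ 2) * Real.sqrt x := by
        rw [Real.sqrt_eq_rpow, Real.sqrt_eq_rpow]
  have hnn : (0:ℝ) ≤ ∫ s in Ioc (0:ℝ) x, |g s| := integral_nonneg fun s => abs_nonneg _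
  have key : (∫ s in (0:ℝ)..x, g s) ^ 2 ≤ (∫ s in Ioc (0:ℝ) x, (g s) ^ 2) * x := by
    have h1 : (∫ s in (0:ℝ)..x, g s) ^ 2 ≤ (∫ s in Ioc (0:ℝ) x, |g s|) ^ 2 := by
      rw [← sq_abs]
      exact pow_le_pow_left₀ (abs_nonneg _) habs 2
    have h2 : (∫ s in Ioc (0:ℝ) x, |g s|) ^ 2 ≤
        (Real.sqrt (∫ s in Ioc (0:ℝ) x, (g s) ^ 2) * Real.sqrt x) ^ 2 :=
      pow_le_pow_left₀ hnn hR 2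
    have h3 : (Real.sqrt (∫ s in Ioc (0:ℝ) x, (g s) ^ 2) * Real.sqrt x) ^ 2 =
        (∫ s in Ioc (0:ℝ) x, (g s) ^ 2) * x := by
      rw [mul_pow, Real.sq_sqrt hA, Real.sq_sqrt hx.1]
    linarith
  nlinarith [hx.2, hx.1]


lemma restrict_Icc_eq {a : ℝ} :
    volume.restrict (Ioo (0:ℝ) a) = volume.restrict (Icc (0:ℝ) a) :=
  Measure.restrict_congr_set Ioo_ae_eq_Icc

lemma primitive_continuousOn {a : ℝ} (ha : 0 < a) {g : ℝ → ℝ}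
    (hg : MemLp g 2 (volume.restrict (Ioo (0:ℝ) a))) :
    ContinuousOn (fun x => ∫ s in (0:ℝ)..x, g s) (Icc (0:ℝ) a) := by
  haveI := @aux_fin a
  have hint : IntegrableOn g (Icc (0:ℝ) a) volume := by
    have := hg.integrable one_le_two
    rwa [IntegrableOn, ← restrict_Icc_eq]
  have := intervalIntegral.continuousOn_primitive_interval
    (a := (0:ℝ)) (b := a) (f := g) (μ := volume) (by rwa [uIcc_of_le ha.le])
  rwa [uIcc_of_le ha.le] at this

lemma ae_abs_le {a : ℝ} {m : ℝ → ℝ} (hm : MemLp m ⊤ (volume.restrict (Ioo (0:ℝ) a))) :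
    ∀ᵐ s ∂(volume.restrict (Ioo (0:ℝ) a)),
      |m s| ≤ (eLpNorm m ⊤ (volume.restrict (Ioo (0:ℝ) a))).toReal := by
  set μ := volume.restrict (Ioo (0:ℝ) a)
  have hfin : eLpNormEssSup m μ ≠ ⊤ := by
    have := hm.2; rwa [eLpNorm_exponent_top, lt_top_iff_ne_top] at this
  filter_upwards [ae_le_eLpNormEssSup (f := m) (μ := μ)] with s hs
  have := ENNReal.toReal_mono hfin hs
  rw [eLpNorm_exponent_top]
  simpa [Real.norm_eq_abs] using this

lemma split_bound {a : ℝ} (ha : 0 < a) (m g u : ℝ → ℝ)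
    (hm : MemLp m ⊤ (volume.restrict (Ioo (0:ℝ) a)))
    (hg : MemLp g 2 (volume.restrict (Ioo (0:ℝ) a)))
    (hu : ∀ x ∈ Icc (0:ℝ) a, u x = u 0 + ∫ s in (0:ℝ)..x, g s) :
    |(∫ s in Ioo (0:ℝ) a, m s * u s) - (∫ s in Ioo (0:ℝ) a, m s) * u 0| ≤
      ((eLpNorm m ⊤ (volume.restrict (Ioo (0:ℝ) a))).toReal * a * Real.sqrt a) *
        Real.sqrt (∫ s in Ioo (0:ℝ) a, (g s) ^ 2) := by
  haveI := @aux_fin a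
  set μ := volume.restrict (Ioo (0:ℝ) a) with hμ
  set B := (eLpNorm m ⊤ μ).toReal with hB
  set I := ∫ s in Ioo (0:ℝ) a, (g s) ^ 2 with hIdef
  set G : ℝ → ℝ := fun x => ∫ s in (0:ℝ)..x, g s with hG
  have hI : (0:ℝ) ≤ I := integral_nonneg fun s => sq_nonneg _
  set K := Real.sqrt a * Real.sqrt I with hK
  have hKnn : 0 ≤ K := mul_nonneg (Real.sqrt_nonneg _) (Real.sqrt_nonneg _)
  have hBnn : 0 ≤ B := ENNReal.toReal_nonneg
  have hGK : ∀ x ∈ Icc (0:ℝ) a, |G x| ≤ K := by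
    intro x hx
    have h1 : (G x) ^ 2 ≤ a * I := primitive_sq_le ha hg hx
    have := Real.abs_le_sqrt h1
    rwa [Real.sqrt_mul ha.le] at this
  have hGm : AEStronglyMeasurable G μ :=
    ((primitive_continuousOn ha hg).mono Ioo_subset_Icc_self).aestronglyMeasurable
      measurableSet_Ioo
  have hbm : ∀ᵐ s ∂μ, |m s| ≤ B := ae_abs_le hm
  have hbd : ∀ᵐ s ∂μ, ‖m s * G s‖ ≤ B * K := by
    filter_upwards [hbm, ae_restrict_mem measurableSet_Ioo] with s h1 h2
    rw [Real.norm_eq_abs, abs_mul]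
    exact mul_le_mul h1 (hGK s (Ioo_subset_Icc_self h2)) (abs_nonneg _) hBnn
  have hmG_int : Integrable (fun s => m s * G s) μ :=
    Integrable.mono' (integrable_const (B * K)) (hm.1.mul hGm) hbd
  have hm_int : Integrable m μ := hm.integrable le_top
  have heq : (∫ s in Ioo (0:ℝ) a, m s * u s) =
      (∫ s in Ioo (0:ℝ) a, m s) * u 0 + ∫ s in Ioo (0:ℝ) a, m s * G s := by
    have e1 : ∫ s in Ioo (0:ℝ) a, m s * u s =
        ∫ s in Ioo (0:ℝ) a, (m s * u 0 + m s * G s) := by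
      refine setIntegral_congr_fun measurableSet_Ioo fun s hs => ?_
      rw [hu s (Ioo_subset_Icc_self hs)]; ring
    rw [e1, integral_add (hm_int.mul_const (u 0)) hmG_int, integral_mul_const]
  have hle : |∫ s in Ioo (0:ℝ) a, m s * G s| ≤ B * K * a := by
    have := norm_integral_le_of_norm_le (μ := μ) (integrable_const (B * K)) hbd
    rw [integral_const] at this
    rw [hμ, measureReal_restrict_apply_univ, Real.volume_real_Ioo_of_le ha.le, sub_zero,
      smul_eq_mul] at this
    rw [Real.norm_eq_abs] at this
    nlinarith [mul_nonneg hBnn hKnn]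
  rw [heq]
  have : |(∫ s in Ioo (0:ℝ) a, m s) * u 0 + (∫ s in Ioo (0:ℝ) a, m s * G s)
      - (∫ s in Ioo (0:ℝ) a, m s) * u 0| = |∫ s in Ioo (0:ℝ) a, m s * G s| := by
    ring_nf
  rw [this]
  calc |∫ s in Ioo (0:ℝ) a, m s * G s| ≤ B * K * a := hle
  _ = (B * a * Real.sqrt a) * Real.sqrt I := by rw [hK]; ring

lemma sq_integral_bound {a : ℝ} (ha : 0 < a) (g u : ℝ → ℝ)
    (hg : MemLp g 2 (volume.restrict (Ioo (0:ℝ) a)))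
    (hu : ∀ x ∈ Icc (0:ℝ) a, u x = u 0 + ∫ s in (0:ℝ)..x, g s) :
    (∫ s in Ioo (0:ℝ) a, (u s) ^ 2) ≤
      2 * a * (u 0) ^ 2 + 2 * a * (a * ∫ s in Ioo (0:ℝ) a, (g s) ^ 2) := by
  haveI := @aux_fin a
  set I := ∫ s in Ioo (0:ℝ) a, (g s) ^ 2 with hIdef
  have hI : (0:ℝ) ≤ I := integral_nonneg fun s => sq_nonneg _
  set G : ℝ → ℝ := fun x => ∫ s in (0:ℝ)..x, g s with hG
  have e1 : ∫ s in Ioo (0:ℝ) a, (u s) ^ 2 = ∫ s in Ioo (0:ℝ) a, (u 0 + G s) ^ 2 := by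
    refine setIntegral_congr_fun measurableSet_Ioo fun s hs => ?_
    rw [hu s (Ioo_subset_Icc_self hs)]
  have hcont : ContinuousOn (fun s => (u 0 + G s) ^ 2) (Icc (0:ℝ) a) :=
    (continuousOn_const.add (primitive_continuousOn ha hg)).pow 2
  have hint : IntegrableOn (fun s => (u 0 + G s) ^ 2) (Ioo (0:ℝ) a) volume :=
    (hcont.integrableOn_Icc).mono_set Ioo_subset_Icc_self
  have hmono : ∫ s in Ioo (0:ℝ) a, (u 0 + G s) ^ 2 ≤
      ∫ _ in Ioo (0:ℝ) a, (2 * (u 0) ^ 2 + 2 * (a * I)) := by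
    refine setIntegral_mono_on hint (integrable_const _) measurableSet_Ioo fun s hs => ?_
    have h1 : (G s) ^ 2 ≤ a * I := primitive_sq_le ha hg (Ioo_subset_Icc_self hs)
    nlinarith [sq_nonneg (u 0 - G s)]
  have e2 : ∫ _ in Ioo (0:ℝ) a, (2 * (u 0) ^ 2 + 2 * (a * I)) =
      a * (2 * (u 0) ^ 2 + 2 * (a * I)) := by
    rw [setIntegral_const, Real.volume_real_Ioo_of_le ha.le, sub_zero,
      smul_eq_mul]
  rw [e1]
  calc _ ≤ _ := hmono
  _ = a * (2 * (u 0) ^ 2 + 2 * (a * I)) := e2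
  _ ≤ 2 * a * (u 0) ^ 2 + 2 * a * (a * I) := by nlinarith [sq_nonneg (u 0)]

set_option maxHeartbeats 1000000 in
/-- Under the nondegeneracy condition on the maternity functions,
the `L²`-norm of an `H¹` pair satisfying the birth boundary conditions is controlled
by the `L²`-norm of its derivatives (third Poincaré inequality on `D(A)`). -/
theorem poincare_on_domain_of_population_operator
    (a₁ a₂ : ℝ) (ha₁ : 0 < a₁) (ha₂ : 0 < a₂)
    (m₁₁ m₂₁ m₁₂ m₂₂ : ℝ → ℝ)
    (hm₁₁ : MemLp m₁₁ ⊤ (volume.restrict (Ioo 0 a₁)))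
    (hm₂₁ : MemLp m₂₁ ⊤ (volume.restrict (Ioo 0 a₁)))
    (hm₁₂ : MemLp m₁₂ ⊤ (volume.restrict (Ioo 0 a₂)))
    (hm₂₂ : MemLp m₂₂ ⊤ (volume.restrict (Ioo 0 a₂)))
    (hnd : (1 - ∫ s in Ioo (0:ℝ) a₁, m₁₁ s) * (1 - ∫ s in Ioo (0:ℝ) a₂, m₂₂ s) ≠
      (∫ s in Ioo (0:ℝ) a₂, m₁₂ s) * (∫ s in Ioo (0:ℝ) a₁, m₂₁ s)) :
    ∃ C > (0:ℝ), ∀ u₁ u₂ g₁ g₂ : ℝ → ℝ,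
      MemLp g₁ 2 (volume.restrict (Ioo 0 a₁)) →
      MemLp g₂ 2 (volume.restrict (Ioo 0 a₂)) →
      (∀ x ∈ Icc (0:ℝ) a₁, u₁ x = u₁ 0 + ∫ s in (0:ℝ)..x, g₁ s) →
      (∀ x ∈ Icc (0:ℝ) a₂, u₂ x = u₂ 0 + ∫ s in (0:ℝ)..x, g₂ s) →
      (u₁ 0 = (∫ s in Ioo (0:ℝ) a₁, m₁₁ s * u₁ s) + ∫ s in Ioo (0:ℝ) a₂, m₁₂ s * u₂ s) →
      (u₂ 0 = (∫ s in Ioo (0:ℝ) a₁, m₂₁ s * u₁ s) + ∫ s in Ioo (0:ℝ) a₂, m₂₂ s * u₂ s) →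
      (∫ s in Ioo (0:ℝ) a₁, (u₁ s) ^ 2) + (∫ s in Ioo (0:ℝ) a₂, (u₂ s) ^ 2) ≤
        C * ((∫ s in Ioo (0:ℝ) a₁, (g₁ s) ^ 2) + ∫ s in Ioo (0:ℝ) a₂, (g₂ s) ^ 2) := by
  obtain ⟨M11, hM11⟩ : ∃ x, x = ∫ s in Ioo (0:ℝ) a₁, m₁₁ s := ⟨_, rfl⟩
  obtain ⟨M21, hM21⟩ : ∃ x, x = ∫ s in Ioo (0:ℝ) a₁, m₂₁ s := ⟨_, rfl⟩
  obtain ⟨M12, hM12⟩ : ∃ x, x = ∫ s in Ioo (0:ℝ) a₂, m₁₂ s := ⟨_, rfl⟩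
  obtain ⟨M22, hM22⟩ : ∃ x, x = ∫ s in Ioo (0:ℝ) a₂, m₂₂ s := ⟨_, rfl⟩
  obtain ⟨D, hDdef⟩ : ∃ x, x = (1 - M11) * (1 - M22) - M12 * M21 := ⟨_, rfl⟩
  have hD : D ≠ 0 := by
    rw [hDdef, hM11, hM21, hM12, hM22]; exact sub_ne_zero.mpr hnd
  obtain ⟨B11, hB11⟩ : ∃ x, x = (eLpNorm m₁₁ ⊤ (volume.restrict (Ioo (0:ℝ) a₁))).toReal := ⟨_, rfl⟩
  obtain ⟨B21, hB21⟩ : ∃ x, x = (eLpNorm m₂₁ ⊤ (volume.restrict (Ioo (0:ℝ) a₁))).toReal := ⟨_, rfl⟩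
  obtain ⟨B12, hB12⟩ : ∃ x, x = (eLpNorm m₁₂ ⊤ (volume.restrict (Ioo (0:ℝ) a₂))).toReal := ⟨_, rfl⟩
  obtain ⟨B22, hB22⟩ : ∃ x, x = (eLpNorm m₂₂ ⊤ (volume.restrict (Ioo (0:ℝ) a₂))).toReal := ⟨_, rfl⟩
  obtain ⟨q11, hq11⟩ : ∃ x, x = B11 * a₁ * Real.sqrt a₁ := ⟨_, rfl⟩
  obtain ⟨q21, hq21⟩ : ∃ x, x = B21 * a₁ * Real.sqrt a₁ := ⟨_, rfl⟩
  obtain ⟨q12, hq12⟩ : ∃ x, x = B12 * a₂ * Real.sqrt a₂ := ⟨_, rfl⟩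
  obtain ⟨q22, hq22⟩ : ∃ x, x = B22 * a₂ * Real.sqrt a₂ := ⟨_, rfl⟩
  have hq11n : 0 ≤ q11 := by rw [hq11, hB11]; positivity
  have hq21n : 0 ≤ q21 := by rw [hq21, hB21]; positivity
  have hq12n : 0 ≤ q12 := by rw [hq12, hB12]; positivity
  have hq22n : 0 ≤ q22 := by rw [hq22, hB22]; positivity
  obtain ⟨Q, hQ⟩ : ∃ x, x = q11 + q12 + q21 + q22 := ⟨_, rfl⟩
  have hQn : 0 ≤ Q := by rw [hQ]; linarith
  obtain ⟨A, hA⟩ : ∃ x, x = |1 - M22| + |M12| + |M21| + |1 - M11| := ⟨_, rfl⟩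
  have hAn : 0 ≤ A := by
    rw [hA]
    have := abs_nonneg (1 - M22); have := abs_nonneg M12
    have := abs_nonneg M21; have := abs_nonneg (1 - M11)
    linarith
  obtain ⟨W, hW⟩ : ∃ x, x = (A * Q) ^ 2 / D ^ 2 := ⟨_, rfl⟩
  have hD2 : 0 < D ^ 2 := lt_of_le_of_ne (sq_nonneg D) (Ne.symm (pow_ne_zero 2 hD))
  have hWn : 0 ≤ W := by rw [hW]; positivity
  refine ⟨4 * (a₁ + a₂) * W + 2 * a₁ ^ 2 + 2 * a₂ ^ 2 + 1, by
    linarith [mul_nonneg (by linarith : (0:ℝ) ≤ a₁ + a₂) hWn, sq_nonneg a₁, sq_nonneg a₂], ?_⟩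
  intro u₁ u₂ g₁ g₂ hg₁ hg₂ hu₁ hu₂ hbc₁ hbc₂
  obtain ⟨I₁, hI₁d⟩ : ∃ x, x = ∫ s in Ioo (0:ℝ) a₁, (g₁ s) ^ 2 := ⟨_, rfl⟩
  obtain ⟨I₂, hI₂d⟩ : ∃ x, x = ∫ s in Ioo (0:ℝ) a₂, (g₂ s) ^ 2 := ⟨_, rfl⟩
  have hI₁ : (0:ℝ) ≤ I₁ := hI₁d ▸ integral_nonneg fun s => sq_nonneg _
  have hI₂ : (0:ℝ) ≤ I₂ := hI₂d ▸ integral_nonneg fun s => sq_nonneg _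
  obtain ⟨s₁, hs₁d⟩ : ∃ x, x = Real.sqrt I₁ := ⟨_, rfl⟩
  obtain ⟨s₂, hs₂d⟩ : ∃ x, x = Real.sqrt I₂ := ⟨_, rfl⟩
  have hs₁ : 0 ≤ s₁ := hs₁d ▸ Real.sqrt_nonneg _
  have hs₂ : 0 ≤ s₂ := hs₂d ▸ Real.sqrt_nonneg _
  have hs₁sq : s₁ ^ 2 = I₁ := by rw [hs₁d]; exact Real.sq_sqrt hI₁
  have hs₂sq : s₂ ^ 2 = I₂ := by rw [hs₂d]; exact Real.sq_sqrt hI₂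
  obtain ⟨c₁, hc₁d⟩ : ∃ x, x = u₁ 0 := ⟨_, rfl⟩
  obtain ⟨c₂, hc₂d⟩ : ∃ x, x = u₂ 0 := ⟨_, rfl⟩
  have h11 := split_bound ha₁ m₁₁ g₁ u₁ hm₁₁ hg₁ hu₁
  have h21 := split_bound ha₁ m₂₁ g₁ u₁ hm₂₁ hg₁ hu₁
  have h12 := split_bound ha₂ m₁₂ g₂ u₂ hm₁₂ hg₂ hu₂
  have h22 := split_bound ha₂ m₂₂ g₂ u₂ hm₂₂ hg₂ hu₂
  have hsq₁ := sq_integral_bound ha₁ g₁ u₁ hg₁ hu₁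
  have hsq₂ := sq_integral_bound ha₂ g₂ u₂ hg₂ hu₂
  rw [← hM11, ← hB11, ← hI₁d, ← hs₁d, ← hq11, ← hc₁d] at h11
  rw [← hM21, ← hB21, ← hI₁d, ← hs₁d, ← hq21, ← hc₁d] at h21
  rw [← hM12, ← hB12, ← hI₂d, ← hs₂d, ← hq12, ← hc₂d] at h12
  rw [← hM22, ← hB22, ← hI₂d, ← hs₂d, ← hq22, ← hc₂d] at h22
  rw [← hI₁d, ← hc₁d] at hsq₁
  rw [← hI₂d, ← hc₂d] at hsq₂
  rw [← hc₁d] at hbc₁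
  rw [← hc₂d] at hbc₂
  rw [← hI₁d, ← hI₂d]
  obtain ⟨R11, hR11⟩ : ∃ x, x = (∫ s in Ioo (0:ℝ) a₁, m₁₁ s * u₁ s) - M11 * c₁ := ⟨_, rfl⟩
  obtain ⟨R21, hR21⟩ : ∃ x, x = (∫ s in Ioo (0:ℝ) a₁, m₂₁ s * u₁ s) - M21 * c₁ := ⟨_, rfl⟩
  obtain ⟨R12, hR12⟩ : ∃ x, x = (∫ s in Ioo (0:ℝ) a₂, m₁₂ s * u₂ s) - M12 * c₂ := ⟨_, rfl⟩
  obtain ⟨R22, hR22⟩ : ∃ x, x = (∫ s in Ioo (0:ℝ) a₂, m₂₂ s * u₂ s) - M22 * c₂ := ⟨_, rfl⟩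
  rw [← hR11] at h11
  rw [← hR21] at h21
  rw [← hR12] at h12
  rw [← hR22] at h22
  have eq1 : c₁ = M11 * c₁ + R11 + (M12 * c₂ + R12) := by
    rw [hR11, hR12]; linear_combination hbc₁
  have eq2 : c₂ = M21 * c₁ + R21 + (M22 * c₂ + R22) := by
    rw [hR21, hR22]; linear_combination hbc₂
  have hc1 : D * c₁ = (1 - M22) * (R11 + R12) + M12 * (R21 + R22) := by
    rw [hDdef]; linear_combination (1 - M22) * eq1 + M12 * eq2
  have hc2 : D * c₂ = M21 * (R11 + R12) + (1 - M11) * (R21 + R22) := by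
    rw [hDdef]; linear_combination M21 * eq1 + (1 - M11) * eq2
  have hr1 : |R11 + R12| ≤ Q * (s₁ + s₂) := by
    have h := (abs_add_le R11 R12).trans (add_le_add h11 h12)
    have e1 : 0 ≤ (q12 + q21 + q22) * s₁ := mul_nonneg (by linarith) hs₁
    have e2 : 0 ≤ (q11 + q21 + q22) * s₂ := mul_nonneg (by linarith) hs₂
    have hQexp : (q11 + q12 + q21 + q22) * (s₁ + s₂) =
        q11 * s₁ + q12 * s₂ + (q12 + q21 + q22) * s₁ + (q11 + q21 + q22) * s₂ := by ring
    rw [hQ, hQexp]; linarith [h, e1, e2]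
  have hr2 : |R21 + R22| ≤ Q * (s₁ + s₂) := by
    have h := (abs_add_le R21 R22).trans (add_le_add h21 h22)
    have e1 : 0 ≤ (q11 + q12 + q22) * s₁ := mul_nonneg (by linarith) hs₁
    have e2 : 0 ≤ (q11 + q12 + q21) * s₂ := mul_nonneg (by linarith) hs₂
    have hQexp : (q11 + q12 + q21 + q22) * (s₁ + s₂) =
        q21 * s₁ + q22 * s₂ + (q11 + q12 + q22) * s₁ + (q11 + q12 + q21) * s₂ := by ring
    rw [hQ, hQexp]; linarith [h, e1, e2]
  have hQs : 0 ≤ Q * (s₁ + s₂) := mul_nonneg hQn (by linarith)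
  have habs1 : |c₁| * |D| ≤ A * Q * (s₁ + s₂) := by
    have h0 : |D * c₁| ≤ |1 - M22| * |R11 + R12| + |M12| * |R21 + R22| := by
      rw [hc1]; exact (abs_add_le _ _).trans (by rw [abs_mul, abs_mul])
    have h1 : |1 - M22| * |R11 + R12| ≤ |1 - M22| * (Q * (s₁ + s₂)) :=
      mul_le_mul_of_nonneg_left hr1 (abs_nonneg _)
    have h2 : |M12| * |R21 + R22| ≤ |M12| * (Q * (s₁ + s₂)) :=
      mul_le_mul_of_nonneg_left hr2 (abs_nonneg _)
    have h3 : |D * c₁| = |c₁| * |D| := by rw [abs_mul]; ring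
    have hAexp : (|1 - M22| + |M12| + |M21| + |1 - M11|) * Q * (s₁ + s₂) =
        |1 - M22| * (Q * (s₁ + s₂)) + |M12| * (Q * (s₁ + s₂)) +
          |M21| * (Q * (s₁ + s₂)) + |1 - M11| * (Q * (s₁ + s₂)) := by ring
    rw [hA, hAexp]
    linarith [h0, h1, h2, h3, mul_nonneg (abs_nonneg M21) hQs,
      mul_nonneg (abs_nonneg (1 - M11)) hQs]
  have habs2 : |c₂| * |D| ≤ A * Q * (s₁ + s₂) := by
    have h0 : |D * c₂| ≤ |M21| * |R11 + R12| + |1 - M11| * |R21 + R22| := by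
      rw [hc2]; exact (abs_add_le _ _).trans (by rw [abs_mul, abs_mul])
    have h1 : |M21| * |R11 + R12| ≤ |M21| * (Q * (s₁ + s₂)) :=
      mul_le_mul_of_nonneg_left hr1 (abs_nonneg _)
    have h2 : |1 - M11| * |R21 + R22| ≤ |1 - M11| * (Q * (s₁ + s₂)) :=
      mul_le_mul_of_nonneg_left hr2 (abs_nonneg _)
    have h3 : |D * c₂| = |c₂| * |D| := by rw [abs_mul]; ring
    have hAexp : (|1 - M22| + |M12| + |M21| + |1 - M11|) * Q * (s₁ + s₂) =
        |M21| * (Q * (s₁ + s₂)) + |1 - M11| * (Q * (s₁ + s₂)) +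
          |1 - M22| * (Q * (s₁ + s₂)) + |M12| * (Q * (s₁ + s₂)) := by ring
    rw [hA, hAexp]
    linarith [h0, h1, h2, h3, mul_nonneg (abs_nonneg (1 - M22)) hQs,
      mul_nonneg (abs_nonneg M12) hQs]
  have hRsq : (A * Q * (s₁ + s₂)) * (A * Q * (s₁ + s₂)) ≤ 2 * (A * Q) ^ 2 * (I₁ + I₂) := by
    have key : 2 * (A * Q) ^ 2 * (s₁ ^ 2 + s₂ ^ 2) -
        (A * Q * (s₁ + s₂)) * (A * Q * (s₁ + s₂)) = (A * Q * (s₁ - s₂)) ^ 2 := by ring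
    rw [← hs₁sq, ← hs₂sq]
    linarith [sq_nonneg (A * Q * (s₁ - s₂)), key]
  have hc1sq : c₁ ^ 2 * D ^ 2 ≤ 2 * (A * Q) ^ 2 * (I₁ + I₂) := by
    have h := mul_self_le_mul_self (mul_nonneg (abs_nonneg c₁) (abs_nonneg D)) habs1
    have hL : (|c₁| * |D|) * (|c₁| * |D|) = c₁ ^ 2 * D ^ 2 := by
      rw [mul_mul_mul_comm, abs_mul_abs_self, abs_mul_abs_self]; ring
    rw [hL] at h; linarith [h, hRsq]
  have hc2sq : c₂ ^ 2 * D ^ 2 ≤ 2 * (A * Q) ^ 2 * (I₁ + I₂) := by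
    have h := mul_self_le_mul_self (mul_nonneg (abs_nonneg c₂) (abs_nonneg D)) habs2
    have hL : (|c₂| * |D|) * (|c₂| * |D|) = c₂ ^ 2 * D ^ 2 := by
      rw [mul_mul_mul_comm, abs_mul_abs_self, abs_mul_abs_self]; ring
    rw [hL] at h; linarith [h, hRsq]
  have hWD : W * D ^ 2 = (A * Q) ^ 2 := by
    rw [hW]; exact div_mul_cancel₀ _ (pow_ne_zero 2 hD)
  have hc1W : c₁ ^ 2 ≤ 2 * W * (I₁ + I₂) := by
    refine le_of_mul_le_mul_right ?_ hD2
    have hee : (2 * W * (I₁ + I₂)) * D ^ 2 = 2 * (A * Q) ^ 2 * (I₁ + I₂) := by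
      rw [← hWD]; ring
    linarith [hc1sq, hee]
  have hc2W : c₂ ^ 2 ≤ 2 * W * (I₁ + I₂) := by
    refine le_of_mul_le_mul_right ?_ hD2
    have hee : (2 * W * (I₁ + I₂)) * D ^ 2 = 2 * (A * Q) ^ 2 * (I₁ + I₂) := by
      rw [← hWD]; ring
    linarith [hc2sq, hee]
  have f1 := mul_le_mul_of_nonneg_left hc1W (by linarith : (0:ℝ) ≤ 2 * a₁)
  have f2 := mul_le_mul_of_nonneg_left hc2W (by linarith : (0:ℝ) ≤ 2 * a₂)
  linarith [hsq₁, hsq₂, f1, f2, hI₁, hI₂,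
    mul_nonneg (sq_nonneg a₁) hI₂, mul_nonneg (sq_nonneg a₂) hI₁]
end

section
/- Let a₁, a₂ ∈ (0, ∞) and let m₁₁, m₂₁ : (0, a₁) → ℝ and m₁₂, m₂₂ : (0, a₂) → ℝ be bounded measurable maternity functions, and set β₀ := 2 Σ_{i,j ∈ {1,2}} a_j ‖m_{ij}‖²_{L^∞}. Then every pair (u₁, u₂) with u_j ∈ H¹(0, a_j) satisfying the birth boundary conditions obeys the dissipativity estimate −∫₀^{a₁} u₁′(s) u₁(s) ds − ∫₀^{a₂} u₂′(s) u₂(s) ds ≤ β₀ (‖u₁‖²_{L²(0,a₁)} + ‖u₂‖²_{L²(0,a₂)}); equivalently, for every β ≥ β₀ the operator A − β·id, where A(u₁,u₂) = (−u₁′, −u₂′) on the domain of H¹ pairs satisfying the birth boundary conditions, is dissipative on L²(0,a₁) × L²(0,a₂). -/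
open MeasureTheory Set
open scoped ENNReal

lemma half_sq_integral (a : ℝ) (g : ℝ → ℝ)
    (hg : Integrable g (volume.restrict (Ioo 0 a))) :
    ∫ s in Ioo (0:ℝ) a, g s * ∫ t in Ioo (0:ℝ) s, g t
      = (∫ s in Ioo (0:ℝ) a, g s) ^ 2 / 2 := by
  set μ := volume.restrict (Ioo (0:ℝ) a) with hμ
  have hμfin : IsFiniteMeasure μ := ⟨by
    rw [hμ, Measure.restrict_apply_univ]; exact measure_Ioo_lt_top⟩
  set F : ℝ × ℝ → ℝ := fun p => if p.2 < p.1 then g p.1 * g p.2 else 0 with hF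
  have hFm : AEStronglyMeasurable F (μ.prod μ) := by
    have hind : F = {p : ℝ × ℝ | p.2 < p.1}.indicator (fun p => g p.1 * g p.2) := by
      ext p
      by_cases h : p.2 < p.1 <;> simp [hF, h, Set.indicator_apply]
    rw [hind]
    exact AEStronglyMeasurable.indicator
      (hg.aestronglyMeasurable.comp_fst.mul hg.aestronglyMeasurable.comp_snd)
      (isOpen_lt continuous_snd continuous_fst).measurableSet
  have hFint : Integrable F (μ.prod μ) := by
    refine (hg.mul_prod hg).norm.mono' hFm ?_
    filter_upwards with p
    by_cases h : p.2 < p.1 <;> simp [hF, h, abs_nonneg, mul_nonneg]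
  -- diagonal is null
  have hdiag : (μ.prod μ) {p : ℝ × ℝ | p.1 = p.2} = 0 := by
    have hms : MeasurableSet {p : ℝ × ℝ | p.1 = p.2} :=
      measurableSet_eq_fun measurable_fst measurable_snd
    rw [Measure.prod_apply hms]
    have : ∀ x : ℝ, μ (Prod.mk x ⁻¹' {p : ℝ × ℝ | p.1 = p.2}) = 0 := by
      intro x
      have : (Prod.mk x ⁻¹' {p : ℝ × ℝ | p.1 = p.2}) = {x} := by
        ext y; simp [eq_comm]
      rw [this, hμ, Measure.restrict_apply (measurableSet_singleton x)]
      exact measure_mono_null Set.inter_subset_left (measure_singleton x)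
    simp [this]
  have hswap : Integrable (F ∘ Prod.swap) (μ.prod μ) := hFint.swap
  have hne : ∀ᵐ p ∂(μ.prod μ), p.1 ≠ p.2 := by
    rw [ae_iff]
    simpa using hdiag
  have hsum : (∫ p, F p ∂(μ.prod μ)) + (∫ p, F p.swap ∂(μ.prod μ))
      = (∫ s in Ioo (0:ℝ) a, g s) ^ 2 := by
    have hadd := integral_add hFint hswap
    simp only [Function.comp_apply] at hadd
    rw [← hadd]
    have hae : (fun p : ℝ × ℝ => F p + F p.swap) =ᵐ[μ.prod μ]
        fun p => g p.1 * g p.2 := by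
      filter_upwards [hne] with p hp
      rcases lt_or_gt_of_ne hp with h | h
      · have h1 : ¬ (p.2 < p.1) := not_lt.mpr h.le
        simp [hF, h1, h, mul_comm]
      · have h1 : ¬ (p.1 < p.2) := not_lt.mpr h.le
        simp [hF, h, h1]
    rw [integral_congr_ae hae, integral_prod_mul, sq]
  have hswap_eq : ∫ p, F p.swap ∂(μ.prod μ) = ∫ p, F p ∂(μ.prod μ) :=
    integral_prod_swap F
  have hL : ∫ s in Ioo (0:ℝ) a, g s * ∫ t in Ioo (0:ℝ) s, g t
      = ∫ p, F p ∂(μ.prod μ) := by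
    rw [integral_prod _ hFint]
    refine integral_congr_ae ?_
    have hs_mem : ∀ᵐ s ∂μ, s ∈ Ioo (0:ℝ) a := by
      rw [hμ]
      exact ae_restrict_mem measurableSet_Ioo
    filter_upwards [hs_mem] with s hs
    have h1 : ∫ t, F (s, t) ∂μ = ∫ t in Iio s, g s * g t ∂μ := by
      rw [← integral_indicator measurableSet_Iio]
      refine integral_congr_ae (Filter.Eventually.of_forall fun t => ?_)
      by_cases h : t < s <;> simp [hF, h, Set.indicator_apply]
    have h2 : μ.restrict (Iio s) = volume.restrict (Ioo (0:ℝ) s) := by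
      rw [hμ, Measure.restrict_restrict measurableSet_Iio]
      congr 1
      ext t
      simp only [mem_inter_iff, mem_Iio, mem_Ioo]
      constructor
      · rintro ⟨ha1, ha2, _⟩
        exact ⟨ha2, ha1⟩
      · rintro ⟨ha1, ha2⟩
        exact ⟨ha2, ha1, ha2.trans hs.2⟩
    rw [h1, h2]
    exact (integral_const_mul _ _).symm
  linarith [hsum, hswap_eq, hL]

lemma primitive_mul_integral (a : ℝ) (ha : 0 < a) (u g : ℝ → ℝ)
    (hg : Integrable g (volume.restrict (Ioo 0 a)))
    (hu : ∀ x ∈ Icc (0:ℝ) a, u x = u 0 + ∫ s in (0:ℝ)..x, g s) :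
    ∫ s in Ioo (0:ℝ) a, g s * u s = (u a ^ 2 - u 0 ^ 2) / 2 := by
  have key : ∀ x ∈ Icc (0:ℝ) a, ∫ s in (0:ℝ)..x, g s = ∫ s in Ioo (0:ℝ) x, g s := by
    intro x hx
    rw [intervalIntegral.integral_of_le hx.1, integral_Ioc_eq_integral_Ioo]
  have congr1 : ∫ s in Ioo (0:ℝ) a, g s * u s
      = ∫ s in Ioo (0:ℝ) a, (g s * u 0 + g s * ∫ t in Ioo (0:ℝ) s, g t) := by
    refine setIntegral_congr_fun measurableSet_Ioo fun s hs => ?_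
    rw [hu s ⟨hs.1.le, hs.2.le⟩, key s ⟨hs.1.le, hs.2.le⟩]
    ring
  -- integrability of g * G
  have hGc : ContinuousOn (fun x => ∫ t in (0:ℝ)..x, g t) (Icc (0:ℝ) a) := by
    have : IntegrableOn g (uIcc 0 a) volume := by
      rw [uIcc_of_le ha.le, integrableOn_Icc_iff_integrableOn_Ioo]
      exact hg
    simpa [uIcc_of_le ha.le] using intervalIntegral.continuousOn_primitive_interval this
  obtain ⟨C, hC⟩ := isCompact_Icc.exists_bound_of_continuousOn hGc
  have hGmeas : AEStronglyMeasurable (fun s => ∫ t in Ioo (0:ℝ) s, g t)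
      (volume.restrict (Ioo 0 a)) := by
    refine (hGc.mono Ioo_subset_Icc_self).aestronglyMeasurable measurableSet_Ioo |>.congr ?_
    filter_upwards [ae_restrict_mem measurableSet_Ioo] with s hs
    exact key s ⟨hs.1.le, hs.2.le⟩
  have hint2 : Integrable (fun s => g s * ∫ t in Ioo (0:ℝ) s, g t)
      (volume.restrict (Ioo 0 a)) := by
    refine (hg.norm.mul_const C).mono' (hg.aestronglyMeasurable.mul hGmeas) ?_
    filter_upwards [ae_restrict_mem measurableSet_Ioo] with s hs
    have h1 : |∫ t in Ioo (0:ℝ) s, g t| ≤ C := by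
      rw [← key s ⟨hs.1.le, hs.2.le⟩]
      exact hC s ⟨hs.1.le, hs.2.le⟩
    have hC0 : 0 ≤ C := le_trans (abs_nonneg _) (hC 0 ⟨le_refl 0, ha.le⟩)
    calc ‖g s * ∫ t in Ioo (0:ℝ) s, g t‖ = |g s| * |∫ t in Ioo (0:ℝ) s, g t| := by
          rw [norm_mul]; rfl
      _ ≤ |g s| * C := by
          exact mul_le_mul_of_nonneg_left h1 (abs_nonneg _)
      _ = ‖g s‖ * C := rfl
  have hsplit : ∫ s in Ioo (0:ℝ) a, (g s * u 0 + g s * ∫ t in Ioo (0:ℝ) s, g t)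
      = (∫ s in Ioo (0:ℝ) a, g s) * u 0
        + ∫ s in Ioo (0:ℝ) a, g s * ∫ t in Ioo (0:ℝ) s, g t := by
    rw [integral_add (hg.mul_const (u 0)) hint2, integral_mul_const]
  have hT := half_sq_integral a g hg
  have hua : u a = u 0 + ∫ s in Ioo (0:ℝ) a, g s := by
    rw [hu a ⟨ha.le, le_refl a⟩, key a ⟨ha.le, le_refl a⟩]
  rw [congr1, hsplit, hT, hua]
  ring

lemma cs_bound (a : ℝ) (ha : 0 < a) (m u : ℝ → ℝ)
    (hm : MemLp m ⊤ (volume.restrict (Ioo 0 a)))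
    (hu : MemLp u 2 (volume.restrict (Ioo 0 a))) :
    (∫ s in Ioo (0:ℝ) a, m s * u s) ^ 2
      ≤ a * (eLpNorm m ⊤ (volume.restrict (Ioo 0 a))).toReal ^ 2
        * ∫ s in Ioo (0:ℝ) a, u s ^ 2 := by
  set μ := volume.restrict (Ioo (0:ℝ) a) with hμ
  have hμfin : IsFiniteMeasure μ := ⟨by
    rw [hμ, Measure.restrict_apply_univ]; exact measure_Ioo_lt_top⟩
  set M := (eLpNorm m ⊤ μ).toReal with hM
  have hM0 : 0 ≤ M := ENNReal.toReal_nonneg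
  have hu1 : Integrable u μ := hu.integrable (by norm_num)
  have hbound : ∀ᵐ s ∂μ, |m s| ≤ M := by
    have hne : eLpNormEssSup m μ ≠ ⊤ := by
      rw [← eLpNorm_exponent_top]; exact hm.2.ne
    filter_upwards [ae_le_eLpNormEssSup (f := m) (μ := μ)] with s hs
    have h2 := ENNReal.toReal_mono hne hs
    simpa [hM, eLpNorm_exponent_top] using h2
  have hmu_int : Integrable (fun s => m s * u s) μ := by
    refine (hu1.norm.const_mul M).mono' (hm.aestronglyMeasurable.mul hu.aestronglyMeasurable) ?_
    filter_upwards [hbound] with s hs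
    calc ‖m s * u s‖ = |m s| * ‖u s‖ := by rw [norm_mul]; rfl
      _ ≤ M * ‖u s‖ := mul_le_mul_of_nonneg_right hs (norm_nonneg _)
  set A := ∫ s in Ioo (0:ℝ) a, u s ^ 2 with hA
  have hA0 : 0 ≤ A := integral_nonneg fun s => sq_nonneg _
  have h1 : |∫ s, m s * u s ∂μ| ≤ M * ∫ s, |u s| ∂μ := by
    have hn := norm_integral_le_integral_norm (f := fun s => m s * u s) (μ := μ)
    simp only [Real.norm_eq_abs] at hn
    refine hn.trans ?_
    rw [← integral_const_mul]
    refine integral_mono_ae hmu_int.abs (hu1.abs.const_mul M) ?_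
    filter_upwards [hbound] with s hs
    rw [abs_mul]
    exact mul_le_mul_of_nonneg_right hs (abs_nonneg _)
  have h2 : ∫ s, |u s| ∂μ ≤ A ^ (1/2:ℝ) * a ^ (1/2:ℝ) := by
    have hpq : (2:ℝ).HolderConjugate 2 := Real.HolderConjugate.two_two
    have hone : MemLp (fun _ : ℝ => (1:ℝ)) (ENNReal.ofReal 2) μ := memLp_const 1
    have habs : MemLp (fun s => |u s|) (ENNReal.ofReal 2) μ := by
      have he : (ENNReal.ofReal 2) = (2 : ℝ≥0∞) := by norm_num
      rw [he]
      simpa [Real.norm_eq_abs] using hu.norm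
    have := integral_mul_le_Lp_mul_Lq_of_nonneg hpq
      (Filter.Eventually.of_forall fun s => abs_nonneg (u s))
      (Filter.Eventually.of_forall fun _ => zero_le_one) habs hone
    simp only [mul_one, Real.one_rpow] at this
    refine this.trans ?_
    have e1 : ∫ s, |u s| ^ (2:ℝ) ∂μ = A := by
      rw [hA]
      refine integral_congr_ae (Filter.Eventually.of_forall fun s => ?_)
      show |u s| ^ (2:ℝ) = u s ^ 2
      rw [show ((2:ℝ) = ((2:ℕ):ℝ)) by norm_num, Real.rpow_natCast, sq_abs]
    have e2 : ∫ _s, (1:ℝ) ∂μ = a := by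
      simp [hμ, Real.volume_Ioo, ENNReal.toReal_ofReal ha.le, ha.le]
    rw [e1, e2]
  have hsqA : (A ^ (1/2:ℝ)) ^ 2 = A := by
    rw [← Real.rpow_natCast (A ^ (1/2:ℝ)) 2, ← Real.rpow_mul hA0]
    norm_num
  have hsqa : ((a:ℝ) ^ (1/2:ℝ)) ^ 2 = a := by
    rw [← Real.rpow_natCast (a ^ (1/2:ℝ)) 2, ← Real.rpow_mul ha.le]
    norm_num
  calc (∫ s in Ioo (0:ℝ) a, m s * u s) ^ 2 = |∫ s, m s * u s ∂μ| ^ 2 := (sq_abs _).symm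
    _ ≤ (M * (A ^ (1/2:ℝ) * a ^ (1/2:ℝ))) ^ 2 := by
        refine pow_le_pow_left₀ (abs_nonneg _) ?_ 2
        refine h1.trans (mul_le_mul_of_nonneg_left ?_ hM0)
        exact h2
    _ = a * M ^ 2 * A := by
        rw [mul_pow, mul_pow, hsqA, hsqa]; ring

lemma memℒp_two_of_primitive (a : ℝ) (ha : 0 < a) (u g : ℝ → ℝ)
    (hg : Integrable g (volume.restrict (Ioo 0 a)))
    (hu : ∀ x ∈ Icc (0:ℝ) a, u x = u 0 + ∫ s in (0:ℝ)..x, g s) :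
    MemLp u 2 (volume.restrict (Ioo 0 a)) := by
  have hμfin : IsFiniteMeasure (volume.restrict (Ioo (0:ℝ) a)) := ⟨by
    rw [Measure.restrict_apply_univ]; exact measure_Ioo_lt_top⟩
  have hGc : ContinuousOn (fun x => u 0 + ∫ t in (0:ℝ)..x, g t) (Icc (0:ℝ) a) := by
    refine continuousOn_const.add ?_
    have hgi : IntegrableOn g (uIcc 0 a) volume := by
      rw [uIcc_of_le ha.le, integrableOn_Icc_iff_integrableOn_Ioo]
      exact hg
    simpa [uIcc_of_le ha.le] using intervalIntegral.continuousOn_primitive_interval hgi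
  have hc : ContinuousOn u (Icc (0:ℝ) a) := hGc.congr fun x hx => hu x hx
  obtain ⟨C, hC⟩ := isCompact_Icc.exists_bound_of_continuousOn hc
  have hmeas : AEStronglyMeasurable u (volume.restrict (Ioo 0 a)) :=
    (hc.mono Ioo_subset_Icc_self).aestronglyMeasurable measurableSet_Ioo
  have htop : MemLp u ⊤ (volume.restrict (Ioo 0 a)) := by
    refine memLp_top_of_bound hmeas C ?_
    filter_upwards [ae_restrict_mem measurableSet_Ioo] with x hx
    exact hC x (Ioo_subset_Icc_self hx)
  exact htop.mono_exponent le_top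

set_option maxHeartbeats 1000000 in
/-- Dissipativity estimate: with
`β₀ := 2 ∑_{i,j} a_j ‖m_{ij}‖²_{L^∞}`, every `H¹` pair satisfying the birth boundary
conditions obeys `-∫ u₁' u₁ - ∫ u₂' u₂ ≤ β₀ (‖u₁‖² + ‖u₂‖²)`, i.e. `A - β·id` is
dissipative for every `β ≥ β₀`. -/
theorem dissipativity_of_population_operator
    (a₁ a₂ : ℝ) (ha₁ : 0 < a₁) (ha₂ : 0 < a₂)
    (m₁₁ m₂₁ m₁₂ m₂₂ : ℝ → ℝ)
    (hm₁₁ : MemLp m₁₁ ⊤ (volume.restrict (Ioo 0 a₁)))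
    (hm₂₁ : MemLp m₂₁ ⊤ (volume.restrict (Ioo 0 a₁)))
    (hm₁₂ : MemLp m₁₂ ⊤ (volume.restrict (Ioo 0 a₂)))
    (hm₂₂ : MemLp m₂₂ ⊤ (volume.restrict (Ioo 0 a₂)))
    (β₀ : ℝ)
    (hβ₀ : β₀ = 2 * (a₁ * (eLpNorm m₁₁ ⊤ (volume.restrict (Ioo 0 a₁))).toReal ^ 2
      + a₂ * (eLpNorm m₁₂ ⊤ (volume.restrict (Ioo 0 a₂))).toReal ^ 2
      + a₁ * (eLpNorm m₂₁ ⊤ (volume.restrict (Ioo 0 a₁))).toReal ^ 2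
      + a₂ * (eLpNorm m₂₂ ⊤ (volume.restrict (Ioo 0 a₂))).toReal ^ 2))
    (u₁ u₂ g₁ g₂ : ℝ → ℝ)
    (hg₁ : MemLp g₁ 2 (volume.restrict (Ioo 0 a₁)))
    (hg₂ : MemLp g₂ 2 (volume.restrict (Ioo 0 a₂)))
    (hu₁ : ∀ x ∈ Icc (0:ℝ) a₁, u₁ x = u₁ 0 + ∫ s in (0:ℝ)..x, g₁ s)
    (hu₂ : ∀ x ∈ Icc (0:ℝ) a₂, u₂ x = u₂ 0 + ∫ s in (0:ℝ)..x, g₂ s)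
    (hbc₁ : u₁ 0 = (∫ s in Ioo (0:ℝ) a₁, m₁₁ s * u₁ s) + ∫ s in Ioo (0:ℝ) a₂, m₁₂ s * u₂ s)
    (hbc₂ : u₂ 0 = (∫ s in Ioo (0:ℝ) a₁, m₂₁ s * u₁ s) + ∫ s in Ioo (0:ℝ) a₂, m₂₂ s * u₂ s) :
    -(∫ s in Ioo (0:ℝ) a₁, g₁ s * u₁ s) - (∫ s in Ioo (0:ℝ) a₂, g₂ s * u₂ s) ≤
      β₀ * ((∫ s in Ioo (0:ℝ) a₁, (u₁ s) ^ 2) + ∫ s in Ioo (0:ℝ) a₂, (u₂ s) ^ 2) := by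
  have hμ₁ : IsFiniteMeasure (volume.restrict (Ioo (0:ℝ) a₁)) := ⟨by
    rw [Measure.restrict_apply_univ]; exact measure_Ioo_lt_top⟩
  have hμ₂ : IsFiniteMeasure (volume.restrict (Ioo (0:ℝ) a₂)) := ⟨by
    rw [Measure.restrict_apply_univ]; exact measure_Ioo_lt_top⟩
  have hgi₁ : Integrable g₁ (volume.restrict (Ioo 0 a₁)) := hg₁.integrable (by norm_num)
  have hgi₂ : Integrable g₂ (volume.restrict (Ioo 0 a₂)) := hg₂.integrable (by norm_num)
  have hU₁ : MemLp u₁ 2 (volume.restrict (Ioo 0 a₁)) :=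
    memℒp_two_of_primitive a₁ ha₁ u₁ g₁ hgi₁ hu₁
  have hU₂ : MemLp u₂ 2 (volume.restrict (Ioo 0 a₂)) :=
    memℒp_two_of_primitive a₂ ha₂ u₂ g₂ hgi₂ hu₂
  have E₁ := primitive_mul_integral a₁ ha₁ u₁ g₁ hgi₁ hu₁
  have E₂ := primitive_mul_integral a₂ ha₂ u₂ g₂ hgi₂ hu₂
  have c11 := cs_bound a₁ ha₁ m₁₁ u₁ hm₁₁ hU₁
  have c12 := cs_bound a₂ ha₂ m₁₂ u₂ hm₁₂ hU₂
  have c21 := cs_bound a₁ ha₁ m₂₁ u₁ hm₂₁ hU₁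
  have c22 := cs_bound a₂ ha₂ m₂₂ u₂ hm₂₂ hU₂
  set X₁₁ := ∫ s in Ioo (0:ℝ) a₁, m₁₁ s * u₁ s
  set X₁₂ := ∫ s in Ioo (0:ℝ) a₂, m₁₂ s * u₂ s
  set X₂₁ := ∫ s in Ioo (0:ℝ) a₁, m₂₁ s * u₁ s
  set X₂₂ := ∫ s in Ioo (0:ℝ) a₂, m₂₂ s * u₂ s
  set S₁ := ∫ s in Ioo (0:ℝ) a₁, u₁ s ^ 2 with hS₁def
  set S₂ := ∫ s in Ioo (0:ℝ) a₂, u₂ s ^ 2 with hS₂def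
  set M₁₁ := (eLpNorm m₁₁ ⊤ (volume.restrict (Ioo (0:ℝ) a₁))).toReal
  set M₁₂ := (eLpNorm m₁₂ ⊤ (volume.restrict (Ioo (0:ℝ) a₂))).toReal
  set M₂₁ := (eLpNorm m₂₁ ⊤ (volume.restrict (Ioo (0:ℝ) a₁))).toReal
  set M₂₂ := (eLpNorm m₂₂ ⊤ (volume.restrict (Ioo (0:ℝ) a₂))).toReal
  have hS₁ : 0 ≤ S₁ := integral_nonneg fun s => sq_nonneg _
  have hS₂ : 0 ≤ S₂ := integral_nonneg fun s => sq_nonneg _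
  have h1 : u₁ 0 ^ 2 ≤ 2 * (a₁ * M₁₁ ^ 2 * S₁) + 2 * (a₂ * M₁₂ ^ 2 * S₂) := by
    rw [hbc₁]
    nlinarith [c11, c12, sq_nonneg (X₁₁ - X₁₂)]
  have h2 : u₂ 0 ^ 2 ≤ 2 * (a₁ * M₂₁ ^ 2 * S₁) + 2 * (a₂ * M₂₂ ^ 2 * S₂) := by
    rw [hbc₂]
    nlinarith [c21, c22, sq_nonneg (X₂₁ - X₂₂)]
  rw [E₁, E₂, hβ₀]
  have p1 : 0 ≤ a₁ * M₁₁ ^ 2 * S₂ := by positivity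
  have p2 : 0 ≤ a₂ * M₁₂ ^ 2 * S₁ := by positivity
  have p3 : 0 ≤ a₁ * M₂₁ ^ 2 * S₂ := by positivity
  have p4 : 0 ≤ a₂ * M₂₂ ^ 2 * S₁ := by positivity
  have p5 : 0 ≤ a₁ * M₁₁ ^ 2 * S₁ := by positivity
  have p6 : 0 ≤ a₂ * M₁₂ ^ 2 * S₂ := by positivity
  have p7 : 0 ≤ a₁ * M₂₁ ^ 2 * S₁ := by positivity
  have p8 : 0 ≤ a₂ * M₂₂ ^ 2 * S₂ := by positivity
  nlinarith [h1, h2, sq_nonneg (u₁ a₁), sq_nonneg (u₂ a₂), p1, p2, p3, p4, p5, p6, p7, p8]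
end

section
/- Let a₁, a₂ ∈ (0, ∞) and let m₁₁, m₂₁ : [0, a₁] → ℝ and m₁₂, m₂₂ : [0, a₂] → ℝ be bounded measurable maternity functions satisfying max_{i ∈ {1,2}} Σ_{j ∈ {1,2}} a_i a_j ‖m_{ij}‖²_{L^∞} < 1/4. Let α := min_{i ∈ {1,2}} (1 − 4 Σ_{j ∈ {1,2}} a_i a_j ‖m_{ij}‖²_{L^∞}) / (2 max{a₁, a₂}) > 0. Suppose (u₁, u₂) is a classical solution of the homogeneous age-structured two-sex population system: u_j : [0, ∞) × [0, a_j] → ℝ is continuously differentiable, ∂_t u_j(t, a) + ∂_a u_j(t, a) = 0 for all (t, a) ∈ (0, ∞) × (0, a_j), and u_i(t, 0) = ∫₀^{a₁} m_{i1}(s) u₁(t, s) ds + ∫₀^{a₂} m_{i2}(s) u₂(t, s) ds for all t > 0 and i = 1, 2. Then there exists a constant C ≥ 1 depending only on a₁ and a₂ such that the energy E(t) := (1/2)(∫₀^{a₁} u₁(t, a)² da + ∫₀^{a₂} u₂(t, a)² da) decays exponentially: E(t) ≤ C e^{−2αt} E(0) for all t ≥ 0. -/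
open MeasureTheory Set

namespace TwoSexAux


/-- The sliding-window energy `∫_{t-a}^t g²`. -/
noncomputable def II (a : ℝ) (g : ℝ → ℝ) (t : ℝ) : ℝ := ∫ s in (t - a)..t, g s ^ 2

/-- The tent-weighted energy `∫_{t-a}^t (s-(t-a)) g²`. -/
noncomputable def VV (a : ℝ) (g : ℝ → ℝ) (t : ℝ) : ℝ :=
  ∫ s in (t - a)..t, (s - (t - a)) * g s ^ 2

lemma hasDerivAt_shift_integral {f : ℝ → ℝ} (hf : Continuous f) (a t : ℝ) :
    HasDerivAt (fun t => ∫ s in (t - a)..t, f s) (f t - f (t - a)) t := by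
  have h0 : ∀ b : ℝ, HasDerivAt (fun t => ∫ s in (0:ℝ)..t, f s) (f b) b := fun b =>
    intervalIntegral.integral_hasDerivAt_right (hf.intervalIntegrable _ _)
      hf.stronglyMeasurable.stronglyMeasurableAtFilter hf.continuousAt
  have hfun : (fun t => ∫ s in (t - a)..t, f s)
      = fun t => (∫ s in (0:ℝ)..t, f s) - ∫ s in (0:ℝ)..(t - a), f s := by
    funext t
    rw [eq_sub_iff_add_eq, add_comm]
    exact intervalIntegral.integral_add_adjacent_intervals
      (hf.intervalIntegrable _ _) (hf.intervalIntegrable _ _)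
  rw [hfun]
  have h2 : HasDerivAt (fun t : ℝ => ∫ s in (0:ℝ)..(t - a), f s) (f (t - a)) t := by
    have := (h0 (t - a)).comp t ((hasDerivAt_id t).sub_const a)
    simpa [Function.comp_def] using this
  exact (h0 t).sub h2

lemma II_nonneg {a : ℝ} (ha : 0 ≤ a) (g : ℝ → ℝ) (t : ℝ) : 0 ≤ II a g t :=
  intervalIntegral.integral_nonneg (by linarith) (fun x _ => sq_nonneg _)

lemma hasDerivAt_II {g : ℝ → ℝ} (hg : Continuous g) (a t : ℝ) :
    HasDerivAt (II a g) (g t ^ 2 - g (t - a) ^ 2) t :=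
  hasDerivAt_shift_integral (by continuity) a t

lemma VV_nonneg {a : ℝ} (ha : 0 ≤ a) (g : ℝ → ℝ) (t : ℝ) : 0 ≤ VV a g t :=
  intervalIntegral.integral_nonneg (by linarith)
    (fun x hx => mul_nonneg (by simpa using sub_nonneg.2 hx.1) (sq_nonneg _))

lemma hasDerivAt_VV {g : ℝ → ℝ} (hg : Continuous g) (a t : ℝ) :
    HasDerivAt (VV a g) (a * g t ^ 2 - II a g t) t := by
  have hc : Continuous fun s : ℝ => g s ^ 2 := by continuity
  have hc' : Continuous fun s : ℝ => s * g s ^ 2 := by continuity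
  have hfun : VV a g = fun t => (∫ s in (t - a)..t, s * g s ^ 2) - (t - a) * II a g t := by
    funext t
    rw [VV, II, ← intervalIntegral.integral_const_mul,
      ← intervalIntegral.integral_sub (hc'.intervalIntegrable _ _)
        (show IntervalIntegrable (fun s => (t - a) * g s ^ 2) volume (t - a) t from
          (continuous_const.mul hc).intervalIntegrable _ _)]
    congr 1 with s
    ring
  rw [hfun]
  have h1 := hasDerivAt_shift_integral hc' a t
  have h2 : HasDerivAt (fun t => (t - a) * II a g t)
      (1 * II a g t + (t - a) * (g t ^ 2 - g (t - a) ^ 2)) t :=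
    ((hasDerivAt_id t).sub_const a).mul (hasDerivAt_II hg a t)
  have := h1.sub h2
  exact this.congr_deriv (by ring)

lemma VV_le {a : ℝ} (ha : 0 ≤ a) {g : ℝ → ℝ} (hg : Continuous g) (t : ℝ) :
    VV a g t ≤ a * II a g t := by
  rw [VV, II, ← intervalIntegral.integral_const_mul]
  apply intervalIntegral.integral_mono_on (by linarith)
    (((by continuity : Continuous fun s : ℝ => (s - (t - a)) * g s ^ 2)).intervalIntegrable _ _)
    (((by continuity : Continuous fun s : ℝ => a * g s ^ 2)).intervalIntegrable _ _)
  intro x hx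
  exact mul_le_mul_of_nonneg_right (by linarith [hx.2]) (sq_nonneg _)

lemma window {a : ℝ} (ha : 0 < a) {g : ℝ → ℝ} (hg : Continuous g) (t : ℝ) :
    II a g t ≤ 2 / a * (VV a g t + VV a g (t - a / 2)) := by
  have hc : Continuous fun s : ℝ => g s ^ 2 := by continuity
  have hsplit : II a g t
      = (∫ s in (t - a)..(t - a / 2), g s ^ 2) + ∫ s in (t - a / 2)..t, g s ^ 2 :=
    (intervalIntegral.integral_add_adjacent_intervals
      (hc.intervalIntegrable _ _) (hc.intervalIntegrable _ _)).symm
  -- upper part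
  have h2 : ∫ s in (t - a / 2)..t, g s ^ 2 ≤ 2 / a * VV a g t := by
    have hstep : ∫ s in (t - a / 2)..t, g s ^ 2
        ≤ ∫ s in (t - a / 2)..t, 2 / a * ((s - (t - a)) * g s ^ 2) := by
      apply intervalIntegral.integral_mono_on (by linarith)
        (hc.intervalIntegrable _ _)
        (((by continuity : Continuous fun s : ℝ =>
          2 / a * ((s - (t - a)) * g s ^ 2))).intervalIntegrable _ _)
      intro x hx
      have h1 : (1:ℝ) ≤ 2 / a * (x - (t - a)) := by
        rw [div_mul_eq_mul_div, le_div_iff₀ ha]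
        nlinarith [hx.1]
      nlinarith [sq_nonneg (g x)]
    have hsub : ∫ s in (t - a / 2)..t, (s - (t - a)) * g s ^ 2 ≤ VV a g t := by
      rw [VV, ← intervalIntegral.integral_add_adjacent_intervals
        (a := t - a) (b := t - a / 2) (c := t)
        (((by continuity : Continuous fun s : ℝ => (s - (t - a)) * g s ^ 2)).intervalIntegrable _ _)
        (((by continuity : Continuous fun s : ℝ => (s - (t - a)) * g s ^ 2)).intervalIntegrable _ _)]
      have : 0 ≤ ∫ s in (t - a)..(t - a / 2), (s - (t - a)) * g s ^ 2 :=
        intervalIntegral.integral_nonneg (by linarith)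
          (fun x hx => mul_nonneg (by linarith [hx.1]) (sq_nonneg _))
      linarith
    calc ∫ s in (t - a / 2)..t, g s ^ 2
        ≤ ∫ s in (t - a / 2)..t, 2 / a * ((s - (t - a)) * g s ^ 2) := hstep
      _ = 2 / a * ∫ s in (t - a / 2)..t, (s - (t - a)) * g s ^ 2 :=
          intervalIntegral.integral_const_mul _ _
      _ ≤ 2 / a * VV a g t := by
          apply mul_le_mul_of_nonneg_left hsub (by positivity)
  -- lower part
  have h1 : ∫ s in (t - a)..(t - a / 2), g s ^ 2 ≤ 2 / a * VV a g (t - a / 2) := by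
    have hstep : ∫ s in (t - a)..(t - a / 2), g s ^ 2
        ≤ ∫ s in (t - a)..(t - a / 2), 2 / a * ((s - (t - a / 2 - a)) * g s ^ 2) := by
      apply intervalIntegral.integral_mono_on (by linarith)
        (hc.intervalIntegrable _ _)
        (((by continuity : Continuous fun s : ℝ =>
          2 / a * ((s - (t - a / 2 - a)) * g s ^ 2))).intervalIntegrable _ _)
      intro x hx
      have h1 : (1:ℝ) ≤ 2 / a * (x - (t - a / 2 - a)) := by
        rw [div_mul_eq_mul_div, le_div_iff₀ ha]
        nlinarith [hx.1]
      nlinarith [sq_nonneg (g x)]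
    have hsub : ∫ s in (t - a)..(t - a / 2), (s - (t - a / 2 - a)) * g s ^ 2
        ≤ VV a g (t - a / 2) := by
      rw [VV, ← intervalIntegral.integral_add_adjacent_intervals
        (a := t - a / 2 - a) (b := t - a) (c := t - a / 2)
        (((by continuity : Continuous fun s : ℝ =>
          (s - (t - a / 2 - a)) * g s ^ 2)).intervalIntegrable _ _)
        (((by continuity : Continuous fun s : ℝ =>
          (s - (t - a / 2 - a)) * g s ^ 2)).intervalIntegrable _ _)]
      have : 0 ≤ ∫ s in (t - a / 2 - a)..(t - a), (s - (t - a / 2 - a)) * g s ^ 2 :=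
        intervalIntegral.integral_nonneg (by linarith)
          (fun x hx => mul_nonneg (by linarith [hx.1]) (sq_nonneg _))
      linarith
    calc ∫ s in (t - a)..(t - a / 2), g s ^ 2
        ≤ ∫ s in (t - a)..(t - a / 2), 2 / a * ((s - (t - a / 2 - a)) * g s ^ 2) := hstep
      _ = 2 / a * ∫ s in (t - a)..(t - a / 2), (s - (t - a / 2 - a)) * g s ^ 2 :=
          intervalIntegral.integral_const_mul _ _
      _ ≤ 2 / a * VV a g (t - a / 2) := by
          apply mul_le_mul_of_nonneg_left hsub (by positivity)
  linarith [hsplit, h1, h2, mul_add (2/a) (VV a g t) (VV a g (t - a/2))]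



/-- Constancy along characteristics for a classical solution of the transport equation. -/
lemma char {a : ℝ} (ha : 0 < a) {u : ℝ → ℝ → ℝ}
    (hreg : ContDiffOn ℝ 1 (Function.uncurry u) (Ici 0 ×ˢ Icc 0 a))
    (hpde : ∀ t > (0:ℝ), ∀ x ∈ Ioo (0:ℝ) a,
      deriv (fun s => u s x) t + deriv (fun y => u t y) x = 0)
    {t x : ℝ} (ht : 0 ≤ t) (hx : x ∈ Icc (0:ℝ) a) :
    u t x = if x ≤ t then u (t - x) 0 else u 0 (x - t) := by
  obtain ⟨hx0, hxa⟩ := hx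
  set c : ℝ := t - x with hc
  set h : ℝ → ℝ := fun s => u (c + s) s with hh
  set lo : ℝ := max (x - t) 0 with hlo
  have hlo0 : 0 ≤ lo := le_max_right _ _
  have hlox : lo ≤ x := max_le (by linarith) hx0
  have hclo : 0 ≤ c + lo := by
    rcases le_total (x - t) 0 with h1 | h1
    · rw [hlo, max_eq_right h1]; simpa [hc] using h1
    · rw [hlo, max_eq_left h1]; simp [hc]
  have key : h x = h lo := by
    rcases eq_or_lt_of_le hlox with heq | hlt
    · rw [heq]
    · -- continuity on [lo, x]
      have hmaps : ∀ s ∈ Icc lo x, ((c + s, s) : ℝ × ℝ) ∈ Ici (0:ℝ) ×ˢ Icc (0:ℝ) a := by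
        intro s hs
        constructor
        · simp only [mem_Ici]; nlinarith [hs.1]
        · exact ⟨le_trans hlo0 hs.1, le_trans hs.2 hxa⟩
      have hcont : ContinuousOn h (Icc lo x) := by
        have hpath : Continuous fun s : ℝ => ((c + s, s) : ℝ × ℝ) :=
          (continuous_const.add continuous_id).prodMk continuous_id
        exact hreg.continuousOn.comp hpath.continuousOn hmaps
      have hderiv : ∀ s ∈ Ioo lo x, HasDerivAt h 0 s := by
        intro s hs
        have hs0 : 0 < s := lt_of_le_of_lt hlo0 hs.1
        have hsa : s < a := lt_of_lt_of_le hs.2 hxa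
        have hcs : 0 < c + s := lt_of_le_of_lt hclo (by linarith [hs.1])
        have hnhds : (Ici (0:ℝ) ×ˢ Icc (0:ℝ) a) ∈ nhds ((c + s, s) : ℝ × ℝ) := by
          exact prod_mem_nhds (Ici_mem_nhds hcs) (Icc_mem_nhds hs0 hsa)
        have hdiff : DifferentiableAt ℝ (Function.uncurry u) ((c + s, s) : ℝ × ℝ) :=
          ((hreg.contDiffAt hnhds).differentiableAt one_ne_zero)
        set L := fderiv ℝ (Function.uncurry u) ((c + s, s) : ℝ × ℝ) with hL
        have hpath : HasDerivAt (fun s : ℝ => ((c + s, s) : ℝ × ℝ)) (1, 1) s :=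
          ((hasDerivAt_id s).const_add c).prodMk (hasDerivAt_id s)
        have hhd : HasDerivAt h (L (1, 1)) s := by
          have : HasDerivAt (fun s : ℝ => Function.uncurry u ((c + s, s) : ℝ × ℝ)) (L (1, 1)) s :=
            HasFDerivAt.comp_hasDerivAt (f := fun s : ℝ => ((c + s, s) : ℝ × ℝ)) s hdiff.hasFDerivAt hpath
          simpa [Function.uncurry] using this
        have h1 : HasDerivAt (fun s' => u s' s) (L (1, 0)) (c + s) := by
          have hp : HasDerivAt (fun s' : ℝ => ((s', s) : ℝ × ℝ)) (1, 0) (c + s) :=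
            (hasDerivAt_id _).prodMk (hasDerivAt_const _ _)
          have : HasDerivAt (fun s' : ℝ => Function.uncurry u ((s', s) : ℝ × ℝ)) (L (1, 0)) (c + s) :=
            HasFDerivAt.comp_hasDerivAt (f := fun s' : ℝ => ((s', s) : ℝ × ℝ)) _ hdiff.hasFDerivAt hp
          simpa [Function.uncurry] using this
        have h2 : HasDerivAt (fun y => u (c + s) y) (L (0, 1)) s := by
          have hp : HasDerivAt (fun y : ℝ => ((c + s, y) : ℝ × ℝ)) (0, 1) s :=
            (hasDerivAt_const _ _).prodMk (hasDerivAt_id _)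
          have : HasDerivAt (fun y : ℝ => Function.uncurry u ((c + s, y) : ℝ × ℝ)) (L (0, 1)) s :=
            HasFDerivAt.comp_hasDerivAt (f := fun y : ℝ => ((c + s, y) : ℝ × ℝ)) _ hdiff.hasFDerivAt hp
          simpa [Function.uncurry] using this
        have hsum : L (1, 0) + L (0, 1) = 0 := by
          rw [← h1.deriv, ← h2.deriv]
          exact hpde (c + s) hcs s ⟨hs0, hsa⟩
        have hLsum : L (1, 1) = L (1, 0) + L (0, 1) := by
          have hp11 : ((1:ℝ), (1:ℝ)) = ((1:ℝ), (0:ℝ)) + ((0:ℝ), (1:ℝ)) :=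
            Prod.ext_iff.mpr ⟨by simp, by simp⟩
          rw [hp11, map_add]
        rw [hLsum, hsum] at hhd
        exact hhd
      obtain ⟨c', _, hc'⟩ := exists_hasDerivAt_eq_slope h (fun _ => 0) hlt hcont hderiv
      have hne : x - lo ≠ 0 := sub_ne_zero.mpr (ne_of_gt hlt)
      have hz : h x - h lo = 0 := by
        have h0 : (h x - h lo) / (x - lo) = 0 := hc'.symm
        rwa [div_eq_zero_iff, or_iff_left hne] at h0
      linarith
  by_cases hxt : x ≤ t
  · rw [if_pos hxt]
    have hlo' : lo = 0 := max_eq_right (by linarith)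
    have h1 : h x = u t x := by simp [hh, hc]
    have h2 : h lo = u (t - x) 0 := by rw [hlo']; simp [hh, hc]
    rw [← h1, key, h2]
  · rw [if_neg hxt]
    push_neg at hxt
    have hlo' : lo = x - t := max_eq_left (by linarith)
    have h1 : h x = u t x := by simp [hh, hc]
    have h2 : h lo = u 0 (x - t) := by
      rw [hlo']; simp only [hh, hc]; norm_num
    rw [← h1, key, h2]

/-- Cauchy–Schwarz bound for the maternity integrals. -/
lemma cs {a M : ℝ} (ha : 0 < a) {mm : ℝ → ℝ}
    (hm : MemLp mm ⊤ (volume.restrict (Ioo 0 a)))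
    (hM : M = (eLpNorm mm ⊤ (volume.restrict (Ioo 0 a))).toReal)
    {w : ℝ → ℝ} (hw : Continuous w) :
    (∫ s in Ioo (0:ℝ) a, mm s * w s) ^ 2 ≤ M ^ 2 * a * ∫ s in Ioo (0:ℝ) a, (w s) ^ 2 := by
  set μ := volume.restrict (Ioo (0:ℝ) a) with hμ
  haveI : IsFiniteMeasure μ := ⟨by
    rw [hμ, Measure.restrict_apply_univ]; exact measure_Ioo_lt_top⟩
  have hM0 : 0 ≤ M := hM ▸ ENNReal.toReal_nonneg
  -- a.e. bound on mm
  have hmae : ∀ᵐ s ∂μ, |mm s| ≤ M := by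
    filter_upwards [ae_le_eLpNormEssSup (f := mm) (μ := μ)] with s hs
    have htop : eLpNormEssSup mm μ ≠ ⊤ := by
      rw [← eLpNorm_exponent_top]; exact hm.2.ne
    have := ENNReal.toReal_mono htop hs
    rw [hM, eLpNorm_exponent_top]
    simpa using this
  -- MemLp facts
  have hm2 : MemLp mm 2 μ := hm.mono_exponent le_top
  obtain ⟨Cw, hCw⟩ := (isCompact_Icc (a := (0:ℝ)) (b := a)).exists_bound_of_continuousOn
    hw.continuousOn
  have hw2 : MemLp w 2 μ := by
    apply MemLp.of_bound hw.aestronglyMeasurable Cw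
    filter_upwards [ae_restrict_mem measurableSet_Ioo] with s hs
    exact hCw s (Ioo_subset_Icc_self hs)
  -- Hölder
  have hpq : Real.HolderConjugate 2 2 := Real.HolderConjugate.two_two
  have hholder := MeasureTheory.integral_mul_le_Lp_mul_Lq_of_nonneg hpq
    (f := fun s => |mm s|) (g := fun s => |w s|) (μ := μ)
    (ae_of_all _ fun s => abs_nonneg _)
    (ae_of_all _ fun s => abs_nonneg _)
    (by rw [ENNReal.ofReal_ofNat]; exact hm2.abs)
    (by rw [ENNReal.ofReal_ofNat]; exact hw2.abs)
  set A := ∫ s, |mm s| ^ (2:ℝ) ∂μ with hA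
  set B := ∫ s, |w s| ^ (2:ℝ) ∂μ with hB
  have hr2 : ∀ x : ℝ, |x| ^ (2:ℝ) = x ^ 2 := fun x => by
    rw [show (2:ℝ) = ((2:ℕ):ℝ) by norm_num, Real.rpow_natCast, sq_abs]
  have hA0 : 0 ≤ A := integral_nonneg fun s => Real.rpow_nonneg (abs_nonneg _) _
  have hB0 : 0 ≤ B := integral_nonneg fun s => Real.rpow_nonneg (abs_nonneg _) _
  have habs : |∫ s, mm s * w s ∂μ| ≤ ∫ s, |mm s| * |w s| ∂μ := by
    simpa [Real.norm_eq_abs, abs_mul] using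
      norm_integral_le_integral_norm (μ := μ) (fun s => mm s * w s)
  have hsq : (∫ s, mm s * w s ∂μ) ^ 2 ≤ A * B := by
    have h1 : |∫ s, mm s * w s ∂μ| ≤ A ^ (1/2 : ℝ) * B ^ (1/2 : ℝ) := le_trans habs hholder
    have h2 : (A ^ (1/2 : ℝ) * B ^ (1/2 : ℝ)) ^ 2 = A * B := by
      rw [mul_pow, ← Real.rpow_natCast (A ^ (1/2:ℝ)) 2, ← Real.rpow_natCast (B ^ (1/2:ℝ)) 2,
        ← Real.rpow_mul hA0, ← Real.rpow_mul hB0]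
      norm_num
    calc (∫ s, mm s * w s ∂μ) ^ 2 = |∫ s, mm s * w s ∂μ| ^ 2 := (sq_abs _).symm
      _ ≤ (A ^ (1/2 : ℝ) * B ^ (1/2 : ℝ)) ^ 2 := by
          apply pow_le_pow_left₀ (abs_nonneg _) h1
      _ = A * B := h2
  have hAle : A ≤ M ^ 2 * a := by
    have hint : Integrable (fun s => |mm s| ^ (2:ℝ)) μ :=
      hm2.integrable_sq.congr (ae_of_all _ fun s => (hr2 (mm s)).symm)
    have hle : ∀ᵐ s ∂μ, |mm s| ^ (2:ℝ) ≤ M ^ 2 := by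
      filter_upwards [hmae] with s hs
      rw [hr2]
      nlinarith [abs_nonneg (mm s), sq_abs (mm s), abs_nonneg (mm s)]
    calc A ≤ ∫ _s, M ^ 2 ∂μ := integral_mono_ae hint (integrable_const _) hle
      _ = M ^ 2 * a := by
          rw [integral_const, hμ, measureReal_restrict_apply_univ,
            Real.volume_real_Ioo_of_le (by linarith), smul_eq_mul]
          ring
  have hBeq : B = ∫ s in Ioo (0:ℝ) a, (w s) ^ 2 := by
    apply integral_congr_ae
    filter_upwards with s
    exact hr2 (w s)
  calc (∫ s in Ioo (0:ℝ) a, mm s * w s) ^ 2 ≤ A * B := hsq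
    _ ≤ M ^ 2 * a * B := by apply mul_le_mul_of_nonneg_right hAle hB0
    _ = M ^ 2 * a * ∫ s in Ioo (0:ℝ) a, (w s) ^ 2 := by rw [hBeq]



/-- Grönwall-type comparison: if `V' ≤ -β V` on `(0,∞)` then `V t ≤ e^{-βt} V 0`. -/
lemma gronwall {V V' : ℝ → ℝ} {β : ℝ}
    (hd : ∀ t, HasDerivAt V (V' t) t)
    (hineq : ∀ t > (0:ℝ), V' t ≤ -β * V t) :
    ∀ t ≥ (0:ℝ), V t ≤ Real.exp (-β * t) * V 0 := by
  have hVc : Continuous V := by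
    rw [continuous_iff_continuousAt]; exact fun t => (hd t).continuousAt
  set W : ℝ → ℝ := fun t => Real.exp (β * t) * V t with hW
  have hWd : ∀ t, HasDerivAt W (Real.exp (β * t) * (β * V t + V' t)) t := by
    intro t
    have h1 : HasDerivAt (fun t : ℝ => Real.exp (β * t)) (Real.exp (β * t) * β) t := by
      have hb : HasDerivAt (fun t : ℝ => β * t) β t := by
        simpa using (hasDerivAt_id t).const_mul β
      simpa [Function.comp_def] using (Real.hasDerivAt_exp (β * t)).comp t hb
    have := h1.mul (hd t)
    exact this.congr_deriv (by ring)
  have hanti : AntitoneOn W (Ici 0) := by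
    apply antitoneOn_of_deriv_nonpos (convex_Ici 0)
    · exact ((Real.continuous_exp.comp (continuous_const.mul continuous_id)).mul hVc).continuousOn
    · intro t _
      exact (hWd t).differentiableAt.differentiableWithinAt
    · intro t ht
      rw [interior_Ici] at ht
      rw [(hWd t).deriv]
      have h2 : β * V t + V' t ≤ 0 := by
        have := hineq t ht
        linarith
      exact mul_nonpos_of_nonneg_of_nonpos (Real.exp_pos _).le h2
  intro t ht
  have hle : W t ≤ W 0 := hanti (self_mem_Ici) ht ht
  have hW0 : W 0 = V 0 := by simp [hW]
  have hWt : W t = Real.exp (β * t) * V t := rfl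
  rw [hW0, hWt] at hle
  have hexp : Real.exp (-β * t) * (Real.exp (β * t) * V t) = V t := by
    rw [← mul_assoc, ← Real.exp_add]
    norm_num
  calc V t = Real.exp (-β * t) * (Real.exp (β * t) * V t) := hexp.symm
    _ ≤ Real.exp (-β * t) * V 0 :=
        mul_le_mul_of_nonneg_left hle (Real.exp_pos _).le

/-- Continuity of the boundary-trace function. -/
lemma gcont {a : ℝ} (ha : 0 < a) {u : ℝ → ℝ → ℝ}
    (hreg : ContDiffOn ℝ 1 (Function.uncurry u) (Ici 0 ×ˢ Icc 0 a)) :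
    Continuous (fun τ : ℝ => if 0 ≤ τ then u (max τ 0) 0 else u 0 (min (max (-τ) 0) a)) := by
  have hF : Continuous fun τ : ℝ => u (max τ 0) 0 := by
    have hpath : Continuous fun τ : ℝ => ((max τ 0, (0:ℝ)) : ℝ × ℝ) :=
      (continuous_id.max continuous_const).prodMk continuous_const
    have := hreg.continuousOn.comp_continuous hpath
      (fun τ => Set.mem_prod.mpr ⟨mem_Ici.mpr (le_max_right _ _), mem_Icc.mpr ⟨le_rfl, ha.le⟩⟩)
    exact this
  have hG : Continuous fun τ : ℝ => u 0 (min (max (-τ) 0) a) := by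
    have hpath : Continuous fun τ : ℝ => (((0:ℝ), min (max (-τ) 0) a) : ℝ × ℝ) :=
      continuous_const.prodMk (((continuous_neg).max continuous_const).min continuous_const)
    have := hreg.continuousOn.comp_continuous hpath
      (fun τ => Set.mem_prod.mpr ⟨mem_Ici.mpr le_rfl, mem_Icc.mpr ⟨le_min (le_max_right _ _) ha.le, min_le_right _ _⟩⟩)
    exact this
  apply Continuous.if_le hF hG continuous_const continuous_id
  intro τ hτ
  subst hτ
  norm_num [min_eq_left ha.le]


/-- Shift/substitution identity for the sliding window integral. -/
lemma shift_sq {a : ℝ} (ha : 0 < a) (g : ℝ → ℝ) (t : ℝ) :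
    ∫ s in Ioo (0:ℝ) a, (g (t - s)) ^ 2 = II a g t := by
  rw [II, ← integral_Ioc_eq_integral_Ioo, ← intervalIntegral.integral_of_le ha.le]
  have h := intervalIntegral.integral_comp_sub_left (a := (0:ℝ)) (b := a) (fun y => g y ^ 2) t
  simpa using h

/-- Representation of the solution via the boundary/initial trace function. -/
lemma rep {a : ℝ} (ha : 0 < a) {u : ℝ → ℝ → ℝ}
    (hreg : ContDiffOn ℝ 1 (Function.uncurry u) (Ici 0 ×ˢ Icc 0 a))
    (hpde : ∀ t > (0:ℝ), ∀ x ∈ Ioo (0:ℝ) a,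
      deriv (fun s => u s x) t + deriv (fun y => u t y) x = 0)
    {t x : ℝ} (ht : 0 ≤ t) (hx : x ∈ Icc (0:ℝ) a) :
    u t x = (fun τ : ℝ => if 0 ≤ τ then u (max τ 0) 0
      else u 0 (min (max (-τ) 0) a)) (t - x) := by
  rw [char ha hreg hpde ht hx]
  obtain ⟨hx0, hxa⟩ := hx
  by_cases hxt : x ≤ t
  · rw [if_pos hxt]
    simp only
    rw [if_pos (by linarith : (0:ℝ) ≤ t - x), max_eq_left (by linarith : (0:ℝ) ≤ t - x)]
  · push_neg at hxt
    rw [if_neg (not_le.mpr hxt)]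
    simp only
    rw [if_neg (by simp only [not_le]; linarith)]
    have h1 : max (-(t - x)) 0 = x - t := by
      rw [max_eq_left (by linarith)]; ring
    rw [h1, min_eq_left (by linarith : x - t ≤ a)]

end TwoSexAux


set_option maxHeartbeats 1600000 in
/-- Under the smallness condition
`max_i ∑_j a_i a_j ‖m_{ij}‖²_∞ < 1/4`, every classical solution of the homogeneous
age-structured two-sex population system decays exponentially:
`E(t) ≤ C e^{-2αt} E(0)` for some constant `C ≥ 1`. -/
theorem exponential_energy_decay_two_sex_population
    (a₁ a₂ : ℝ) (ha₁ : 0 < a₁) (ha₂ : 0 < a₂)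
    (m₁₁ m₂₁ m₁₂ m₂₂ : ℝ → ℝ)
    (hm₁₁ : MemLp m₁₁ ⊤ (volume.restrict (Ioo 0 a₁)))
    (hm₂₁ : MemLp m₂₁ ⊤ (volume.restrict (Ioo 0 a₁)))
    (hm₁₂ : MemLp m₁₂ ⊤ (volume.restrict (Ioo 0 a₂)))
    (hm₂₂ : MemLp m₂₂ ⊤ (volume.restrict (Ioo 0 a₂)))
    (M₁₁ M₂₁ M₁₂ M₂₂ : ℝ)
    (hM₁₁ : M₁₁ = (eLpNorm m₁₁ ⊤ (volume.restrict (Ioo 0 a₁))).toReal)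
    (hM₂₁ : M₂₁ = (eLpNorm m₂₁ ⊤ (volume.restrict (Ioo 0 a₁))).toReal)
    (hM₁₂ : M₁₂ = (eLpNorm m₁₂ ⊤ (volume.restrict (Ioo 0 a₂))).toReal)
    (hM₂₂ : M₂₂ = (eLpNorm m₂₂ ⊤ (volume.restrict (Ioo 0 a₂))).toReal)
    (hsmall : max (a₁ * a₁ * M₁₁ ^ 2 + a₁ * a₂ * M₁₂ ^ 2)
        (a₂ * a₁ * M₂₁ ^ 2 + a₂ * a₂ * M₂₂ ^ 2) < 1 / 4)
    (α : ℝ)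
    (hα : α = min (1 - 4 * (a₁ * a₁ * M₁₁ ^ 2 + a₁ * a₂ * M₁₂ ^ 2))
        (1 - 4 * (a₂ * a₁ * M₂₁ ^ 2 + a₂ * a₂ * M₂₂ ^ 2)) / (2 * max a₁ a₂))
    (u₁ u₂ : ℝ → ℝ → ℝ)
    (hreg₁ : ContDiffOn ℝ 1 (Function.uncurry u₁) (Ici 0 ×ˢ Icc 0 a₁))
    (hreg₂ : ContDiffOn ℝ 1 (Function.uncurry u₂) (Ici 0 ×ˢ Icc 0 a₂))
    (hpde₁ : ∀ t > (0:ℝ), ∀ x ∈ Ioo (0:ℝ) a₁,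
      deriv (fun s => u₁ s x) t + deriv (fun y => u₁ t y) x = 0)
    (hpde₂ : ∀ t > (0:ℝ), ∀ x ∈ Ioo (0:ℝ) a₂,
      deriv (fun s => u₂ s x) t + deriv (fun y => u₂ t y) x = 0)
    (hbc₁ : ∀ t > (0:ℝ), u₁ t 0 =
      (∫ s in Ioo (0:ℝ) a₁, m₁₁ s * u₁ t s) + ∫ s in Ioo (0:ℝ) a₂, m₁₂ s * u₂ t s)
    (hbc₂ : ∀ t > (0:ℝ), u₂ t 0 =
      (∫ s in Ioo (0:ℝ) a₁, m₂₁ s * u₁ t s) + ∫ s in Ioo (0:ℝ) a₂, m₂₂ s * u₂ t s) :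
    0 < α ∧ ∃ C : ℝ, 1 ≤ C ∧ ∀ t ≥ (0:ℝ),
      (1 / 2) * ((∫ x in Ioo (0:ℝ) a₁, (u₁ t x) ^ 2) + ∫ x in Ioo (0:ℝ) a₂, (u₂ t x) ^ 2)
        ≤ C * Real.exp (-2 * α * t) *
          ((1 / 2) * ((∫ x in Ioo (0:ℝ) a₁, (u₁ 0 x) ^ 2) + ∫ x in Ioo (0:ℝ) a₂, (u₂ 0 x) ^ 2)) := by
  classical
  have hmx : (0:ℝ) < max a₁ a₂ := lt_of_lt_of_le ha₁ (le_max_left _ _)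
  have ha₁m : a₁ ≤ max a₁ a₂ := le_max_left _ _
  have ha₂m : a₂ ≤ max a₁ a₂ := le_max_right _ _
  set S₁ := a₁ * a₁ * M₁₁ ^ 2 + a₁ * a₂ * M₁₂ ^ 2 with hS₁def
  set S₂ := a₂ * a₁ * M₂₁ ^ 2 + a₂ * a₂ * M₂₂ ^ 2 with hS₂def
  have hS₁small : S₁ < 1/4 := lt_of_le_of_lt (le_max_left _ _) hsmall
  have hS₂small : S₂ < 1/4 := lt_of_le_of_lt (le_max_right _ _) hsmall
  have hαpos : 0 < α := by
    rw [hα]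
    exact div_pos (lt_min (by linarith) (by linarith)) (by linarith)
  refine ⟨hαpos, ?_⟩
  -- the boundary/initial trace functions
  set g₁ : ℝ → ℝ := fun τ => if 0 ≤ τ then u₁ (max τ 0) 0
    else u₁ 0 (min (max (-τ) 0) a₁) with hg₁def
  set g₂ : ℝ → ℝ := fun τ => if 0 ≤ τ then u₂ (max τ 0) 0
    else u₂ 0 (min (max (-τ) 0) a₂) with hg₂def
  have hg₁c : Continuous g₁ := by rw [hg₁def]; exact TwoSexAux.gcont ha₁ hreg₁
  have hg₂c : Continuous g₂ := by rw [hg₂def]; exact TwoSexAux.gcont ha₂ hreg₂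
  have hrep₁ : ∀ t : ℝ, 0 ≤ t → ∀ x ∈ Icc (0:ℝ) a₁, u₁ t x = g₁ (t - x) := by
    intro t ht x hx
    rw [hg₁def]
    exact TwoSexAux.rep ha₁ hreg₁ hpde₁ ht hx
  have hrep₂ : ∀ t : ℝ, 0 ≤ t → ∀ x ∈ Icc (0:ℝ) a₂, u₂ t x = g₂ (t - x) := by
    intro t ht x hx
    rw [hg₂def]
    exact TwoSexAux.rep ha₂ hreg₂ hpde₂ ht hx
  have hgb₁ : ∀ t : ℝ, 0 < t → g₁ t = u₁ t 0 := by
    intro t ht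
    rw [hg₁def]
    simp [ht.le, max_eq_left ht.le]
  have hgb₂ : ∀ t : ℝ, 0 < t → g₂ t = u₂ t 0 := by
    intro t ht
    rw [hg₂def]
    simp [ht.le, max_eq_left ht.le]
  -- energy conversion
  have hE₁ : ∀ t : ℝ, 0 ≤ t →
      (∫ x in Ioo (0:ℝ) a₁, (u₁ t x) ^ 2) = TwoSexAux.II a₁ g₁ t := by
    intro t ht
    rw [← TwoSexAux.shift_sq ha₁ g₁ t]
    exact setIntegral_congr_fun measurableSet_Ioo
      (fun x hx => by rw [hrep₁ t ht x (Ioo_subset_Icc_self hx)])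
  have hE₂ : ∀ t : ℝ, 0 ≤ t →
      (∫ x in Ioo (0:ℝ) a₂, (u₂ t x) ^ 2) = TwoSexAux.II a₂ g₂ t := by
    intro t ht
    rw [← TwoSexAux.shift_sq ha₂ g₂ t]
    exact setIntegral_congr_fun measurableSet_Ioo
      (fun x hx => by rw [hrep₂ t ht x (Ioo_subset_Icc_self hx)])
  -- boundary bound via Cauchy–Schwarz
  have hbd : ∀ t : ℝ, 0 < t →
      (g₁ t) ^ 2 ≤ 2 * (M₁₁ ^ 2 * a₁ * TwoSexAux.II a₁ g₁ t
          + M₁₂ ^ 2 * a₂ * TwoSexAux.II a₂ g₂ t)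
      ∧ (g₂ t) ^ 2 ≤ 2 * (M₂₁ ^ 2 * a₁ * TwoSexAux.II a₁ g₁ t
          + M₂₂ ^ 2 * a₂ * TwoSexAux.II a₂ g₂ t) := by
    intro t ht
    have hw₁ : Continuous fun s : ℝ => g₁ (t - s) :=
      hg₁c.comp (continuous_const.sub continuous_id)
    have hw₂ : Continuous fun s : ℝ => g₂ (t - s) :=
      hg₂c.comp (continuous_const.sub continuous_id)
    have hconv₁ : (∫ s in Ioo (0:ℝ) a₁, m₁₁ s * u₁ t s)
        = ∫ s in Ioo (0:ℝ) a₁, m₁₁ s * g₁ (t - s) :=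
      setIntegral_congr_fun measurableSet_Ioo
        (fun s hs => by rw [hrep₁ t ht.le s (Ioo_subset_Icc_self hs)])
    have hconv₁' : (∫ s in Ioo (0:ℝ) a₁, m₂₁ s * u₁ t s)
        = ∫ s in Ioo (0:ℝ) a₁, m₂₁ s * g₁ (t - s) :=
      setIntegral_congr_fun measurableSet_Ioo
        (fun s hs => by rw [hrep₁ t ht.le s (Ioo_subset_Icc_self hs)])
    have hconv₂ : (∫ s in Ioo (0:ℝ) a₂, m₁₂ s * u₂ t s)
        = ∫ s in Ioo (0:ℝ) a₂, m₁₂ s * g₂ (t - s) :=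
      setIntegral_congr_fun measurableSet_Ioo
        (fun s hs => by rw [hrep₂ t ht.le s (Ioo_subset_Icc_self hs)])
    have hconv₂' : (∫ s in Ioo (0:ℝ) a₂, m₂₂ s * u₂ t s)
        = ∫ s in Ioo (0:ℝ) a₂, m₂₂ s * g₂ (t - s) :=
      setIntegral_congr_fun measurableSet_Ioo
        (fun s hs => by rw [hrep₂ t ht.le s (Ioo_subset_Icc_self hs)])
    have h11 := TwoSexAux.cs ha₁ hm₁₁ hM₁₁ hw₁
    have h12 := TwoSexAux.cs ha₂ hm₁₂ hM₁₂ hw₂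
    have h21 := TwoSexAux.cs ha₁ hm₂₁ hM₂₁ hw₁
    have h22 := TwoSexAux.cs ha₂ hm₂₂ hM₂₂ hw₂
    rw [TwoSexAux.shift_sq ha₁ g₁ t] at h11 h21
    rw [TwoSexAux.shift_sq ha₂ g₂ t] at h12 h22
    constructor
    · have hbc : g₁ t = (∫ s in Ioo (0:ℝ) a₁, m₁₁ s * g₁ (t - s))
          + ∫ s in Ioo (0:ℝ) a₂, m₁₂ s * g₂ (t - s) := by
        rw [hgb₁ t ht, hbc₁ t ht, hconv₁, hconv₂]
      rw [hbc]
      nlinarith [h11, h12, sq_nonneg ((∫ s in Ioo (0:ℝ) a₁, m₁₁ s * g₁ (t - s))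
        - ∫ s in Ioo (0:ℝ) a₂, m₁₂ s * g₂ (t - s))]
    · have hbc : g₂ t = (∫ s in Ioo (0:ℝ) a₁, m₂₁ s * g₁ (t - s))
          + ∫ s in Ioo (0:ℝ) a₂, m₂₂ s * g₂ (t - s) := by
        rw [hgb₂ t ht, hbc₂ t ht, hconv₁', hconv₂']
      rw [hbc]
      nlinarith [h21, h22, sq_nonneg ((∫ s in Ioo (0:ℝ) a₁, m₂₁ s * g₁ (t - s))
        - ∫ s in Ioo (0:ℝ) a₂, m₂₂ s * g₂ (t - s))]
  -- the scalar smallness inequalities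
  have hαm : 2 * α * (max a₁ a₂) = min (1 - 4 * S₁) (1 - 4 * S₂) := by
    rw [hα]; field_simp
  have hαa₁ : 2 * (a₁ * a₁ * M₁₁ ^ 2 + a₂ * a₁ * M₂₁ ^ 2) + 2 * α * a₁ ≤ 1 := by
    have h1 : 2 * α * a₁ ≤ 2 * α * (max a₁ a₂) :=
      mul_le_mul_of_nonneg_left ha₁m (by linarith)
    have hA11 : a₁ * a₁ * M₁₁ ^ 2 ≤ S₁ := by
      rw [hS₁def]; nlinarith [mul_nonneg (mul_nonneg ha₁.le ha₂.le) (sq_nonneg M₁₂)]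
    have hA21 : a₂ * a₁ * M₂₁ ^ 2 ≤ S₂ := by
      rw [hS₂def]; nlinarith [mul_nonneg (mul_nonneg ha₂.le ha₂.le) (sq_nonneg M₂₂)]
    rcases le_total S₁ S₂ with hSS | hSS
    · have := min_le_right (1 - 4 * S₁) (1 - 4 * S₂)
      linarith
    · have := min_le_left (1 - 4 * S₁) (1 - 4 * S₂)
      linarith
  have hαa₂ : 2 * (a₁ * a₂ * M₁₂ ^ 2 + a₂ * a₂ * M₂₂ ^ 2) + 2 * α * a₂ ≤ 1 := by
    have h1 : 2 * α * a₂ ≤ 2 * α * (max a₁ a₂) :=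
      mul_le_mul_of_nonneg_left ha₂m (by linarith)
    have hA12 : a₁ * a₂ * M₁₂ ^ 2 ≤ S₁ := by
      rw [hS₁def]; nlinarith [mul_nonneg (mul_nonneg ha₁.le ha₁.le) (sq_nonneg M₁₁)]
    have hA22 : a₂ * a₂ * M₂₂ ^ 2 ≤ S₂ := by
      rw [hS₂def]; nlinarith [mul_nonneg (mul_nonneg ha₂.le ha₁.le) (sq_nonneg M₂₁)]
    rcases le_total S₁ S₂ with hSS | hSS
    · have := min_le_right (1 - 4 * S₁) (1 - 4 * S₂)
      linarith
    · have := min_le_left (1 - 4 * S₁) (1 - 4 * S₂)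
      linarith
  -- the Lyapunov functional decays at rate 2α
  have hVderiv : ∀ t : ℝ, HasDerivAt (fun t => TwoSexAux.VV a₁ g₁ t + TwoSexAux.VV a₂ g₂ t)
      ((a₁ * (g₁ t) ^ 2 - TwoSexAux.II a₁ g₁ t)
        + (a₂ * (g₂ t) ^ 2 - TwoSexAux.II a₂ g₂ t)) t := fun t =>
    (TwoSexAux.hasDerivAt_VV hg₁c a₁ t).add (TwoSexAux.hasDerivAt_VV hg₂c a₂ t)
  have hVle : ∀ t > (0:ℝ),
      (a₁ * (g₁ t) ^ 2 - TwoSexAux.II a₁ g₁ t) + (a₂ * (g₂ t) ^ 2 - TwoSexAux.II a₂ g₂ t)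
        ≤ -(2 * α) * (TwoSexAux.VV a₁ g₁ t + TwoSexAux.VV a₂ g₂ t) := by
    intro t ht
    obtain ⟨hb₁, hb₂⟩ := hbd t ht
    have hI₁0 := TwoSexAux.II_nonneg ha₁.le g₁ t
    have hI₂0 := TwoSexAux.II_nonneg ha₂.le g₂ t
    have hV₁le := TwoSexAux.VV_le ha₁.le hg₁c t
    have hV₂le := TwoSexAux.VV_le ha₂.le hg₂c t
    have hb₁' := mul_le_mul_of_nonneg_left hb₁ ha₁.le
    have hb₂' := mul_le_mul_of_nonneg_left hb₂ ha₂.le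
    have hcoef₁ : 0 ≤ 1 - (2 * (a₁ * a₁ * M₁₁ ^ 2 + a₂ * a₁ * M₂₁ ^ 2) + 2 * α * a₁) := by
      linarith
    have hcoef₂ : 0 ≤ 1 - (2 * (a₁ * a₂ * M₁₂ ^ 2 + a₂ * a₂ * M₂₂ ^ 2) + 2 * α * a₂) := by
      linarith
    have hq₁ := mul_nonneg hcoef₁ hI₁0
    have hq₂ := mul_nonneg hcoef₂ hI₂0
    have hVsum : TwoSexAux.VV a₁ g₁ t + TwoSexAux.VV a₂ g₂ t
        ≤ a₁ * TwoSexAux.II a₁ g₁ t + a₂ * TwoSexAux.II a₂ g₂ t := by linarith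
    have hαV := mul_le_mul_of_nonneg_left hVsum (by linarith : (0:ℝ) ≤ 2 * α)
    nlinarith [hb₁', hb₂', hq₁, hq₂, hαV]
  have hVdecay := TwoSexAux.gronwall hVderiv hVle
  -- crude growth bound for the energy
  set K := 2 * (M₁₁ ^ 2 * a₁ + M₁₂ ^ 2 * a₂ + M₂₁ ^ 2 * a₁ + M₂₂ ^ 2 * a₂) with hKdef
  have hK0 : 0 ≤ K := by rw [hKdef]; positivity
  have hPderiv : ∀ t : ℝ, HasDerivAt (fun t => TwoSexAux.II a₁ g₁ t + TwoSexAux.II a₂ g₂ t)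
      (((g₁ t) ^ 2 - (g₁ (t - a₁)) ^ 2) + ((g₂ t) ^ 2 - (g₂ (t - a₂)) ^ 2)) t := fun t =>
    (TwoSexAux.hasDerivAt_II hg₁c a₁ t).add (TwoSexAux.hasDerivAt_II hg₂c a₂ t)
  have hPle : ∀ t > (0:ℝ),
      ((g₁ t) ^ 2 - (g₁ (t - a₁)) ^ 2) + ((g₂ t) ^ 2 - (g₂ (t - a₂)) ^ 2)
        ≤ -(-K) * (TwoSexAux.II a₁ g₁ t + TwoSexAux.II a₂ g₂ t) := by
    intro t ht
    obtain ⟨hb₁, hb₂⟩ := hbd t ht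
    have hI₁0 := TwoSexAux.II_nonneg ha₁.le g₁ t
    have hI₂0 := TwoSexAux.II_nonneg ha₂.le g₂ t
    rw [neg_neg, hKdef]
    nlinarith [sq_nonneg (g₁ (t - a₁)), sq_nonneg (g₂ (t - a₂)),
      mul_nonneg (by positivity : (0:ℝ) ≤ 2 * (M₂₁ ^ 2 * a₁ + M₂₂ ^ 2 * a₂)) hI₁0,
      mul_nonneg (by positivity : (0:ℝ) ≤ 2 * (M₁₁ ^ 2 * a₁ + M₁₂ ^ 2 * a₂)) hI₂0,
      mul_nonneg (by positivity : (0:ℝ) ≤ 2 * (M₁₂ ^ 2 * a₂ + M₂₂ ^ 2 * a₂)) hI₁0,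
      mul_nonneg (by positivity : (0:ℝ) ≤ 2 * (M₁₁ ^ 2 * a₁ + M₂₁ ^ 2 * a₁)) hI₂0]
  have hPgrow := TwoSexAux.gronwall hPderiv hPle
  -- the constant
  set q : ℝ := Real.exp (α * (max a₁ a₂)) with hqdef
  have hq1 : (1:ℝ) ≤ q := by
    rw [hqdef]
    exact Real.one_le_exp (by positivity)
  set Cbig : ℝ := max (Real.exp (K * (max a₁ a₂ / 2)) * q)
    ((2 / a₁ + 2 / a₂) * (1 + q) * (max a₁ a₂)) with hCdef
  refine ⟨max 1 Cbig, le_max_left _ _, ?_⟩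
  intro t ht
  rw [hE₁ t ht, hE₂ t ht, hE₁ 0 le_rfl, hE₂ 0 le_rfl]
  have hP00 : 0 ≤ TwoSexAux.II a₁ g₁ 0 + TwoSexAux.II a₂ g₂ 0 := by
    have := TwoSexAux.II_nonneg ha₁.le g₁ 0
    have := TwoSexAux.II_nonneg ha₂.le g₂ 0
    linarith
  have hV00 : 0 ≤ TwoSexAux.VV a₁ g₁ 0 + TwoSexAux.VV a₂ g₂ 0 := by
    have := TwoSexAux.VV_nonneg ha₁.le g₁ 0
    have := TwoSexAux.VV_nonneg ha₂.le g₂ 0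
    linarith
  have hV0P : TwoSexAux.VV a₁ g₁ 0 + TwoSexAux.VV a₂ g₂ 0
      ≤ (max a₁ a₂) * (TwoSexAux.II a₁ g₁ 0 + TwoSexAux.II a₂ g₂ 0) := by
    have h1 := TwoSexAux.VV_le ha₁.le hg₁c 0
    have h2 := TwoSexAux.VV_le ha₂.le hg₂c 0
    have h3 := mul_nonneg (sub_nonneg.mpr ha₁m) (TwoSexAux.II_nonneg ha₁.le g₁ 0)
    have h4 := mul_nonneg (sub_nonneg.mpr ha₂m) (TwoSexAux.II_nonneg ha₂.le g₂ 0)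
    nlinarith
  have hepos : (0:ℝ) < Real.exp (-2 * α * t) := Real.exp_pos _
  rcases le_or_gt t (max a₁ a₂ / 2) with hcase | hcase
  · -- short times: use the growth bound
    have h1 : TwoSexAux.II a₁ g₁ t + TwoSexAux.II a₂ g₂ t
        ≤ Real.exp (K * t) * (TwoSexAux.II a₁ g₁ 0 + TwoSexAux.II a₂ g₂ 0) := by
      have := hPgrow t ht
      simpa [neg_neg] using this
    have h2 : Real.exp (K * t) ≤ Real.exp (K * (max a₁ a₂ / 2)) :=
      Real.exp_le_exp.mpr (mul_le_mul_of_nonneg_left hcase hK0)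
    have h3 : (1:ℝ) ≤ q * Real.exp (-2 * α * t) := by
      rw [hqdef, ← Real.exp_add]
      apply Real.one_le_exp
      nlinarith
    have h4 : Real.exp (K * (max a₁ a₂ / 2))
        ≤ Real.exp (K * (max a₁ a₂ / 2)) * q * Real.exp (-2 * α * t) := by
      nlinarith [Real.exp_pos (K * (max a₁ a₂ / 2))]
    have h5 : Real.exp (K * (max a₁ a₂ / 2)) * q ≤ max 1 Cbig :=
      le_trans (le_max_left _ _) (le_max_right 1 Cbig)
    have hchain : TwoSexAux.II a₁ g₁ t + TwoSexAux.II a₂ g₂ t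
        ≤ max 1 Cbig * Real.exp (-2 * α * t)
          * (TwoSexAux.II a₁ g₁ 0 + TwoSexAux.II a₂ g₂ 0) := by
      calc TwoSexAux.II a₁ g₁ t + TwoSexAux.II a₂ g₂ t
          ≤ Real.exp (K * t) * (TwoSexAux.II a₁ g₁ 0 + TwoSexAux.II a₂ g₂ 0) := h1
        _ ≤ Real.exp (K * (max a₁ a₂ / 2))
            * (TwoSexAux.II a₁ g₁ 0 + TwoSexAux.II a₂ g₂ 0) :=
            mul_le_mul_of_nonneg_right h2 hP00
        _ ≤ (Real.exp (K * (max a₁ a₂ / 2)) * q * Real.exp (-2 * α * t))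
            * (TwoSexAux.II a₁ g₁ 0 + TwoSexAux.II a₂ g₂ 0) :=
            mul_le_mul_of_nonneg_right h4 hP00
        _ ≤ (max 1 Cbig * Real.exp (-2 * α * t))
            * (TwoSexAux.II a₁ g₁ 0 + TwoSexAux.II a₂ g₂ 0) := by
            apply mul_le_mul_of_nonneg_right _ hP00
            exact mul_le_mul_of_nonneg_right h5 hepos.le
        _ = max 1 Cbig * Real.exp (-2 * α * t)
            * (TwoSexAux.II a₁ g₁ 0 + TwoSexAux.II a₂ g₂ 0) := by ring
    linarith
  · -- long times: use the window bound and decay of the Lyapunov functional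
    have ht₁ : 0 ≤ t - a₁ / 2 := by linarith
    have ht₂ : 0 ≤ t - a₂ / 2 := by linarith
    set V0 := TwoSexAux.VV a₁ g₁ 0 + TwoSexAux.VV a₂ g₂ 0 with hV0def
    set e := Real.exp (-2 * α * t) with hedef
    have hVt : TwoSexAux.VV a₁ g₁ t + TwoSexAux.VV a₂ g₂ t ≤ e * V0 := by
      have := hVdecay t ht
      rw [hedef]
      convert this using 3
      ring
    have hshift : ∀ b : ℝ, 0 < b → b ≤ max a₁ a₂ →
        TwoSexAux.VV a₁ g₁ (t - b / 2) + TwoSexAux.VV a₂ g₂ (t - b / 2) ≤ q * (e * V0) := by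
      intro b hb hbm
      have hVtb := hVdecay (t - b / 2) (by linarith)
      have hexp : Real.exp (-(2 * α) * (t - b / 2)) ≤ q * e := by
        rw [hqdef, hedef, ← Real.exp_add]
        apply Real.exp_le_exp.mpr
        nlinarith
      calc TwoSexAux.VV a₁ g₁ (t - b / 2) + TwoSexAux.VV a₂ g₂ (t - b / 2)
          ≤ Real.exp (-(2 * α) * (t - b / 2)) * V0 := hVtb
        _ ≤ (q * e) * V0 := mul_le_mul_of_nonneg_right hexp hV00
        _ = q * (e * V0) := by ring
    have hwin₁ : TwoSexAux.II a₁ g₁ t ≤ 2 / a₁ * (e * V0 + q * (e * V0)) := by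
      have hw := TwoSexAux.window ha₁ hg₁c t
      have hVV₂t := TwoSexAux.VV_nonneg ha₂.le g₂ t
      have hVV₂t' := TwoSexAux.VV_nonneg ha₂.le g₂ (t - a₁ / 2)
      have hs := hshift a₁ ha₁ ha₁m
      have hsum : TwoSexAux.VV a₁ g₁ t + TwoSexAux.VV a₁ g₁ (t - a₁ / 2)
          ≤ e * V0 + q * (e * V0) :=
        add_le_add (le_trans (le_add_of_nonneg_right hVV₂t) hVt)
          (le_trans (le_add_of_nonneg_right hVV₂t') hs)
      calc TwoSexAux.II a₁ g₁ t
          ≤ 2 / a₁ * (TwoSexAux.VV a₁ g₁ t + TwoSexAux.VV a₁ g₁ (t - a₁ / 2)) := hw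
        _ ≤ 2 / a₁ * (e * V0 + q * (e * V0)) :=
            mul_le_mul_of_nonneg_left hsum (by positivity)
    have hwin₂ : TwoSexAux.II a₂ g₂ t ≤ 2 / a₂ * (e * V0 + q * (e * V0)) := by
      have hw := TwoSexAux.window ha₂ hg₂c t
      have hVV₁t := TwoSexAux.VV_nonneg ha₁.le g₁ t
      have hVV₁t' := TwoSexAux.VV_nonneg ha₁.le g₁ (t - a₂ / 2)
      have hs := hshift a₂ ha₂ ha₂m
      have hsum : TwoSexAux.VV a₂ g₂ t + TwoSexAux.VV a₂ g₂ (t - a₂ / 2)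
          ≤ e * V0 + q * (e * V0) :=
        add_le_add (le_trans (le_add_of_nonneg_left hVV₁t) hVt)
          (le_trans (le_add_of_nonneg_left hVV₁t') hs)
      calc TwoSexAux.II a₂ g₂ t
          ≤ 2 / a₂ * (TwoSexAux.VV a₂ g₂ t + TwoSexAux.VV a₂ g₂ (t - a₂ / 2)) := hw
        _ ≤ 2 / a₂ * (e * V0 + q * (e * V0)) :=
            mul_le_mul_of_nonneg_left hsum (by positivity)
    have hPt : TwoSexAux.II a₁ g₁ t + TwoSexAux.II a₂ g₂ t
        ≤ (2 / a₁ + 2 / a₂) * ((1 + q) * (e * V0)) := by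
      calc TwoSexAux.II a₁ g₁ t + TwoSexAux.II a₂ g₂ t
          ≤ 2 / a₁ * (e * V0 + q * (e * V0)) + 2 / a₂ * (e * V0 + q * (e * V0)) :=
            add_le_add hwin₁ hwin₂
        _ = (2 / a₁ + 2 / a₂) * ((1 + q) * (e * V0)) := by ring
    have heV : (1 + q) * (e * V0) ≤ (1 + q) * (e * ((max a₁ a₂)
        * (TwoSexAux.II a₁ g₁ 0 + TwoSexAux.II a₂ g₂ 0))) := by
      apply mul_le_mul_of_nonneg_left _ (by linarith : (0:ℝ) ≤ 1 + q)
      exact mul_le_mul_of_nonneg_left hV0P hepos.le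
    have hchain : TwoSexAux.II a₁ g₁ t + TwoSexAux.II a₂ g₂ t
        ≤ max 1 Cbig * e * (TwoSexAux.II a₁ g₁ 0 + TwoSexAux.II a₂ g₂ 0) := by
      have hfin : (2 / a₁ + 2 / a₂) * ((1 + q) * (e * ((max a₁ a₂)
          * (TwoSexAux.II a₁ g₁ 0 + TwoSexAux.II a₂ g₂ 0))))
          = ((2 / a₁ + 2 / a₂) * (1 + q) * (max a₁ a₂)) * e
            * (TwoSexAux.II a₁ g₁ 0 + TwoSexAux.II a₂ g₂ 0) := by ring
      have hCge : (2 / a₁ + 2 / a₂) * (1 + q) * (max a₁ a₂) ≤ max 1 Cbig :=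
        le_trans (le_max_right _ _) (le_max_right 1 Cbig)
      calc TwoSexAux.II a₁ g₁ t + TwoSexAux.II a₂ g₂ t
          ≤ (2 / a₁ + 2 / a₂) * ((1 + q) * (e * V0)) := hPt
        _ ≤ (2 / a₁ + 2 / a₂) * ((1 + q) * (e * ((max a₁ a₂)
            * (TwoSexAux.II a₁ g₁ 0 + TwoSexAux.II a₂ g₂ 0)))) :=
            mul_le_mul_of_nonneg_left heV (by positivity)
        _ = ((2 / a₁ + 2 / a₂) * (1 + q) * (max a₁ a₂)) * e
            * (TwoSexAux.II a₁ g₁ 0 + TwoSexAux.II a₂ g₂ 0) := hfin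
        _ ≤ max 1 Cbig * e * (TwoSexAux.II a₁ g₁ 0 + TwoSexAux.II a₂ g₂ 0) :=
            mul_le_mul_of_nonneg_right
              (mul_le_mul_of_nonneg_right hCge hepos.le) hP00
    rw [← hedef] at *
    linarith
end

section
/- Let a₁, a₂ ∈ (0, ∞) and let m₁₁, m₂₁ : [0, a₁] → ℝ and m₁₂, m₂₂ : [0, a₂] → ℝ be bounded measurable maternity functions. Suppose (u₁, u₂) is a classical solution of the homogeneous age-structured two-sex population system: u_j : [0, ∞) × [0, a_j] → ℝ is continuously differentiable, ∂_t u_j(t, a) + ∂_a u_j(t, a) = 0 for (t, a) ∈ (0, ∞) × (0, a_j), and u_i(t, 0) = ∫₀^{a₁} m_{i1}(s) u₁(t, s) ds + ∫₀^{a₂} m_{i2}(s) u₂(t, s) ds for all t > 0, i = 1, 2. Define the Lyapunov functional F(t) := Σ_{j ∈ {1,2}} ∫₀^{a_j} (2 a_j − a) u_j(t, a)² da and set γ := min_{i ∈ {1,2}} (1 − 4 Σ_{j ∈ {1,2}} a_i a_j ‖m_{ij}‖²_{L^∞}). Then F is differentiable in t on (0, ∞) and satisfies F′(t) ≤ −γ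 (∫₀^{a₁} u₁(t, a)² da + ∫₀^{a₂} u₂(t, a)² da) for all t > 0. -/
open MeasureTheory Set Function Metric
open MeasureTheory Set Function Metric

section helpers
variable {a : ℝ} {u : ℝ → ℝ → ℝ}

private lemma lyap_S_mem_nhds {t x : ℝ} (ht : 0 < t) (hx : x ∈ Ioo 0 a) :
    (Ici (0:ℝ)) ×ˢ (Icc (0:ℝ) a) ∈ nhds (t, x) := by
  rw [← mem_interior_iff_mem_nhds, interior_prod_eq, interior_Ici, interior_Icc]
  exact ⟨ht, hx⟩

private lemma lyap_hasFDeriv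
    (hreg : ContDiffOn ℝ 1 (uncurry u) (Ici 0 ×ˢ Icc 0 a))
    {t x : ℝ} (ht : 0 < t) (hx : x ∈ Ioo 0 a) :
    HasFDerivAt (uncurry u)
      (fderivWithin ℝ (uncurry u) (Ici 0 ×ˢ Icc 0 a) (t, x)) (t, x) := by
  have hmem := lyap_S_mem_nhds ht hx
  have hdiff : DifferentiableAt ℝ (uncurry u) (t, x) :=
    (hreg.differentiableOn one_ne_zero).differentiableAt hmem
  rw [fderivWithin_of_mem_nhds hmem]
  exact hdiff.hasFDerivAt

/-- time partial derivative -/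
private lemma lyap_hasDerivAt_time
    (hreg : ContDiffOn ℝ 1 (uncurry u) (Ici 0 ×ˢ Icc 0 a))
    {t x : ℝ} (ht : 0 < t) (hx : x ∈ Ioo 0 a) :
    HasDerivAt (fun s => u s x)
      ((fderivWithin ℝ (uncurry u) (Ici 0 ×ˢ Icc 0 a) (t, x)) (1, 0)) t :=
  by
    have := (lyap_hasFDeriv hreg ht hx).comp_hasDerivAt t
      ((hasDerivAt_id' t).prodMk (hasDerivAt_const t x))
    exact this

/-- space partial derivative -/
private lemma lyap_hasDerivAt_space
    (hreg : ContDiffOn ℝ 1 (uncurry u) (Ici 0 ×ˢ Icc 0 a))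
    {t x : ℝ} (ht : 0 < t) (hx : x ∈ Ioo 0 a) :
    HasDerivAt (fun y => u t y)
      ((fderivWithin ℝ (uncurry u) (Ici 0 ×ˢ Icc 0 a) (t, x)) (0, 1)) x :=
  (lyap_hasFDeriv hreg ht hx).comp_hasDerivAt x
    ((hasDerivAt_const x t).prodMk (hasDerivAt_id x))

private lemma lyap_ucontOn
    (hreg : ContDiffOn ℝ 1 (uncurry u) (Ici 0 ×ˢ Icc 0 a))
    {s : ℝ} (hs : 0 ≤ s) : ContinuousOn (u s) (Icc 0 a) :=
  hreg.continuousOn.comp ((continuous_const.prodMk continuous_id).continuousOn)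
    (fun x hx => mk_mem_prod hs hx)

private lemma lyap_DcontOn (ha : 0 < a)
    (hreg : ContDiffOn ℝ 1 (uncurry u) (Ici 0 ×ˢ Icc 0 a)) :
    ContinuousOn (fderivWithin ℝ (uncurry u) (Ici 0 ×ˢ Icc 0 a))
      (Ici 0 ×ˢ Icc 0 a) :=
  hreg.continuousOn_fderivWithin
    ((uniqueDiffOn_Ici 0).prod (uniqueDiffOn_Icc ha)) le_rfl

end helpers

section key
variable {a : ℝ} {u : ℝ → ℝ → ℝ}

private lemma lyap_hasDerivAt_integral (ha : 0 < a)
    (hreg : ContDiffOn ℝ 1 (uncurry u) (Ici 0 ×ˢ Icc 0 a))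
    {t : ℝ} (ht : 0 < t) :
    HasDerivAt (fun s => ∫ x in Ioo (0:ℝ) a, (2 * a - x) * (u s x) ^ 2)
      (∫ x in Ioo (0:ℝ) a, (2 * a - x) *
        (2 * u t x * deriv (fun s => u s x) t)) t := by
  set S : Set (ℝ × ℝ) := Ici 0 ×ˢ Icc 0 a with hS
  set D : ℝ × ℝ → (ℝ × ℝ) →L[ℝ] ℝ := fderivWithin ℝ (uncurry u) S with hD
  -- compact set and bounds
  have hK : IsCompact ((Icc (t/2) (2*t)) ×ˢ (Icc (0:ℝ) a)) :=
    isCompact_Icc.prod isCompact_Icc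
  have hKS : (Icc (t/2) (2*t)) ×ˢ (Icc (0:ℝ) a) ⊆ S :=
    prod_mono (fun s hs => le_trans (by positivity) hs.1) subset_rfl
  obtain ⟨Mu, hMu⟩ := hK.exists_bound_of_continuousOn (hreg.continuousOn.mono hKS)
  obtain ⟨MD, hMD⟩ := hK.exists_bound_of_continuousOn ((lyap_DcontOn ha hreg).mono hKS)
  have hMu0 : 0 ≤ Mu := le_trans (norm_nonneg _) (hMu (t, a/2) (by
    constructor
    · exact ⟨by linarith, by linarith⟩
    · exact ⟨by positivity, by linarith⟩))
  have hMD0 : 0 ≤ MD := le_trans (norm_nonneg _) (hMD (t, a/2) (by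
    constructor
    · exact ⟨by linarith, by linarith⟩
    · exact ⟨by positivity, by linarith⟩))
  -- the candidate derivative family
  set F' : ℝ → ℝ → ℝ := fun s x => (2 * a - x) * (2 * u s x * (D (s, x)) (1, 0)) with hF'
  have hball : ∀ s ∈ ball t (t/2), s ∈ Icc (t/2) (2*t) ∧ 0 < s := by
    intro s hs
    rw [mem_ball, Real.dist_eq, abs_lt] at hs
    exact ⟨⟨by linarith, by linarith⟩, by linarith⟩
  have key := hasDerivAt_integral_of_dominated_loc_of_deriv_le
    (μ := volume.restrict (Ioo 0 a)) (F := fun s x => (2 * a - x) * (u s x) ^ 2)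
    (F' := F') (x₀ := t) (bound := fun _ => 2 * a * (2 * (Mu * MD)))
    (s := ball t (t/2)) (ball_mem_nhds t (by positivity))
    ?meas ?int ?meas' ?bd ?bint ?hdiff
  case meas =>
    filter_upwards [Ioi_mem_nhds ht] with s hs
    have hc : ContinuousOn (fun x => (2 * a - x) * (u s x) ^ 2) (Ioo 0 a) :=
      ((continuous_const.sub continuous_id).continuousOn.mul
        (((lyap_ucontOn hreg (le_of_lt hs)).mono Ioo_subset_Icc_self).pow 2))
    exact hc.aestronglyMeasurable measurableSet_Ioo
  case int =>
    have hc : ContinuousOn (fun x => (2 * a - x) * (u t x) ^ 2) (Icc 0 a) :=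
      ((continuous_const.sub continuous_id).continuousOn.mul
        ((lyap_ucontOn hreg (le_of_lt ht)).pow 2))
    exact (hc.integrableOn_Icc).mono_set Ioo_subset_Icc_self
  case meas' =>
    have hDc : ContinuousOn (fun x => (D (t, x)) ((1:ℝ), (0:ℝ))) (Ioo 0 a) :=
      ContinuousOn.clm_apply ((lyap_DcontOn ha hreg).comp
          ((continuous_const.prodMk continuous_id).continuousOn)
          (fun x hx => mk_mem_prod (le_of_lt ht) (Ioo_subset_Icc_self hx)))
        continuousOn_const
    have hc : ContinuousOn (fun x => F' t x) (Ioo 0 a) :=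
      ((continuous_const.sub continuous_id).continuousOn).mul
        ((continuousOn_const.mul
          ((lyap_ucontOn hreg (le_of_lt ht)).mono Ioo_subset_Icc_self)).mul hDc)
    exact hc.aestronglyMeasurable measurableSet_Ioo
  case bd =>
    filter_upwards [ae_restrict_mem measurableSet_Ioo] with x hx
    intro s hs
    obtain ⟨hsK, hs0⟩ := hball s hs
    have hmem : (s, x) ∈ (Icc (t/2) (2*t)) ×ˢ (Icc (0:ℝ) a) :=
      mk_mem_prod hsK (Ioo_subset_Icc_self hx)
    have h1 : |u s x| ≤ Mu := hMu (s, x) hmem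
    have h2 : ‖D (s, x)‖ ≤ MD := hMD (s, x) hmem
    have h3 : |(D (s, x)) (1, 0)| ≤ MD := by
      calc |(D (s, x)) (1, 0)| ≤ ‖D (s, x)‖ * ‖((1:ℝ), (0:ℝ))‖ :=
            (D (s, x)).le_opNorm _
        _ ≤ MD * 1 := by
            apply mul_le_mul h2 _ (norm_nonneg _) hMD0
            rw [Prod.norm_def]
            simp
        _ = MD := mul_one MD
    have h4 : |2 * a - x| ≤ 2 * a := by
      rw [abs_le]; constructor <;> [linarith [hx.2]; linarith [hx.1]]
    calc ‖F' s x‖ = |2 * a - x| * (2 * (|u s x| * |(D (s, x)) (1, 0)|)) := by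
          rw [hF']; simp [abs_mul, mul_assoc]
      _ ≤ 2 * a * (2 * (Mu * MD)) := by
          apply mul_le_mul h4 _ (by positivity) (by positivity)
          have := mul_le_mul h1 h3 (abs_nonneg _) hMu0
          nlinarith [abs_nonneg (u s x), abs_nonneg ((D (s, x)) (1, 0))]
  case bint =>
    exact integrable_const _
  case hdiff =>
    filter_upwards [ae_restrict_mem measurableSet_Ioo] with x hx
    intro s hs
    obtain ⟨_, hs0⟩ := hball s hs
    have hpart := lyap_hasDerivAt_time hreg hs0 hx
    have := (hpart.pow 2).const_mul (2 * a - x)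
    refine this.congr_deriv ?_
    simp only [hF', hD, hS]; push_cast; ring
  -- conclude
  refine key.2.congr_deriv ?_
  apply setIntegral_congr_fun measurableSet_Ioo
  intro x hx
  show (2 * a - x) * (2 * u t x * (D (t, x)) (1, 0))
      = (2 * a - x) * (2 * u t x * deriv (fun s => u s x) t)
  rw [(lyap_hasDerivAt_time hreg ht hx).deriv]
end key

section ibp
variable {a : ℝ} {u : ℝ → ℝ → ℝ}

private lemma lyap_ibp (ha : 0 < a)
    (hreg : ContDiffOn ℝ 1 (uncurry u) (Ici 0 ×ˢ Icc 0 a))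
    {t : ℝ} (ht : 0 < t)
    (hpde : ∀ x ∈ Ioo (0:ℝ) a,
      deriv (fun s => u s x) t + deriv (fun y => u t y) x = 0) :
    ∫ x in Ioo (0:ℝ) a, (2 * a - x) * (2 * u t x * deriv (fun s => u s x) t)
      = 2 * a * (u t 0) ^ 2 - a * (u t a) ^ 2 - ∫ x in Ioo (0:ℝ) a, (u t x) ^ 2 := by
  set S : Set (ℝ × ℝ) := Ici 0 ×ˢ Icc 0 a with hS
  set D : ℝ × ℝ → (ℝ × ℝ) →L[ℝ] ℝ := fderivWithin ℝ (uncurry u) S with hD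
  set g : ℝ → ℝ := fun x => (2 * a - x) * (u t x) ^ 2 with hg
  set f₂ : ℝ → ℝ := fun x => (2 * a - x) * (2 * u t x * (D (t, x)) (0, 1)) with hf₂
  set h : ℝ → ℝ := fun x => -(u t x) ^ 2 + f₂ x with hh
  have hDc : ContinuousOn (fun x => (D (t, x)) ((0:ℝ), (1:ℝ))) (Icc 0 a) :=
    ContinuousOn.clm_apply ((lyap_DcontOn ha hreg).comp
        ((continuous_const.prodMk continuous_id).continuousOn)
        (fun x hx => mk_mem_prod (le_of_lt ht) hx)) continuousOn_const
  have huc : ContinuousOn (u t) (Icc 0 a) := lyap_ucontOn hreg ht.le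
  have hf₂c : ContinuousOn f₂ (Icc 0 a) :=
    ((continuous_const.sub continuous_id).continuousOn).mul
      ((continuousOn_const.mul huc).mul hDc)
  have hsqc : ContinuousOn (fun x => (u t x) ^ 2) (Icc 0 a) := huc.pow 2
  have hhc : ContinuousOn h (Icc 0 a) := (hsqc.neg).add hf₂c
  have hgc : ContinuousOn g (Icc 0 a) :=
    ((continuous_const.sub continuous_id).continuousOn).mul hsqc
  have hderiv : ∀ x ∈ Ioo (0:ℝ) a, HasDerivAt g (h x) x := by
    intro x hx
    have h1 : HasDerivAt (fun x : ℝ => 2 * a - x) (-1) x := by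
      simpa using (hasDerivAt_id' x).const_sub (2*a)
    have h2 := (lyap_hasDerivAt_space hreg ht hx).pow 2
    have := h1.mul h2
    refine this.congr_deriv ?_
    simp only [hh, hf₂, hD, hS, Pi.pow_apply]; push_cast; ring
  have hint : IntervalIntegrable h volume 0 a := hhc.intervalIntegrable_of_Icc ha.le
  have hibp := intervalIntegral.integral_eq_sub_of_hasDerivAt_of_le ha.le hgc hderiv hint
  rw [intervalIntegral.integral_of_le ha.le, integral_Ioc_eq_integral_Ioo] at hibp
  have hIsq : IntegrableOn (fun x => (u t x) ^ 2) (Ioo 0 a) volume :=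
    (hsqc.integrableOn_Icc).mono_set Ioo_subset_Icc_self
  have hIf₂ : IntegrableOn f₂ (Ioo 0 a) volume :=
    (hf₂c.integrableOn_Icc).mono_set Ioo_subset_Icc_self
  have hsplit : ∫ x in Ioo (0:ℝ) a, h x
      = (∫ x in Ioo (0:ℝ) a, -(u t x) ^ 2) + ∫ x in Ioo (0:ℝ) a, f₂ x :=
    integral_add hIsq.neg hIf₂
  have htarget : ∫ x in Ioo (0:ℝ) a, (2 * a - x) * (2 * u t x * deriv (fun s => u s x) t)
      = ∫ x in Ioo (0:ℝ) a, -f₂ x := by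
    apply setIntegral_congr_fun measurableSet_Ioo
    intro x hx
    have h1 : deriv (fun s => u s x) t = -deriv (fun y => u t y) x := by
      have := hpde x hx; linarith
    show (2 * a - x) * (2 * u t x * deriv (fun s => u s x) t) = -f₂ x
    rw [h1, hf₂]
    rw [show deriv (fun y => u t y) x = (D (t, x)) (0, 1) from
      (lyap_hasDerivAt_space hreg ht hx).deriv]
    ring
  rw [htarget, integral_neg]
  have hgval : g a - g 0 = a * (u t a) ^ 2 - 2 * a * (u t 0) ^ 2 := by
    show (2 * a - a) * (u t a) ^ 2 - (2 * a - 0) * (u t 0) ^ 2 = _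
    ring
  rw [integral_neg] at hsplit
  have hkey : ∫ x in Ioo (0:ℝ) a, f₂ x
      = g a - g 0 + ∫ x in Ioo (0:ℝ) a, (u t x) ^ 2 := by
    rw [← hibp, hsplit]; ring
  rw [hkey, hgval]; ring
end ibp

section cs

private lemma lyap_cs {a : ℝ} (ha : 0 < a) {m v : ℝ → ℝ}
    (hm : MemLp m ⊤ (volume.restrict (Ioo 0 a)))
    (hv : ContinuousOn v (Icc 0 a)) :
    (∫ s in Ioo (0:ℝ) a, m s * v s) ^ 2
      ≤ (eLpNorm m ⊤ (volume.restrict (Ioo 0 a))).toReal ^ 2 * a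
        * ∫ s in Ioo (0:ℝ) a, (v s) ^ 2 := by
  set μ := volume.restrict (Ioo (0:ℝ) a) with hμ
  set M := (eLpNorm m ⊤ μ).toReal with hM
  have hM0 : 0 ≤ M := ENNReal.toReal_nonneg
  set I := ∫ s in Ioo (0:ℝ) a, |v s| with hI
  set J := ∫ s in Ioo (0:ℝ) a, (v s) ^ 2 with hJ
  have hIabs : IntegrableOn (fun s => |v s|) (Ioo 0 a) volume :=
    (hv.abs.integrableOn_Icc).mono_set Ioo_subset_Icc_self
  have hIsq : IntegrableOn (fun s => (v s) ^ 2) (Ioo 0 a) volume :=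
    ((hv.pow 2).integrableOn_Icc).mono_set Ioo_subset_Icc_self
  have hI0 : 0 ≤ I := integral_nonneg (fun s => abs_nonneg _)
  have hvol : (volume (Ioo (0:ℝ) a)).toReal = a := by
    rw [Real.volume_Ioo, ENNReal.toReal_ofReal (by linarith), sub_zero]
  -- step 1 : |∫ m v| ≤ M * I
  have hlt : eLpNormEssSup m μ < ⊤ := by
    rw [← eLpNorm_exponent_top]; exact hm.2
  have hae : ∀ᵐ s ∂μ, |m s| ≤ M := by
    filter_upwards [ae_le_eLpNormEssSup (f := m) (μ := μ)] with s hs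
    have := (ENNReal.toReal_le_toReal (by simp) hlt.ne).2 hs
    simpa [hM, Real.norm_eq_abs, eLpNorm_exponent_top] using this
  have hstep1 : |∫ s in Ioo (0:ℝ) a, m s * v s| ≤ M * I := by
    calc |∫ s in Ioo (0:ℝ) a, m s * v s| ≤ ∫ s in Ioo (0:ℝ) a, |m s| * |v s| := by
          simpa [Real.norm_eq_abs, abs_mul] using
            norm_integral_le_integral_norm (μ := μ) (fun s => m s * v s)
      _ ≤ ∫ s in Ioo (0:ℝ) a, M * |v s| := by
          apply integral_mono_of_nonneg
          · exact Filter.Eventually.of_forall fun s => mul_nonneg (abs_nonneg _) (abs_nonneg _)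
          · exact hIabs.const_mul M
          · filter_upwards [hae] with s hs
            exact mul_le_mul_of_nonneg_right hs (abs_nonneg _)
      _ = M * I := by rw [hI, integral_const_mul]
  -- step 2 : I^2 ≤ a * J
  have hq : ∀ c : ℝ, 0 ≤ J - 2 * c * I + c ^ 2 * a := by
    intro c
    have hnn : 0 ≤ ∫ s in Ioo (0:ℝ) a, (|v s| - c) ^ 2 :=
      integral_nonneg (fun s => sq_nonneg _)
    have hexp : ∫ s in Ioo (0:ℝ) a, (|v s| - c) ^ 2
        = J - 2 * c * I + c ^ 2 * a := by
      have heq : ∀ s : ℝ, (|v s| - c) ^ 2 = (v s) ^ 2 - 2 * c * |v s| + c ^ 2 := by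
        intro s; have := sq_abs (v s); nlinarith
      have hconst : IntegrableOn (fun _ : ℝ => c ^ 2) (Ioo 0 a) volume :=
        integrableOn_const (by rw [Real.volume_Ioo]; exact ENNReal.ofReal_ne_top)
      calc ∫ s in Ioo (0:ℝ) a, (|v s| - c) ^ 2
          = ∫ s in Ioo (0:ℝ) a, ((v s) ^ 2 - 2 * c * |v s| + c ^ 2) :=
            integral_congr_ae (Filter.Eventually.of_forall heq)
        _ = (∫ s in Ioo (0:ℝ) a, ((v s) ^ 2 - 2 * c * |v s|))
              + ∫ s in Ioo (0:ℝ) a, (c ^ 2 : ℝ) :=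
            integral_add (f := fun s => (v s) ^ 2 - 2 * c * |v s|)
              (g := fun _ => c ^ 2) (hIsq.sub (hIabs.const_mul (2*c))) hconst
        _ = ((∫ s in Ioo (0:ℝ) a, (v s) ^ 2)
              - ∫ s in Ioo (0:ℝ) a, 2 * c * |v s|)
              + ∫ s in Ioo (0:ℝ) a, (c ^ 2 : ℝ) := by
            rw [integral_sub (f := fun s => (v s) ^ 2)
              (g := fun s => 2 * c * |v s|) hIsq (hIabs.const_mul (2*c))]
        _ = J - 2 * c * I + c ^ 2 * a := by
            rw [integral_const_mul, setIntegral_const, smul_eq_mul, measureReal_def, hvol, ← hI, ← hJ]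
            ring
    linarith [hexp ▸ hnn]
  have hstep2 : I ^ 2 ≤ a * J := by
    have h := hq (I / a)
    have ha' : a ≠ 0 := ne_of_gt ha
    have e1 : 2 * (I / a) * I = 2 * (I ^ 2 / a) := by ring
    have e2 : (I / a) ^ 2 * a = I ^ 2 / a := by field_simp
    rw [e1, e2] at h
    have h' : I ^ 2 / a ≤ J := by linarith
    calc I ^ 2 = (I ^ 2 / a) * a := by field_simp
      _ ≤ J * a := mul_le_mul_of_nonneg_right h' ha.le
      _ = a * J := mul_comm _ _
  calc (∫ s in Ioo (0:ℝ) a, m s * v s) ^ 2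
      = |∫ s in Ioo (0:ℝ) a, m s * v s| ^ 2 := (sq_abs _).symm
    _ ≤ (M * I) ^ 2 := by
        apply pow_le_pow_left₀ (abs_nonneg _) hstep1
    _ = M ^ 2 * I ^ 2 := by ring
    _ ≤ M ^ 2 * (a * J) := by
        apply mul_le_mul_of_nonneg_left hstep2 (by positivity)
    _ = M ^ 2 * a * J := by ring

end cs

private lemma lyap_alg {A B P Q X Y : ℝ} (hX : 0 ≤ X) (hY : 0 ≤ Y)
    (hP : 0 ≤ P) (hQ : 0 ≤ Q)
    (hA : A ^ 2 ≤ P * X) (hB : B ^ 2 ≤ Q * Y) :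
    (A + B) ^ 2 ≤ (P + Q) * (X + Y) := by
  have h1 : 0 ≤ P * Y + Q * X := by positivity
  have h2 : (2 * (A * B)) ^ 2 ≤ (P * Y + Q * X) ^ 2 := by
    nlinarith [sq_nonneg (P*Y - Q*X), mul_nonneg (mul_nonneg hP hX) (mul_nonneg hQ hY),
      sq_nonneg A, sq_nonneg B, mul_le_mul hA hB (sq_nonneg B) (by positivity)]
  have h3 : 2 * (A * B) ≤ P * Y + Q * X := by nlinarith [h2, h1]
  nlinarith [hA, hB, h3]

set_option maxHeartbeats 1000000 in
/-- Along any classical solution of the homogeneous two-sex population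
system, the Lyapunov functional `F(t) = ∑_j ∫₀^{a_j} (2a_j - a) u_j(t,a)² da` is
differentiable on `(0,∞)` and satisfies
`F'(t) ≤ -γ (∫ u₁(t)² + ∫ u₂(t)²)` with
`γ = min_i (1 - 4 ∑_j a_i a_j ‖m_{ij}‖²_∞)`. -/
theorem lyapunov_functional_derivative_estimate
    (a₁ a₂ : ℝ) (ha₁ : 0 < a₁) (ha₂ : 0 < a₂)
    (m₁₁ m₂₁ m₁₂ m₂₂ : ℝ → ℝ)
    (hm₁₁ : MemLp m₁₁ ⊤ (volume.restrict (Ioo 0 a₁)))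
    (hm₂₁ : MemLp m₂₁ ⊤ (volume.restrict (Ioo 0 a₁)))
    (hm₁₂ : MemLp m₁₂ ⊤ (volume.restrict (Ioo 0 a₂)))
    (hm₂₂ : MemLp m₂₂ ⊤ (volume.restrict (Ioo 0 a₂)))
    (γ : ℝ)
    (hγ : γ = min
      (1 - 4 * (a₁ * a₁ * (eLpNorm m₁₁ ⊤ (volume.restrict (Ioo 0 a₁))).toReal ^ 2
        + a₁ * a₂ * (eLpNorm m₁₂ ⊤ (volume.restrict (Ioo 0 a₂))).toReal ^ 2))
      (1 - 4 * (a₂ * a₁ * (eLpNorm m₂₁ ⊤ (volume.restrict (Ioo 0 a₁))).toReal ^ 2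
        + a₂ * a₂ * (eLpNorm m₂₂ ⊤ (volume.restrict (Ioo 0 a₂))).toReal ^ 2)))
    (u₁ u₂ : ℝ → ℝ → ℝ)
    (hreg₁ : ContDiffOn ℝ 1 (Function.uncurry u₁) (Ici 0 ×ˢ Icc 0 a₁))
    (hreg₂ : ContDiffOn ℝ 1 (Function.uncurry u₂) (Ici 0 ×ˢ Icc 0 a₂))
    (hpde₁ : ∀ t > (0:ℝ), ∀ x ∈ Ioo (0:ℝ) a₁,
      deriv (fun s => u₁ s x) t + deriv (fun y => u₁ t y) x = 0)
    (hpde₂ : ∀ t > (0:ℝ), ∀ x ∈ Ioo (0:ℝ) a₂,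
      deriv (fun s => u₂ s x) t + deriv (fun y => u₂ t y) x = 0)
    (hbc₁ : ∀ t > (0:ℝ), u₁ t 0 =
      (∫ s in Ioo (0:ℝ) a₁, m₁₁ s * u₁ t s) + ∫ s in Ioo (0:ℝ) a₂, m₁₂ s * u₂ t s)
    (hbc₂ : ∀ t > (0:ℝ), u₂ t 0 =
      (∫ s in Ioo (0:ℝ) a₁, m₂₁ s * u₁ t s) + ∫ s in Ioo (0:ℝ) a₂, m₂₂ s * u₂ t s)
    (F : ℝ → ℝ)
    (hF : F = fun t => (∫ x in Ioo (0:ℝ) a₁, (2 * a₁ - x) * (u₁ t x) ^ 2)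
      + ∫ x in Ioo (0:ℝ) a₂, (2 * a₂ - x) * (u₂ t x) ^ 2) :
    (∀ t > (0:ℝ), DifferentiableAt ℝ F t) ∧
      ∀ t > (0:ℝ), deriv F t ≤
        -γ * ((∫ x in Ioo (0:ℝ) a₁, (u₁ t x) ^ 2) + ∫ x in Ioo (0:ℝ) a₂, (u₂ t x) ^ 2) := by
  have hFd : ∀ t > (0:ℝ), HasDerivAt F
      ((∫ x in Ioo (0:ℝ) a₁, (2 * a₁ - x) * (2 * u₁ t x * deriv (fun s => u₁ s x) t))
        + ∫ x in Ioo (0:ℝ) a₂, (2 * a₂ - x) * (2 * u₂ t x * deriv (fun s => u₂ s x) t)) t := by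
    intro t ht
    rw [hF]
    exact (lyap_hasDerivAt_integral ha₁ hreg₁ ht).add (lyap_hasDerivAt_integral ha₂ hreg₂ ht)
  refine ⟨fun t ht => (hFd t ht).differentiableAt, fun t ht => ?_⟩
  rw [(hFd t ht).deriv]
  set M₁₁ := (eLpNorm m₁₁ ⊤ (volume.restrict (Ioo (0:ℝ) a₁))).toReal with hM11
  set M₁₂ := (eLpNorm m₁₂ ⊤ (volume.restrict (Ioo (0:ℝ) a₂))).toReal with hM12
  set M₂₁ := (eLpNorm m₂₁ ⊤ (volume.restrict (Ioo (0:ℝ) a₁))).toReal with hM21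
  set M₂₂ := (eLpNorm m₂₂ ⊤ (volume.restrict (Ioo (0:ℝ) a₂))).toReal with hM22
  set X₁ := ∫ x in Ioo (0:ℝ) a₁, (u₁ t x) ^ 2 with hX1
  set X₂ := ∫ x in Ioo (0:ℝ) a₂, (u₂ t x) ^ 2 with hX2
  have hX₁0 : 0 ≤ X₁ := integral_nonneg (fun x => sq_nonneg _)
  have hX₂0 : 0 ≤ X₂ := integral_nonneg (fun x => sq_nonneg _)
  have hS0 : 0 ≤ X₁ + X₂ := by linarith
  -- rewrite the derivative via integration by parts
  rw [lyap_ibp ha₁ hreg₁ ht (hpde₁ t ht), lyap_ibp ha₂ hreg₂ ht (hpde₂ t ht)]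
  -- boundary bounds
  have hu₁c := lyap_ucontOn hreg₁ (le_of_lt ht)
  have hu₂c := lyap_ucontOn hreg₂ (le_of_lt ht)
  have hb₁ : (u₁ t 0) ^ 2 ≤ (M₁₁ ^ 2 * a₁ + M₁₂ ^ 2 * a₂) * (X₁ + X₂) := by
    rw [hbc₁ t ht]
    exact lyap_alg hX₁0 hX₂0 (by positivity) (by positivity)
      (lyap_cs ha₁ hm₁₁ hu₁c) (lyap_cs ha₂ hm₁₂ hu₂c)
  have hb₂ : (u₂ t 0) ^ 2 ≤ (M₂₁ ^ 2 * a₁ + M₂₂ ^ 2 * a₂) * (X₁ + X₂) := by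
    rw [hbc₂ t ht]
    exact lyap_alg hX₁0 hX₂0 (by positivity) (by positivity)
      (lyap_cs ha₁ hm₂₁ hu₁c) (lyap_cs ha₂ hm₂₂ hu₂c)
  -- gamma bounds
  have hγ₁ : γ ≤ 1 - 4 * (a₁ * a₁ * M₁₁ ^ 2 + a₁ * a₂ * M₁₂ ^ 2) := hγ ▸ min_le_left _ _
  have hγ₂ : γ ≤ 1 - 4 * (a₂ * a₁ * M₂₁ ^ 2 + a₂ * a₂ * M₂₂ ^ 2) := hγ ▸ min_le_right _ _
  -- combine
  have e₁ : 2 * a₁ * (u₁ t 0) ^ 2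
      ≤ 2 * a₁ * ((M₁₁ ^ 2 * a₁ + M₁₂ ^ 2 * a₂) * (X₁ + X₂)) :=
    mul_le_mul_of_nonneg_left hb₁ (by positivity)
  have e₂ : 2 * a₂ * (u₂ t 0) ^ 2
      ≤ 2 * a₂ * ((M₂₁ ^ 2 * a₁ + M₂₂ ^ 2 * a₂) * (X₁ + X₂)) :=
    mul_le_mul_of_nonneg_left hb₂ (by positivity)
  have e₁' : 2 * a₁ * ((M₁₁ ^ 2 * a₁ + M₁₂ ^ 2 * a₂) * (X₁ + X₂))
      ≤ (1 - γ) / 2 * (X₁ + X₂) := by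
    nlinarith [mul_le_mul_of_nonneg_right hγ₁ hS0]
  have e₂' : 2 * a₂ * ((M₂₁ ^ 2 * a₁ + M₂₂ ^ 2 * a₂) * (X₁ + X₂))
      ≤ (1 - γ) / 2 * (X₁ + X₂) := by
    nlinarith [mul_le_mul_of_nonneg_right hγ₂ hS0]
  have hc₁ : 0 ≤ a₁ * (u₁ t a₁) ^ 2 := by positivity
  have hc₂ : 0 ≤ a₂ * (u₂ t a₂) ^ 2 := by positivity
  nlinarith [e₁, e₂, e₁', e₂', hc₁, hc₂, hS0]
end

section
/- Let X be a real Hilbert space, a < b real numbers, g ∈ L²((a, b), X), and define u : [a, b] → X by u(x) := u₀ + ∫_a^x g(s) ds for some u₀ ∈ X (so that u ∈ H¹((a, b), X) with derivative g). For N ∈ ℕ, N ≥ 1, set h := (b − a)/N and ξ_k := a + k h for k = 0, …, N. Then the L²-discretization error of the backwards difference quotient tends to zero: Σ_{k=1}^{N} ∫_{ξ_{k−1}}^{ξ_k} ‖(u(ξ_k) − u(ξ_{k−1}))/h − g(ξ)‖²_X dξ → 0 as N → ∞. -/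
open MeasureTheory Set
open scoped ENNReal


lemma memLp_int_norm_sq {α : Type*} [MeasurableSpace α] {μ : Measure α}
    {X : Type*} [NormedAddCommGroup X] {f : α → X}
    (hf : MemLp f 2 μ) : Integrable (fun x => ‖f x‖ ^ 2) μ := by
  have h := hf.integrable_norm_rpow two_ne_zero ENNReal.ofNat_ne_top
  have e : (fun x => ‖f x‖ ^ ((2:ℝ≥0∞).toReal)) = fun x => ‖f x‖ ^ 2 := by
    funext x
    rw [ENNReal.toReal_ofNat, ← Real.rpow_natCast]
    norm_num
  rwa [e] at h

lemma avg_sub_sq_integral_le {X : Type*} [NormedAddCommGroup X] [InnerProductSpace ℝ X]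
    [CompleteSpace X] {c d : ℝ} (hcd : c ≤ d) {r : ℝ → X}
    (hr1 : IntegrableOn r (Ioc c d))
    (hr2 : IntegrableOn (fun ξ => ‖r ξ‖ ^ 2) (Ioc c d))
    {v : X} (hv : (d - c) • v = ∫ ξ in Ioc c d, r ξ) :
    ∫ ξ in Ioc c d, ‖v - r ξ‖ ^ 2 ≤ ∫ ξ in Ioc c d, ‖r ξ‖ ^ 2 := by
  have hfin : IsFiniteMeasure (volume.restrict (Ioc c d)) := by
    constructor
    simp [Real.volume_Ioc]
  have hinner : Integrable (fun ξ => (inner ℝ v (r ξ) : ℝ)) (volume.restrict (Ioc c d)) :=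
    hr1.const_inner v
  have h1 : Integrable (fun ξ => ‖v‖ ^ 2 - 2 * (inner ℝ v (r ξ) : ℝ))
      (volume.restrict (Ioc c d)) := by
    exact (integrable_const _).sub (hinner.const_mul 2)
  have hI : ∫ ξ in Ioc c d, (inner ℝ v (r ξ) : ℝ) = (d - c) * ‖v‖ ^ 2 := by
    rw [integral_inner hr1 v, ← hv, real_inner_smul_right, real_inner_self_eq_norm_sq]
  have hvol : (volume (Ioc c d)).toReal = d - c := by
    rw [Real.volume_Ioc, ENNReal.toReal_ofReal (sub_nonneg.2 hcd)]
  have expand : (∫ ξ in Ioc c d, ‖v - r ξ‖ ^ 2)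
      = ∫ ξ in Ioc c d, ((‖v‖ ^ 2 - 2 * (inner ℝ v (r ξ) : ℝ)) + ‖r ξ‖ ^ 2) := by
    congr 1
    funext ξ
    rw [norm_sub_sq_real]
  rw [expand, integral_add h1 hr2,
    integral_sub (integrable_const _) (hinner.const_mul 2), integral_const,
    measureReal_restrict_apply_univ, measureReal_def, hvol, integral_const_mul, hI]
  have hv2 : 0 ≤ (d - c) * ‖v‖ ^ 2 := mul_nonneg (sub_nonneg.2 hcd) (sq_nonneg _)
  have hs : (d - c) • ‖v‖ ^ 2 = (d - c) * ‖v‖ ^ 2 := smul_eq_mul ..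
  linarith [hs]

/-- Core per-interval bound. -/
lemma interval_bound {X : Type*} [NormedAddCommGroup X] [InnerProductSpace ℝ X]
    [CompleteSpace X] {c d : ℝ} (hcd : c ≤ d) {φ r : ℝ → X}
    (hφc : Continuous φ)
    (hr1 : IntegrableOn r (Ioc c d))
    (hr2 : MemLp r 2 (volume.restrict (Ioc c d)))
    {m : ℝ} (hm : 0 < m) (hmd : m * (d - c) = 1)
    {ε' : ℝ} (hε' : 0 ≤ ε')
    (hφb : ∀ x ∈ Icc c d, ∀ y ∈ Icc c d, ‖φ x - φ y‖ ≤ ε') :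
    ∫ ξ in Ioc c d, ‖m • (∫ s in c..d, (φ s + r s)) - (φ ξ + r ξ)‖ ^ 2
      ≤ 2 * (ε' ^ 2 * (d - c)) + 2 * ∫ ξ in Ioc c d, ‖r ξ‖ ^ 2 := by
  have hdc : 0 ≤ d - c := sub_nonneg.2 hcd
  have hfin : IsFiniteMeasure (volume.restrict (Ioc c d)) := by
    constructor; simp [Real.volume_Ioc]
  have hφi : IntervalIntegrable φ volume c d := hφc.intervalIntegrable c d
  have hri : IntervalIntegrable r volume c d :=
    (intervalIntegrable_iff_integrableOn_Ioc_of_le hcd).2 hr1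
  have hr2' : IntegrableOn (fun ξ => ‖r ξ‖ ^ 2) (Ioc c d) := memLp_int_norm_sq hr2
  set A : X := m • ∫ s in c..d, φ s with hA
  set B : X := m • ∫ s in c..d, r s with hB
  -- pointwise rewrite of the integrand
  have hsplit : ∀ ξ : ℝ, m • (∫ s in c..d, (φ s + r s)) - (φ ξ + r ξ)
      = (A - φ ξ) + (B - r ξ) := by
    intro ξ
    rw [intervalIntegral.integral_add hφi hri, smul_add, hA, hB]
    abel
  -- P part : uniform bound
  have hPb : ∀ ξ ∈ Ioc c d, ‖A - φ ξ‖ ≤ ε' := by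
    intro ξ hξ
    have hξ' : ξ ∈ Icc c d := Ioc_subset_Icc_self hξ
    have hconst : (∫ s in c..d, φ ξ) = (d - c) • φ ξ := intervalIntegral.integral_const _
    have hAe : A - φ ξ = m • ∫ s in c..d, (φ s - φ ξ) := by
      rw [intervalIntegral.integral_sub hφi (intervalIntegrable_const), hconst, smul_sub,
        hA, smul_smul, hmd, one_smul]
    have hIb : ‖∫ s in c..d, (φ s - φ ξ)‖ ≤ ε' * |d - c| := by
      apply intervalIntegral.norm_integral_le_of_norm_le_const
      intro x hx
      rw [uIoc_of_le hcd] at hx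
      exact hφb x (Ioc_subset_Icc_self hx) ξ hξ'
    rw [hAe, norm_smul, Real.norm_eq_abs, abs_of_pos hm]
    calc m * ‖∫ s in c..d, (φ s - φ ξ)‖ ≤ m * (ε' * |d - c|) := by
          exact mul_le_mul_of_nonneg_left hIb hm.le
      _ = ε' * (m * (d - c)) := by rw [abs_of_nonneg hdc]; ring
      _ = ε' := by rw [hmd, mul_one]
  -- integrability of both square parts
  have hPi : IntegrableOn (fun ξ => ‖A - φ ξ‖ ^ 2) (Ioc c d) := by
    exact (Continuous.integrableOn_Ioc (by continuity))
  have hQmem : MemLp (fun ξ => B - r ξ) 2 (volume.restrict (Ioc c d)) :=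
    (memLp_const B).sub hr2
  have hQi : IntegrableOn (fun ξ => ‖B - r ξ‖ ^ 2) (Ioc c d) := memLp_int_norm_sq hQmem
  -- main chain
  have hptwise : ∀ ξ : ℝ, ‖m • (∫ s in c..d, (φ s + r s)) - (φ ξ + r ξ)‖ ^ 2
      ≤ 2 * ‖A - φ ξ‖ ^ 2 + 2 * ‖B - r ξ‖ ^ 2 := by
    intro ξ
    rw [hsplit ξ]
    have h1 := norm_add_le (A - φ ξ) (B - r ξ)
    have h2 := norm_nonneg (A - φ ξ + (B - r ξ))
    nlinarith [sq_nonneg (‖A - φ ξ‖ - ‖B - r ξ‖), norm_nonneg (A - φ ξ), norm_nonneg (B - r ξ)]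
  have step1 : ∫ ξ in Ioc c d, ‖m • (∫ s in c..d, (φ s + r s)) - (φ ξ + r ξ)‖ ^ 2
      ≤ ∫ ξ in Ioc c d, (2 * ‖A - φ ξ‖ ^ 2 + 2 * ‖B - r ξ‖ ^ 2) := by
    apply integral_mono_of_nonneg
    · filter_upwards with ξ using sq_nonneg _
    · exact (hPi.const_mul 2).add (hQi.const_mul 2)
    · filter_upwards with ξ using hptwise ξ
  have hsplitint : ∫ ξ in Ioc c d, (2 * ‖A - φ ξ‖ ^ 2 + 2 * ‖B - r ξ‖ ^ 2)
      = 2 * (∫ ξ in Ioc c d, ‖A - φ ξ‖ ^ 2) + 2 * ∫ ξ in Ioc c d, ‖B - r ξ‖ ^ 2 := by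
    rw [integral_add (hPi.const_mul 2) (hQi.const_mul 2), integral_const_mul, integral_const_mul]
  have hP : ∫ ξ in Ioc c d, ‖A - φ ξ‖ ^ 2 ≤ ε' ^ 2 * (d - c) := by
    have : ∫ ξ in Ioc c d, ‖A - φ ξ‖ ^ 2 ≤ ∫ _ξ in Ioc c d, ε' ^ 2 := by
      apply setIntegral_mono_on hPi (integrable_const _) measurableSet_Ioc
      intro ξ hξ
      exact pow_le_pow_left₀ (norm_nonneg _) (hPb ξ hξ) 2
    rw [integral_const, measureReal_restrict_apply_univ, measureReal_def, Real.volume_Ioc,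
      ENNReal.toReal_ofReal hdc, smul_eq_mul, mul_comm] at this
    exact this
  have hQ : ∫ ξ in Ioc c d, ‖B - r ξ‖ ^ 2 ≤ ∫ ξ in Ioc c d, ‖r ξ‖ ^ 2 := by
    apply avg_sub_sq_integral_le hcd hr1 hr2'
    rw [hB, smul_smul, mul_comm (d - c) m, hmd, one_smul, intervalIntegral.integral_of_le hcd]
  calc ∫ ξ in Ioc c d, ‖m • (∫ s in c..d, (φ s + r s)) - (φ ξ + r ξ)‖ ^ 2
      ≤ 2 * (∫ ξ in Ioc c d, ‖A - φ ξ‖ ^ 2) + 2 * ∫ ξ in Ioc c d, ‖B - r ξ‖ ^ 2 := by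
        rw [← hsplitint]; exact step1
    _ ≤ 2 * (ε' ^ 2 * (d - c)) + 2 * ∫ ξ in Ioc c d, ‖r ξ‖ ^ 2 := by
        have h2 := hQ
        have h1 := hP
        linarith

set_option maxHeartbeats 1000000 in
/-- For `u ∈ H¹((a,b), X)` with derivative `g ∈ L²((a,b), X)`, the
`L²`-discretization error of the backwards difference quotient on the equidistant
lattice `ξ_k = a + k(b-a)/N` tends to zero as `N → ∞`. -/
theorem backwards_difference_quotient_L2_convergence
    (X : Type*) [NormedAddCommGroup X] [InnerProductSpace ℝ X] [CompleteSpace X]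
    (a b : ℝ) (hab : a < b) (g : ℝ → X)
    (hg : MemLp g 2 (volume.restrict (Ioo a b)))
    (u : ℝ → X) (u₀ : X)
    (hu : ∀ x ∈ Icc a b, u x = u₀ + ∫ s in a..x, g s) :
    Filter.Tendsto (fun N : ℕ =>
      ∑ k ∈ Finset.Icc 1 N,
        ∫ ξ in (a + ((k:ℝ) - 1) * ((b - a) / N))..(a + (k:ℝ) * ((b - a) / N)),
          ‖((N:ℝ) / (b - a)) • (u (a + (k:ℝ) * ((b - a) / N))
              - u (a + ((k:ℝ) - 1) * ((b - a) / N))) - g ξ‖ ^ 2)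
      Filter.atTop (nhds 0) := by
  have hba : (0:ℝ) < b - a := sub_pos.2 hab
  have hres : volume.restrict (Ioo a b) = volume.restrict (Ioc a b) :=
    Measure.restrict_congr_set Ioo_ae_eq_Ioc
  haveI hfin : IsFiniteMeasure (volume.restrict (Ioc a b)) := by
    constructor; simp [Real.volume_Ioc]
  haveI hreg : (volume.restrict (Ioo a b)).Regular :=
    Measure.Regular.restrict_of_measure_ne_top (by simp [Real.volume_Ioo])
  rw [NormedAddCommGroup.tendsto_nhds_zero]
  intro ε hε
  -- approximation by a continuous compactly supported function
  have hδ0 : (ENNReal.ofReal (Real.sqrt (ε/4))) ≠ 0 := by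
    rw [Ne, ENNReal.ofReal_eq_zero, not_le]
    exact Real.sqrt_pos.2 (by positivity)
  obtain ⟨φ, φsupp, hφg, φcont, φmem⟩ :=
    hg.exists_hasCompactSupport_eLpNorm_sub_le (by norm_num) hδ0
  set r : ℝ → X := fun x => g x - φ x with hrdef
  have hgφ : ∀ x, g x = φ x + r x := fun x => by simp [hrdef]
  have hrmem : MemLp r 2 (volume.restrict (Ioo a b)) := hg.sub φmem
  have hrmem' : MemLp r 2 (volume.restrict (Ioc a b)) := hres ▸ hrmem
  -- the L² bound on r
  set Iv : ℝ := ∫ ξ in Ioc a b, ‖r ξ‖ ^ 2 with hIvdef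
  have hIv0 : 0 ≤ Iv := integral_nonneg (fun _ => sq_nonneg _)
  have hrL2 : Iv ≤ ε / 4 := by
    have hφg' : eLpNorm r 2 (volume.restrict (Ioo a b)) ≤ ENNReal.ofReal (Real.sqrt (ε/4)) := hφg
    have heq : eLpNorm r 2 (volume.restrict (Ioo a b)) = ENNReal.ofReal (Iv ^ (2⁻¹:ℝ)) := by
      rw [hrmem.eLpNorm_eq_integral_rpow_norm two_ne_zero ENNReal.ofNat_ne_top]
      rw [ENNReal.toReal_ofNat]
      congr 2
      rw [hres, hIvdef]
      congr 1
      funext x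
      rw [← Real.rpow_natCast]
      norm_num
    rw [heq] at hφg'
    have h2 : Iv ^ (2⁻¹:ℝ) ≤ Real.sqrt (ε/4) :=
      (ENNReal.ofReal_le_ofReal_iff (Real.sqrt_nonneg _)).1 hφg'
    have h2' : Real.sqrt Iv ≤ Real.sqrt (ε/4) := by
      rwa [Real.sqrt_eq_rpow, one_div]
    calc Iv = Real.sqrt Iv ^ 2 := (Real.sq_sqrt hIv0).symm
      _ ≤ Real.sqrt (ε/4) ^ 2 := pow_le_pow_left₀ (Real.sqrt_nonneg _) h2' 2
      _ = ε/4 := Real.sq_sqrt (by positivity)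
  -- uniform continuity of φ
  set ε' : ℝ := Real.sqrt (ε / (16 * (b - a))) with hε'def
  have hε'pos : 0 < ε' := Real.sqrt_pos.2 (by positivity)
  have hε'sq : ε' ^ 2 = ε / (16 * (b - a)) := Real.sq_sqrt (by positivity)
  obtain ⟨δ, δpos, hδ⟩ := Metric.uniformContinuous_iff.1
    (φsupp.uniformContinuous_of_continuous φcont) ε' hε'pos
  -- global integrability facts
  have hgmem : MemLp g 2 (volume.restrict (Ioc a b)) := hres ▸ hg
  have hg1 : IntegrableOn g (Ioc a b) := hgmem.integrable one_le_two
  have hr1g : IntegrableOn r (Ioc a b) := hrmem'.integrable one_le_two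
  have hr2g : IntegrableOn (fun ξ => ‖r ξ‖ ^ 2) (Ioc a b) := memLp_int_norm_sq hrmem'
  -- the eventual bound
  filter_upwards [Filter.eventually_ge_atTop (⌈(b - a)/δ⌉₊ + 1)] with N hN
  have hN1 : 1 ≤ N := le_trans (Nat.le_add_left 1 _) hN
  have hNpos : (0:ℝ) < N := by exact_mod_cast hN1
  have hNne : (N:ℝ) ≠ 0 := ne_of_gt hNpos
  set h' : ℝ := (b - a) / N with hh'def
  have hh'pos : 0 < h' := div_pos hba hNpos
  have hh'δ : h' < δ := by
    rw [hh'def, div_lt_iff₀ hNpos]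
    have h1 : (b - a)/δ < N := by
      have := Nat.le_ceil ((b - a)/δ)
      have h2 : (⌈(b - a)/δ⌉₊ : ℝ) + 1 ≤ N := by exact_mod_cast hN
      linarith
    calc b - a = ((b - a)/δ) * δ := by field_simp
      _ < N * δ := by exact mul_lt_mul_of_pos_right h1 δpos
      _ = δ * N := mul_comm _ _
  have hNh' : (N:ℝ) * h' = b - a := by rw [hh'def]; field_simp
  -- endpoints
  have hxi_le : ∀ k : ℕ, k ≤ N → a ≤ a + k * h' ∧ a + k * h' ≤ b := by
    intro k hk
    constructor
    · nlinarith [Nat.cast_nonneg (α := ℝ) k, hh'pos.le]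
    · have : (k:ℝ) ≤ N := by exact_mod_cast hk
      nlinarith
  -- reindex the sum
  set T : ℕ → ℝ := fun k =>
        ∫ ξ in (a + ((k:ℝ) - 1) * ((b - a) / N))..(a + (k:ℝ) * ((b - a) / N)),
          ‖((N:ℝ) / (b - a)) • (u (a + (k:ℝ) * ((b - a) / N))
              - u (a + ((k:ℝ) - 1) * ((b - a) / N))) - g ξ‖ ^ 2 with hT
  rw [← Finset.Ico_add_one_right_eq_Icc, Finset.sum_Ico_eq_sum_range, Nat.add_sub_cancel]
  -- per-term bound
  have hbound : ∀ i ∈ Finset.range N,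
      T (1 + i)
      ≤ 2 * (ε' ^ 2 * h') + 2 * ∫ ξ in Ioc (a + i * h') (a + (i + 1 : ℕ) * h'), ‖r ξ‖ ^ 2 := by
    intro i hi
    have hiN : i < N := Finset.mem_range.1 hi
    have e1 : (((1 + i : ℕ):ℝ) - 1) = (i:ℝ) := by push_cast; ring
    have e2 : ((1 + i : ℕ):ℝ) = ((i + 1 : ℕ):ℝ) := by push_cast; ring
    rw [hT]
    simp only []
    rw [e1, e2]
    set c := a + (i:ℝ) * h' with hcdef
    set d := a + ((i + 1 : ℕ):ℝ) * h' with hddef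
    have hcd : c ≤ d := by
      rw [hcdef, hddef]
      push_cast
      nlinarith
    have hc_mem : a ≤ c ∧ c ≤ b := hxi_le i hiN.le
    have hd_mem : a ≤ d ∧ d ≤ b := hxi_le (i+1) hiN
    have hdc : d - c = h' := by rw [hcdef, hddef]; push_cast; ring
    -- interval integrability of g from a
    have hgint : ∀ x, a ≤ x → x ≤ b → IntervalIntegrable g volume a x := by
      intro x hax hxb
      rw [intervalIntegrable_iff_integrableOn_Ioc_of_le hax]
      exact hg1.mono_set (Ioc_subset_Ioc le_rfl hxb)
    -- the difference of u is the integral of g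
    have huu : u d - u c = ∫ s in c..d, g s := by
      rw [hu d ⟨hd_mem.1, hd_mem.2⟩, hu c ⟨hc_mem.1, hc_mem.2⟩]
      have := intervalIntegral.integral_interval_sub_left
        (hgint d hd_mem.1 hd_mem.2) (hgint c hc_mem.1 hc_mem.2)
      rw [← this]
      abel
    have hgsplit : (∫ s in c..d, g s) = ∫ s in c..d, (φ s + r s) := by
      apply intervalIntegral.integral_congr
      intro x _
      exact hgφ x
    -- rewrite the integral
    have hrw : (∫ ξ in c..d, ‖((N:ℝ) / (b - a)) • (u d - u c) - g ξ‖ ^ 2)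
        = ∫ ξ in Ioc c d, ‖((N:ℝ) / (b - a)) • (∫ s in c..d, (φ s + r s)) - (φ ξ + r ξ)‖ ^ 2 := by
      rw [intervalIntegral.integral_of_le hcd]
      congr 1
      funext ξ
      rw [huu, hgsplit, hgφ ξ]
    rw [hrw]
    have hm : (0:ℝ) < (N:ℝ) / (b - a) := div_pos hNpos hba
    have hmd : ((N:ℝ) / (b - a)) * (d - c) = 1 := by
      rw [hdc, hh'def]; field_simp
    have hr1' : IntegrableOn r (Ioc c d) :=
      hr1g.mono_set (Ioc_subset_Ioc hc_mem.1 hd_mem.2)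
    have hr2' : MemLp r 2 (volume.restrict (Ioc c d)) := by
      apply hrmem'.mono_measure
      exact Measure.restrict_mono (Ioc_subset_Ioc hc_mem.1 hd_mem.2) le_rfl
    have hφb : ∀ x ∈ Icc c d, ∀ y ∈ Icc c d, ‖φ x - φ y‖ ≤ ε' := by
      intro x hx y hy
      have hdist : dist x y < δ := by
        rw [Real.dist_eq, abs_sub_lt_iff]
        constructor <;> [skip; skip] <;>
          · have h1 := hx.1; have h2 := hx.2; have h3 := hy.1; have h4 := hy.2
            have := hdc
            linarith [hh'δ]
      have := hδ hdist
      rw [dist_eq_norm] at this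
      exact this.le
    have := interval_bound hcd φcont hr1' hr2' hm hmd hε'pos.le hφb
    rw [hdc] at this
    exact this
  -- sum of the r-integrals telescopes to Iv
  have hadj : ∀ k < N, IntervalIntegrable (fun ξ => ‖r ξ‖ ^ 2) volume
      (a + k * h') (a + (k + 1 : ℕ) * h') := by
    intro k hk
    have hcd : a + (k:ℝ) * h' ≤ a + ((k + 1 : ℕ):ℝ) * h' := by push_cast; nlinarith
    rw [intervalIntegrable_iff_integrableOn_Ioc_of_le hcd]
    exact hr2g.mono_set (Ioc_subset_Ioc (hxi_le k hk.le).1 (hxi_le (k+1) hk).2)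
  have hsum_r : (∑ i ∈ Finset.range N, ∫ ξ in Ioc (a + i * h') (a + (i + 1 : ℕ) * h'),
      ‖r ξ‖ ^ 2) = Iv := by
    have key := intervalIntegral.sum_integral_adjacent_intervals
      (a := fun k : ℕ => a + k * h') (n := N) (f := fun ξ => ‖r ξ‖ ^ 2) (μ := volume) hadj
    have e0 : a + ((0:ℕ):ℝ) * h' = a := by push_cast; ring
    have eN : a + ((N:ℕ):ℝ) * h' = b := by linarith [hNh']
    rw [e0, eN] at key
    calc (∑ i ∈ Finset.range N, ∫ ξ in Ioc (a + i * h') (a + (i + 1 : ℕ) * h'), ‖r ξ‖ ^ 2)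
        = ∑ i ∈ Finset.range N, ∫ ξ in (a + i * h')..(a + (i + 1 : ℕ) * h'), ‖r ξ‖ ^ 2 := by
          apply Finset.sum_congr rfl
          intro i hi
          rw [intervalIntegral.integral_of_le]
          push_cast; nlinarith
      _ = ∫ ξ in a..b, ‖r ξ‖ ^ 2 := key
      _ = Iv := by rw [intervalIntegral.integral_of_le hab.le, hIvdef]
  -- nonnegativity of the sum
  have hS0 : (0:ℝ) ≤ ∑ i ∈ Finset.range N, T (1 + i) := by
    apply Finset.sum_nonneg
    intro i _
    rw [hT]
    apply intervalIntegral.integral_nonneg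
    · push_cast; nlinarith
    · intro x _; exact sq_nonneg _
  rw [Real.norm_eq_abs, abs_of_nonneg hS0]
  calc (∑ i ∈ Finset.range N, T (1 + i))
      ≤ ∑ i ∈ Finset.range N, (2 * (ε' ^ 2 * h')
          + 2 * ∫ ξ in Ioc (a + i * h') (a + (i + 1 : ℕ) * h'), ‖r ξ‖ ^ 2) :=
        Finset.sum_le_sum hbound
    _ = N * (2 * (ε' ^ 2 * h')) + 2 * Iv := by
        rw [Finset.sum_add_distrib, Finset.sum_const, ← Finset.mul_sum, hsum_r,
          Finset.card_range, nsmul_eq_mul]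
    _ = ε / 8 + 2 * Iv := by
        rw [hε'sq]
        have : (N:ℝ) * (2 * (ε / (16 * (b - a)) * h')) = ε/8 := by
          rw [show (N:ℝ) * (2 * (ε / (16 * (b - a)) * h')) = 2 * (ε / (16 * (b-a))) * ((N:ℝ) * h') by ring, hNh']
          field_simp
          ring
        rw [this]
    _ ≤ ε / 8 + 2 * (ε / 4) := by linarith
    _ < ε := by linarith
end

section
/- (Unconditional stability of the implicit ϑ-scheme.) Let E be a finite-dimensional real inner product space, T : E → E a linear map, ω₀ > 0 with ⟨T u, u⟩ ≤ ω₀ ‖u‖² for all u ∈ E, ϑ ∈ [1/2, 1], T_f > 0 a final time, N ∈ ℕ with N ≥ 1, and τ := T_f/N with τ < 1/(2 ϑ ω₀). Then for every u⁰ ∈ E and every f : {0, 1, …, N} → E there exists a unique sequence u⁰ = u_0, u_1, …, u_N in E satisfying the ϑ-scheme recursion (u_k − u_{k−1})/τ = ϑ T u_k + (1 − ϑ) T u_{k−1} + ϑ f_k + (1 − ϑ) f_{k−1} for k = 1, …, N, and there exists a constant C > 0 depending only on T_f, ϑ and ω₀ (in particular independent of E, N and the data) such that max_{0 ≤ k ≤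 N} ‖u_k‖ ≤ C (‖u⁰‖ + (τ Σ_{k=0}^{N} ‖f_k‖²)^{1/2}). -/
set_option maxHeartbeats 1000000 in
lemma theta_step_bound {E : Type} [NormedAddCommGroup E] [InnerProductSpace ℝ E]
    (T : E →ₗ[ℝ] E) (ω₀ ϑ τ : ℝ) (hω : 0 < ω₀) (hϑ1 : 1/2 ≤ ϑ) (hϑ2 : ϑ ≤ 1)
    (hτ : 0 < τ) (hsmall : τ * ϑ * ω₀ < 1/2)
    (hT : ∀ u : E, (inner ℝ (T u) u : ℝ) ≤ ω₀ * ‖u‖ ^ 2)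
    (u v g : E) (h : u - v = τ • T (ϑ • u + (1 - ϑ) • v) + τ • g) :
    ‖u‖ ≤ Real.exp (4 * (τ * ω₀)) * ‖v‖ + 4 * τ * ‖g‖ := by
  set w : E := ϑ • u + (1 - ϑ) • v with hw
  have hs0 : (0:ℝ) ≤ ϑ - 1/2 := by linarith
  have hτω : 0 < τ * ω₀ := by positivity
  have hϑω : τ * ω₀ * ϑ < 1/2 := by linarith [hsmall]
  have hsmall' : τ * ω₀ * (ϑ - 1/2) ≤ 1/2 := by linarith [hϑω, hτω.le]
  have hτω1 : τ * ω₀ ≤ 1 := by linarith [mul_nonneg hτω.le hs0, hϑω]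
  have h1 : (inner ℝ (u - v) w : ℝ) = τ * inner ℝ (T w) w + τ * inner ℝ g w := by
    rw [h]; simp [inner_add_left, real_inner_smul_left]
  have h2 : (inner ℝ (u - v) w : ℝ) = (1/2) * (‖u‖^2 - ‖v‖^2) + (ϑ - 1/2) * ‖u - v‖^2 := by
    have e1 : (inner ℝ (u - v) w : ℝ)
        = ϑ * ‖u‖^2 + (1-ϑ) * (inner ℝ u v : ℝ) - ϑ * (inner ℝ u v : ℝ) - (1-ϑ) * ‖v‖^2 := by
      simp only [hw, inner_sub_left, inner_add_right, real_inner_smul_right,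
        real_inner_self_eq_norm_sq, real_inner_comm v u]
      ring
    have e2 : ‖u - v‖^2 = ‖u‖^2 - 2 * (inner ℝ u v : ℝ) + ‖v‖^2 := norm_sub_sq_real u v
    rw [e1, e2]; ring
  have hW1 : ‖w‖ ≤ (‖u‖ + ‖v‖)/2 + (ϑ - 1/2) * ‖u - v‖ := by
    have e3 : w = (2⁻¹ : ℝ) • (u + v) + (ϑ - 1/2) • (u - v) := by rw [hw]; module
    calc ‖w‖ ≤ ‖(2⁻¹ : ℝ) • (u + v)‖ + ‖(ϑ - 1/2) • (u - v)‖ := by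
          rw [e3]; exact norm_add_le _ _
    _ ≤ (‖u‖ + ‖v‖)/2 + (ϑ - 1/2) * ‖u - v‖ := by
        rw [norm_smul, norm_smul, Real.norm_eq_abs, Real.norm_eq_abs,
          abs_of_nonneg hs0, abs_of_nonneg (by norm_num : (0:ℝ) ≤ 2⁻¹)]
        have := norm_add_le u v
        linarith
  have hW0 : ‖w‖ ≤ ‖u‖ + ‖v‖ := by
    calc ‖w‖ ≤ ‖ϑ • u‖ + ‖(1-ϑ) • v‖ := norm_add_le _ _
    _ ≤ ‖u‖ + ‖v‖ := by
        rw [norm_smul, norm_smul, Real.norm_eq_abs, Real.norm_eq_abs,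
          abs_of_nonneg (by linarith : (0:ℝ) ≤ ϑ), abs_of_nonneg (by linarith : (0:ℝ) ≤ 1 - ϑ)]
        linarith [mul_nonneg (show (0:ℝ) ≤ 1-ϑ by linarith) (norm_nonneg u),
          mul_nonneg (show (0:ℝ) ≤ ϑ - 1/2 by linarith) (norm_nonneg v),
          norm_nonneg v]
  set b := ‖u‖ with hbdef; set c := ‖v‖ with hcdef
  set d := ‖u - v‖ with hddef; set W := ‖w‖ with hWdef; set G := ‖g‖ with hGdef
  have hb : 0 ≤ b := norm_nonneg _
  have hc : 0 ≤ c := norm_nonneg _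
  have hd : 0 ≤ d := norm_nonneg _
  have hWn : 0 ≤ W := norm_nonneg _
  have hG : 0 ≤ G := norm_nonneg _
  have key : (1/2) * (b^2 - c^2) + (ϑ - 1/2) * d^2 ≤ τ * (ω₀ * W^2) + τ * (G * W) := by
    have hTw' : τ * (inner ℝ (T w) w : ℝ) ≤ τ * (ω₀ * W^2) :=
      mul_le_mul_of_nonneg_left (hT w) hτ.le
    have hgw' : τ * (inner ℝ g w : ℝ) ≤ τ * (G * W) :=
      mul_le_mul_of_nonneg_left (real_inner_le_norm g w) hτ.le
    linarith [h1, h2]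
  have hW2 : τ * (ω₀ * W^2) ≤ τ * ω₀ * ((b+c)/2 + (ϑ-1/2)*d)^2 := by
    have h5 : W^2 ≤ ((b+c)/2 + (ϑ-1/2)*d)^2 := pow_le_pow_left₀ hWn hW1 2
    have := mul_le_mul_of_nonneg_left h5 hτω.le
    linarith [this]
  have hcross : τ * ω₀ * ((ϑ-1/2) * d * (b + c)) ≤
      (ϑ-1/2) * d^2 / 2 + (ϑ-1/2) * (τ*ω₀)^2 * (b+c)^2 / 2 := by
    linarith [mul_nonneg hs0 (sq_nonneg (d - τ*ω₀*(b+c)))]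
  have hsd : τ * ω₀ * ((ϑ-1/2)^2 * d^2) ≤ (1/2) * ((ϑ-1/2) * d^2) := by
    have h6 := mul_le_mul_of_nonneg_right hsmall' (mul_nonneg hs0 (sq_nonneg d))
    linarith [h6]
  have key2 : b^2 - c^2 ≤ (τ*ω₀/2 + (ϑ-1/2)*(τ*ω₀)^2) * (b+c)^2 + 2*τ*G*(b+c) := by
    have hGW : τ * (G * W) ≤ τ * (G * (b + c)) :=
      mul_le_mul_of_nonneg_left (mul_le_mul_of_nonneg_left hW0 hG) hτ.le
    linarith [key, hW2, hcross, hsd, hGW]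
  obtain ⟨p, hp⟩ : ∃ p : ℝ, p = τ*ω₀/2 + (ϑ-1/2)*(τ*ω₀)^2 := ⟨_, rfl⟩
  have key2p : b^2 - c^2 ≤ p * (b+c)^2 + 2*τ*G*(b+c) := by rw [hp]; exact key2
  have hp0 : 0 ≤ p := by rw [hp]; positivity
  have hp2 : p < 1/2 := by
    rw [hp]
    have hy2 : (0:ℝ) ≤ τ*ω₀ - (τ*ω₀)^2 := by
      linarith [mul_nonneg hτω.le (show (0:ℝ) ≤ 1 - τ*ω₀ by linarith)]
    linarith [mul_nonneg hs0 hy2, hϑω]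
  have hple : p ≤ τ * ω₀ := by
    rw [hp]
    have h8 := mul_le_mul_of_nonneg_right hsmall' hτω.le
    linarith [h8]
  have key3 : b - c ≤ p * (b+c) + 2*τ*G := by
    rcases eq_or_lt_of_le (by positivity : (0:ℝ) ≤ b + c) with h0 | h0
    · have hb0 : b = 0 := by linarith
      have hc0 : c = 0 := by linarith
      rw [hb0, hc0]; have : (0:ℝ) ≤ 2*τ*G := by positivity
      linarith
    · have h4 : (b - c) * (b + c) ≤ (p * (b+c) + 2*τ*G) * (b + c) := by
        linarith [key2p]
      exact le_of_mul_le_mul_right h4 h0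
  have keyexp : (1 + p) ≤ (1 - p) * Real.exp (4*p) := by
    have h7 := mul_le_mul_of_nonneg_left (Real.add_one_le_exp (4*p))
      (show (0:ℝ) ≤ 1 - p by linarith)
    linarith [h7, mul_nonneg hp0 (show (0:ℝ) ≤ 1 - 2*p by linarith)]
  have final1 : b ≤ Real.exp (4*p) * c + 4*τ*G := by
    have hB : (1 - p) * b ≤ (1 + p) * c + 2*τ*G := by linarith [key3]
    have h1p : (0:ℝ) < 1 - p := by linarith
    have hX : (1-p)*b ≤ (1-p)*(Real.exp (4*p)*c + 4*τ*G) := by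
      linarith [hB, mul_le_mul_of_nonneg_right keyexp hc,
        mul_nonneg (mul_nonneg (show (0:ℝ) ≤ 2-4*p by linarith) hτ.le) hG]
    exact le_of_mul_le_mul_left (by linarith [hX]) h1p
  have hmono : Real.exp (4*p) ≤ Real.exp (4*(τ*ω₀)) := Real.exp_le_exp.mpr (by linarith)
  linarith [final1, mul_le_mul_of_nonneg_right hmono hc]


set_option maxHeartbeats 1000000 in
/-- Unconditional stability of the implicit ϑ-scheme: for
`ϑ ∈ [1/2, 1]`, `⟨Tu, u⟩ ≤ ω₀‖u‖²` and time step `τ = T_f/N < 1/(2ϑω₀)`, the ϑ-scheme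
recursion has a unique solution `u_0, …, u_N`, and there is a constant `C > 0`
depending only on `T_f`, `ϑ` and `ω₀` (independent of `E`, `N` and the data) with
`max_k ‖u_k‖ ≤ C (‖u⁰‖ + (τ ∑_k ‖f_k‖²)^{1/2})`. -/
theorem theta_scheme_unconditional_stability
    (Tf ω₀ ϑ : ℝ) (hTf : 0 < Tf) (hω₀ : 0 < ω₀) (hϑ : ϑ ∈ Set.Icc (1 / 2 : ℝ) 1) :
    ∃ C : ℝ, 0 < C ∧
      ∀ (E : Type) [NormedAddCommGroup E] [InnerProductSpace ℝ E] [FiniteDimensional ℝ E]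
        (T : E →ₗ[ℝ] E), (∀ u : E, (inner ℝ (T u) u : ℝ) ≤ ω₀ * ‖u‖ ^ 2) →
      ∀ N : ℕ, 1 ≤ N → Tf / N < 1 / (2 * ϑ * ω₀) →
      ∀ (u0 : E) (f : ℕ → E),
        ∃ u : ℕ → E,
          (u 0 = u0 ∧ ∀ k, 1 ≤ k → k ≤ N →
            (Tf / N)⁻¹ • (u k - u (k - 1)) =
              ϑ • T (u k) + (1 - ϑ) • T (u (k - 1)) + ϑ • f k + (1 - ϑ) • f (k - 1)) ∧
          (∀ v : ℕ → E,
            (v 0 = u0 ∧ ∀ k, 1 ≤ k → k ≤ N →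
              (Tf / N)⁻¹ • (v k - v (k - 1)) =
                ϑ • T (v k) + (1 - ϑ) • T (v (k - 1)) + ϑ • f k + (1 - ϑ) • f (k - 1)) →
            ∀ k ≤ N, v k = u k) ∧
          ∀ k ≤ N, ‖u k‖ ≤
            C * (‖u0‖ + Real.sqrt ((Tf / N) * ∑ j ∈ Finset.range (N + 1), ‖f j‖ ^ 2)) := by
  
  obtain ⟨hϑ1, hϑ2⟩ := hϑ
  have hϑ0 : (0:ℝ) < ϑ := by linarith
  refine ⟨Real.exp (4*(ω₀*Tf)) * (1 + 8*Real.sqrt (2*Tf)), by positivity, ?_⟩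
  intro E _ _ _ T hT N hN hτN u0 f
  have hN1 : (1:ℝ) ≤ (N:ℝ) := by exact_mod_cast hN
  have hN0 : (0:ℝ) < (N:ℝ) := by linarith
  have hτ : 0 < Tf / N := div_pos hTf hN0
  have h2ϑω : (0:ℝ) < 2*ϑ*ω₀ := by positivity
  have hsmall : Tf/N * ϑ * ω₀ < 1/2 := by
    have h0 := (lt_div_iff₀ h2ϑω).mp hτN
    linarith
  -- the resolvent operator
  set A : E →ₗ[ℝ] E := LinearMap.id - (Tf/N*ϑ) • T with hAdef
  have hAapp : ∀ x : E, A x = x - (Tf/N*ϑ) • T x := by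
    intro x; rw [hAdef]; simp
  have hker : ∀ x : E, A x = 0 → x = 0 := by
    intro x hx
    rw [hAapp] at hx
    have hx' : x = (Tf/N*ϑ) • T x := by
      have := sub_eq_zero.mp hx; exact this
    have h9 : ‖x‖^2 = (Tf/N*ϑ) * (inner ℝ (T x) x : ℝ) := by
      calc ‖x‖^2 = (inner ℝ x x : ℝ) := (real_inner_self_eq_norm_sq x).symm
      _ = (inner ℝ ((Tf/N*ϑ) • T x) x : ℝ) := by rw [← hx']
      _ = (Tf/N*ϑ) * (inner ℝ (T x) x : ℝ) := real_inner_smul_left _ _ _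
    have h10 : (Tf/N*ϑ) * (inner ℝ (T x) x : ℝ) ≤ (Tf/N*ϑ) * (ω₀*‖x‖^2) :=
      mul_le_mul_of_nonneg_left (hT x) (by positivity)
    have h11 : (Tf/N*ϑ*ω₀) * ‖x‖^2 ≤ (1/2) * ‖x‖^2 :=
      mul_le_mul_of_nonneg_right hsmall.le (sq_nonneg _)
    have h12 : ‖x‖ = 0 := by
      nlinarith [norm_nonneg x, sq_nonneg ‖x‖]
    exact norm_eq_zero.mp h12
  have hinj : Function.Injective A := by
    intro x y hxy
    have := hker (x - y) (by rw [map_sub, hxy, sub_self])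
    exact sub_eq_zero.mp this
  have hsurj : Function.Surjective A := LinearMap.injective_iff_surjective.mp hinj
  choose S hS using hsurj
  -- the recursion target
  set F : E → ℕ → E := fun v k =>
    v + (Tf/N*(1-ϑ)) • T v + (Tf/N*ϑ) • f (k+1) + (Tf/N*(1-ϑ)) • f k with hFdef
  set u : ℕ → E := fun k => Nat.rec u0 (fun k uk => S (F uk k)) k with hudef
  have hu0 : u 0 = u0 := rfl
  have hA : ∀ k : ℕ, A (u (k+1)) = F (u k) k := fun k => hS _
  -- equivalence between resolvent form and scheme form
  have hid : ∀ (x y : E) (m : ℕ),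
      (x - (Tf/N*ϑ) • T x) - (y + (Tf/N*(1-ϑ)) • T y + (Tf/N*ϑ) • f (m+1) + (Tf/N*(1-ϑ)) • f m)
      = (x - y) - (Tf/N) • (ϑ • T x + (1-ϑ) • T y + ϑ • f (m+1) + (1-ϑ) • f m) := by
    intro x y m; module
  have hiff : ∀ (x y : E) (m : ℕ), A x = F y m ↔
      (Tf/N)⁻¹ • (x - y) = ϑ • T x + (1-ϑ) • T y + ϑ • f (m+1) + (1-ϑ) • f m := by
    intro x y m
    rw [inv_smul_eq_iff₀ (ne_of_gt hτ), hAapp, hFdef]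
    constructor
    · intro hh
      have h0 : (x - (Tf/N*ϑ) • T x) -
          (y + (Tf/N*(1-ϑ)) • T y + (Tf/N*ϑ) • f (m+1) + (Tf/N*(1-ϑ)) • f m) = 0 := by
        rw [hh, sub_self]
      rw [hid x y m] at h0
      exact sub_eq_zero.mp h0
    · intro hh
      have h0 : (x - y) - (Tf/N) • (ϑ • T x + (1-ϑ) • T y + ϑ • f (m+1) + (1-ϑ) • f m) = 0 := by
        rw [hh, sub_self]
      rw [← hid x y m] at h0
      exact sub_eq_zero.mp h0
  have hscheme : ∀ k, 1 ≤ k → k ≤ N →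
      (Tf / N)⁻¹ • (u k - u (k - 1)) =
        ϑ • T (u k) + (1 - ϑ) • T (u (k - 1)) + ϑ • f k + (1 - ϑ) • f (k - 1) := by
    intro k hk1 _
    obtain ⟨m, rfl⟩ : ∃ m, k = m + 1 := ⟨k - 1, by omega⟩
    simp only [Nat.add_sub_cancel]
    exact (hiff _ _ m).mp (hA m)
  refine ⟨u, ⟨hu0, hscheme⟩, ?_, ?_⟩
  · -- uniqueness
    rintro v ⟨hv0, hvs⟩ k
    induction k with
    | zero => intro _; rw [hv0, hu0]
    | succ k ih =>
      intro hk
      have hvk := ih (by omega)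
      have h13 := hvs (k+1) (by omega) hk
      simp only [Nat.add_sub_cancel] at h13
      have h14 : A (v (k+1)) = F (v k) k := (hiff _ _ k).mpr h13
      rw [hvk] at h14
      exact hinj (h14.trans (hA k).symm)
  · -- stability bound
    have hstep : ∀ k : ℕ, ‖u (k+1)‖ ≤
        Real.exp (4*(Tf/N*ω₀)) * ‖u k‖ + 4*(Tf/N)*‖ϑ • f (k+1) + (1-ϑ) • f k‖ := by
      intro k
      apply theta_step_bound T ω₀ ϑ (Tf/N) hω₀ hϑ1 hϑ2 hτ hsmall hT
      have h15 := hA k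
      rw [hAapp, hFdef] at h15
      have hTw : T (ϑ • u (k+1) + (1-ϑ) • u k) = ϑ • T (u (k+1)) + (1-ϑ) • T (u k) := by
        simp [map_add, map_smul]
      rw [hTw]
      have h0 : (u (k+1) - (Tf/N*ϑ) • T (u (k+1))) -
          (u k + (Tf/N*(1-ϑ)) • T (u k) + (Tf/N*ϑ) • f (k+1) + (Tf/N*(1-ϑ)) • f k) = 0 := by
        rw [h15, sub_self]
      have h0' : (u (k+1) - u k) - ((Tf/N) • (ϑ • T (u (k+1)) + (1-ϑ) • T (u k))
          + (Tf/N) • (ϑ • f (k+1) + (1-ϑ) • f k)) = 0 := by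
        rw [← h0]; module
      exact sub_eq_zero.mp h0'
    have hgle : ∀ k : ℕ, ‖ϑ • f (k+1) + (1-ϑ) • f k‖ ≤ ‖f (k+1)‖ + ‖f k‖ := by
      intro k
      calc ‖ϑ • f (k+1) + (1-ϑ) • f k‖ ≤ ‖ϑ • f (k+1)‖ + ‖(1-ϑ) • f k‖ := norm_add_le _ _
      _ ≤ ‖f (k+1)‖ + ‖f k‖ := by
          rw [norm_smul, norm_smul, Real.norm_eq_abs, Real.norm_eq_abs,
            abs_of_nonneg hϑ0.le, abs_of_nonneg (by linarith : (0:ℝ) ≤ 1 - ϑ)]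
          linarith [mul_nonneg (show (0:ℝ) ≤ 1-ϑ by linarith) (norm_nonneg (f (k+1))),
            mul_nonneg hϑ0.le (norm_nonneg (f k)), norm_nonneg (f k)]
    have hsumg_nonneg : ∀ k : ℕ, (0:ℝ) ≤ ∑ j ∈ Finset.range k, (‖f (j+1)‖ + ‖f j‖) :=
      fun k => Finset.sum_nonneg fun j _ => by positivity
    have hgron : ∀ k : ℕ, ‖u k‖ ≤ Real.exp (4*(Tf/N*ω₀)*k) *
        (‖u0‖ + 4*(Tf/N) * ∑ j ∈ Finset.range k, (‖f (j+1)‖ + ‖f j‖)) := by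
      intro k
      induction k with
      | zero => simp [hu0]
      | succ k ih =>
        have h1 := hstep k
        have h2 := hgle k
        have e4 : Real.exp (4*(Tf/N*ω₀)*((k:ℕ)+1 : ℕ)) =
            Real.exp (4*(Tf/N*ω₀)) * Real.exp (4*(Tf/N*ω₀)*k) := by
          rw [← Real.exp_add]; push_cast; ring_nf
        rw [Finset.sum_range_succ, e4]
        have hE1 : (1:ℝ) ≤ Real.exp (4*(Tf/N*ω₀)) := Real.one_le_exp (by positivity)
        have hEk : (1:ℝ) ≤ Real.exp (4*(Tf/N*ω₀)*k) := Real.one_le_exp (by positivity)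
        have hX : (0:ℝ) ≤ ‖u0‖ + 4*(Tf/N) * ∑ j ∈ Finset.range k, (‖f (j+1)‖ + ‖f j‖) := by
          have := hsumg_nonneg k; positivity
        have h3 : Real.exp (4*(Tf/N*ω₀)) * ‖u k‖ ≤ Real.exp (4*(Tf/N*ω₀)) *
            (Real.exp (4*(Tf/N*ω₀)*k) * (‖u0‖ + 4*(Tf/N) *
              ∑ j ∈ Finset.range k, (‖f (j+1)‖ + ‖f j‖))) :=
          mul_le_mul_of_nonneg_left ih (Real.exp_pos _).le
        have h4 : 4*(Tf/N)*‖ϑ • f (k+1) + (1-ϑ) • f k‖ ≤ 4*(Tf/N)*(‖f (k+1)‖ + ‖f k‖) :=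
          mul_le_mul_of_nonneg_left h2 (by positivity)
        have h5 : (0:ℝ) ≤ 4*(Tf/N)*(‖f (k+1)‖ + ‖f k‖) := by positivity
        nlinarith [h1, h3, h4, h5, hE1, hEk, hX,
          mul_le_mul_of_nonneg_right (one_le_mul_of_one_le_of_one_le hE1 hEk) h5]
    intro k hk
    have h16 := hgron k
    have hkN : (k:ℝ) ≤ (N:ℝ) := by exact_mod_cast hk
    have h17 : 4*(Tf/N*ω₀)*(N:ℝ) = 4*(ω₀*Tf) := by field_simp
    have hexpk : Real.exp (4*(Tf/N*ω₀)*k) ≤ Real.exp (4*(ω₀*Tf)) := by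
      apply Real.exp_le_exp.mpr
      have := mul_le_mul_of_nonneg_left hkN (show (0:ℝ) ≤ 4*(Tf/N*ω₀) by positivity)
      linarith
    have hsum1 : ∑ j ∈ Finset.range k, (‖f (j+1)‖ + ‖f j‖) ≤
        2 * ∑ j ∈ Finset.range (N+1), ‖f j‖ := by
      have ha : ∑ j ∈ Finset.range k, ‖f (j+1)‖ ≤ ∑ j ∈ Finset.range (N+1), ‖f j‖ := by
        calc ∑ j ∈ Finset.range k, ‖f (j+1)‖
            ≤ ∑ j ∈ Finset.range k, ‖f (j+1)‖ + ‖f 0‖ := le_add_of_nonneg_right (norm_nonneg _)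
        _ = ∑ j ∈ Finset.range (k+1), ‖f j‖ := (Finset.sum_range_succ' (fun j => ‖f j‖) k).symm
        _ ≤ ∑ j ∈ Finset.range (N+1), ‖f j‖ :=
            Finset.sum_le_sum_of_subset_of_nonneg (Finset.range_subset_range.mpr (by omega))
              (fun i _ _ => norm_nonneg _)
      have hb : ∑ j ∈ Finset.range k, ‖f j‖ ≤ ∑ j ∈ Finset.range (N+1), ‖f j‖ :=
        Finset.sum_le_sum_of_subset_of_nonneg (Finset.range_subset_range.mpr (by omega))
          (fun i _ _ => norm_nonneg _)
      rw [Finset.sum_add_distrib]; linarith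
    have hS1 : (0:ℝ) ≤ ∑ j ∈ Finset.range (N+1), ‖f j‖ :=
      Finset.sum_nonneg fun j _ => norm_nonneg _
    have hS2 : (0:ℝ) ≤ ∑ j ∈ Finset.range (N+1), ‖f j‖^2 :=
      Finset.sum_nonneg fun j _ => sq_nonneg _
    have hCS : (∑ j ∈ Finset.range (N+1), ‖f j‖)^2 ≤
        ((N:ℝ)+1) * ∑ j ∈ Finset.range (N+1), ‖f j‖^2 := by
      have h18 := Finset.sum_mul_sq_le_sq_mul_sq (Finset.range (N+1)) (fun j => ‖f j‖) (fun _ => 1)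
      simp at h18
      nlinarith [h18]
    have hτN1 : (Tf/N) * ((N:ℝ)+1) ≤ 2*Tf := by
      have e5 : (Tf/N)*((N:ℝ)+1) = Tf + Tf/N := by field_simp
      have hτleTf : Tf/N ≤ Tf := by
        rw [div_le_iff₀ hN0]; nlinarith [hTf.le]
      linarith
    have hsqrt : (Tf/N) * ∑ j ∈ Finset.range (N+1), ‖f j‖ ≤
        Real.sqrt (2*Tf) * Real.sqrt ((Tf/N) * ∑ j ∈ Finset.range (N+1), ‖f j‖^2) := by
      rw [← Real.sqrt_mul (by positivity : (0:ℝ) ≤ 2*Tf)]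
      apply (Real.le_sqrt (by positivity) (by positivity)).mpr
      have h18 : (Tf/N)^2 * (∑ j ∈ Finset.range (N+1), ‖f j‖)^2 ≤
          (Tf/N)^2 * (((N:ℝ)+1) * ∑ j ∈ Finset.range (N+1), ‖f j‖^2) :=
        mul_le_mul_of_nonneg_left hCS (by positivity)
      have h19 : ((Tf/N) * ((N:ℝ)+1)) * ((Tf/N) * ∑ j ∈ Finset.range (N+1), ‖f j‖^2) ≤
          (2*Tf) * ((Tf/N) * ∑ j ∈ Finset.range (N+1), ‖f j‖^2) :=
        mul_le_mul_of_nonneg_right hτN1 (mul_nonneg hτ.le hS2)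
      nlinarith [h18, h19]
    have hY : (0:ℝ) ≤ Real.sqrt ((Tf/N) * ∑ j ∈ Finset.range (N+1), ‖f j‖^2) :=
      Real.sqrt_nonneg _
    have hQ : (0:ℝ) ≤ Real.sqrt (2*Tf) := Real.sqrt_nonneg _
    have hXk : ‖u0‖ + 4*(Tf/N) * ∑ j ∈ Finset.range k, (‖f (j+1)‖ + ‖f j‖) ≤
        ‖u0‖ + 8*((Tf/N) * ∑ j ∈ Finset.range (N+1), ‖f j‖) := by
      have := mul_le_mul_of_nonneg_left hsum1 (show (0:ℝ) ≤ 4*(Tf/N) by positivity)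
      linarith
    have hXk0 : (0:ℝ) ≤ ‖u0‖ + 4*(Tf/N) * ∑ j ∈ Finset.range k, (‖f (j+1)‖ + ‖f j‖) := by
      have := hsumg_nonneg k; positivity
    have step1 : ‖u k‖ ≤ Real.exp (4*(ω₀*Tf)) *
        (‖u0‖ + 8*((Tf/N) * ∑ j ∈ Finset.range (N+1), ‖f j‖)) := by
      calc ‖u k‖ ≤ Real.exp (4*(Tf/N*ω₀)*k) *
          (‖u0‖ + 4*(Tf/N) * ∑ j ∈ Finset.range k, (‖f (j+1)‖ + ‖f j‖)) := h16
      _ ≤ Real.exp (4*(ω₀*Tf)) *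
          (‖u0‖ + 8*((Tf/N) * ∑ j ∈ Finset.range (N+1), ‖f j‖)) := by
          apply mul_le_mul hexpk hXk hXk0 (Real.exp_pos _).le
    have step2 : ‖u k‖ ≤ Real.exp (4*(ω₀*Tf)) * (‖u0‖ +
        8*(Real.sqrt (2*Tf) * Real.sqrt ((Tf/N) * ∑ j ∈ Finset.range (N+1), ‖f j‖^2))) := by
      refine step1.trans (mul_le_mul_of_nonneg_left (by linarith [hsqrt]) (Real.exp_pos _).le)
    have h20 : ‖u0‖ + 8*(Real.sqrt (2*Tf) * Real.sqrt ((Tf/N) * ∑ j ∈ Finset.range (N+1), ‖f j‖^2))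
        ≤ (1 + 8*Real.sqrt (2*Tf)) * (‖u0‖ + Real.sqrt ((Tf/N) * ∑ j ∈ Finset.range (N+1), ‖f j‖^2)) := by
      nlinarith [mul_nonneg hQ (norm_nonneg u0), hY]
    have h21 := mul_le_mul_of_nonneg_left h20 (Real.exp_pos (4*(ω₀*Tf))).le
    nlinarith [step2, h21]
end
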